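/- arXiv:1505.07161 — 4 statements merged into one kernel-verified Lean document; each statement's English description precedes it below -/
import Mathlib

section
/- Any two linearizations of a finite poset are related by the equivalence relation generated by swapping two consecutive independent events: if x, x' : Fin n → E are linearizations of a finite poset E, then x' can be obtained from x by a finite sequence of transpositions of adjacent positions i, i+1, where at each step the two swapped elements are incomparable in E. -/
def IsLinearization {E : Type*} [PartialOrder E] {n : ℕ} (x : Fin n → E) : Prop :=
  Function.Bijective x ∧ ∀ i j : Fin n, i < j → ¬ (x j ≤ x i)

def AdjSwapRel {E : Type*} [PartialOrder E] {n : ℕ} (x y : Fin n → E) : Prop :=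
  IsLinearization x ∧ IsLinearization y ∧
    ∃ (i : ℕ) (h1 : i < n) (h2 : i + 1 < n),
      ¬ (x ⟨i, h1⟩ ≤ x ⟨i+1, h2⟩) ∧ ¬ (x ⟨i+1, h2⟩ ≤ x ⟨i, h1⟩) ∧
      y = x ∘ Equiv.swap ⟨i, h1⟩ ⟨i+1, h2⟩

/-! Compare a linearization `y` with `x'` through the permutation `σ = x'⁻¹ ∘ y` of positions.
If `σ` is not the identity it has an adjacent descent `σ (i + 1) < σ i`; then `y i` and `y (i + 1)`
are incomparable (one order is excluded by `y`, the other by `x'`), so swapping them is an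
elementary move, and it lowers the number of inversions of `σ`. Induction on that number ends
at `σ = id`, i.e. at `y = x'`. -/

open Finset Function

section Inversions

variable {α : Type*} [LinearOrder α] {n : ℕ}

def inversions (g : Fin n → α) : Finset (Fin n × Fin n) :=
  {p | p.1 < p.2 ∧ g p.2 < g p.1}

theorem Fin.swap_lt_swap_of_ne {i : ℕ} (h1 : i < n) (h2 : i + 1 < n) {a b : Fin n} (hab : a < b)
    (hne : (a, b) ≠ (⟨i, h1⟩, ⟨i + 1, h2⟩)) :
    Equiv.swap (⟨i, h1⟩ : Fin n) ⟨i + 1, h2⟩ a < Equiv.swap (⟨i, h1⟩ : Fin n) ⟨i + 1, h2⟩ b := by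
  simp only [Equiv.swap_apply_def]
  split_ifs <;> simp only [Fin.ext_iff, Fin.lt_def, Prod.ext_iff, ne_eq] at * <;> omega

theorem card_inversions_comp_swap_lt {g : Fin n → α} {i : ℕ} (h1 : i < n) (h2 : i + 1 < n)
    (hdesc : g ⟨i + 1, h2⟩ < g ⟨i, h1⟩) :
    #(inversions (g ∘ Equiv.swap ⟨i, h1⟩ ⟨i + 1, h2⟩)) < #(inversions g) := by
  set τ := Equiv.swap (⟨i, h1⟩ : Fin n) ⟨i + 1, h2⟩
  set P : Fin n × Fin n := (⟨i, h1⟩, ⟨i + 1, h2⟩)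
  have hP : P ∈ inversions g := by simp [inversions, P, Fin.lt_def, -Fin.val_fin_lt, hdesc]
  have hmaps : Set.MapsTo (Prod.map τ τ) (inversions (g ∘ τ)) ((inversions g).erase P) := by
    rintro ⟨a, b⟩ hp
    simp only [inversions, coe_filter, mem_univ, true_and, Set.mem_ofPred_eq, comp_apply] at hp
    have hne : (a, b) ≠ P := by
      rintro hab
      obtain ⟨rfl, rfl⟩ := Prod.ext_iff.mp hab
      exact hp.2.not_gt (by simpa [P, τ] using hdesc)
    simp only [coe_erase, inversions, coe_filter, mem_univ, true_and, Set.mem_sdiff,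
      Set.mem_ofPred_eq, Set.mem_singleton_iff, Prod.map]
    refine ⟨⟨Fin.swap_lt_swap_of_ne h1 h2 hp.1 hne, hp.2⟩, fun h => ?_⟩
    obtain ⟨ha, hb⟩ := Prod.ext_iff.mp h
    simp only [τ, P, Equiv.swap_apply_eq_iff, Equiv.swap_apply_left, Equiv.swap_apply_right] at ha hb
    have := hp.1
    simp only [ha, hb, Fin.lt_def] at this
    omega
  calc #(inversions (g ∘ τ)) ≤ #((inversions g).erase P) :=
        card_le_card_of_injOn _ hmaps (τ.injective.prodMap τ.injective).injOn
    _ < #(inversions g) := card_erase_lt_of_mem hP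

theorem exists_succ_lt_of_not_strictMono {g : Fin n → α} (hg : Injective g) (h : ¬ StrictMono g) :
    ∃ (i : ℕ) (h1 : i < n) (h2 : i + 1 < n), g ⟨i + 1, h2⟩ < g ⟨i, h1⟩ := by
  cases n with
  | zero => exact absurd (fun a => a.elim0) h
  | succ m =>
    obtain ⟨i, hi⟩ := by simpa [Fin.strictMono_iff_lt_succ] using h
    exact ⟨i, i.castSucc.2, i.succ.2, lt_of_le_of_ne hi (hg.ne (by simp [Fin.ext_iff]))⟩

end Inversions

theorem Equiv.eq_of_strictMono_symm_comp {E : Type*} {n : ℕ} (e : Fin n ≃ E) {y : Fin n → E}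
    (hy : Surjective y) (h : StrictMono (e.symm ∘ y)) : y = e := by
  have hid : e.symm ∘ y = id :=
    congrArg (⇑) (Subsingleton.elim (h.orderIsoOfSurjective _ (e.symm.surjective.comp hy))
      (OrderIso.refl _))
  funext a
  simpa using congrArg e (congrFun hid a)

theorem IsLinearization.adjSwapRel_comp_swap {E : Type*} [PartialOrder E] {n : ℕ} {y : Fin n → E}
    (hy : IsLinearization y) {i : ℕ} (h1 : i < n) (h2 : i + 1 < n)
    (hinc : ¬ y ⟨i, h1⟩ ≤ y ⟨i + 1, h2⟩) :
    AdjSwapRel y (y ∘ Equiv.swap ⟨i, h1⟩ ⟨i + 1, h2⟩) := by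
  have hinc' : ¬ y ⟨i + 1, h2⟩ ≤ y ⟨i, h1⟩ := hy.2 _ _ (by simp [Fin.lt_def])
  refine ⟨hy, ⟨hy.1.comp (Equiv.bijective _), fun a b hab => ?_⟩, i, h1, h2, hinc, hinc', rfl⟩
  by_cases hP : (a, b) = (⟨i, h1⟩, ⟨i + 1, h2⟩)
  · obtain ⟨rfl, rfl⟩ := Prod.ext_iff.mp hP
    simpa using hinc
  · exact hy.2 _ _ (Fin.swap_lt_swap_of_ne h1 h2 hab hP)

theorem linearizations_connected_by_adjacent_swaps_general
    (E : Type*) [PartialOrder E] {n : ℕ} (x x' : Fin n → E)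
    (hx : IsLinearization x) (hx' : IsLinearization x') :
    Relation.EqvGen AdjSwapRel x x' := by
  set e := Equiv.ofBijective x' hx'.1
  induction hk : #(inversions (e.symm ∘ x)) using Nat.strong_induction_on generalizing x with
  | _ k ih =>
  by_cases hmono : StrictMono (e.symm ∘ x)
  · rw [e.eq_of_strictMono_symm_comp hx.1.2 hmono]
    exact .refl _
  obtain ⟨i, h1, h2, hdesc⟩ :=
    exists_succ_lt_of_not_strictMono (e.symm.injective.comp hx.1.1) hmono
  have hinc : ¬ x ⟨i, h1⟩ ≤ x ⟨i + 1, h2⟩ := by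
    simpa only [e, comp_apply, Equiv.ofBijective_apply_symm_apply] using hx'.2 _ _ hdesc
  have hswap := hx.adjSwapRel_comp_swap h1 h2 hinc
  exact .trans _ _ _ (.rel _ _ hswap)
    (ih _ (hk ▸ card_inversions_comp_swap_lt h1 h2 hdesc) _ hswap.2.1 rfl)

/-- any two linearizations of a finite poset are related by the
equivalence relation generated by adjacent swaps of independent events. -/
theorem linearizations_connected_by_adjacent_swaps
    (E : Type*) [PartialOrder E] [Fintype E] {n : ℕ} (x x' : Fin n → E)
    (hx : IsLinearization x) (hx' : IsLinearization x') :
    Relation.EqvGen AdjSwapRel x x' :=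
  linearizations_connected_by_adjacent_swaps_general E x x' hx hx'
end

section
/- In the free symmetric monoidal category on a signature with one object generator and a generator σ : 1 → 1, modulo the poalgebra relations, the morphisms W^n_i := (id_n ⊗ μ) ∘ (id_{i+1} ⊗ γ_{1,n-i-1} ⊗ id_1) ∘ (id_i ⊗ δ ⊗ id_{n-i}) : n+1 → n+1 satisfy W^n_j ∘ W^n_i = W^n_i ∘ W^n_j for all i, j ∈ [n], and W^n_i ∘ W^n_i = W^n_i. -/
/-- The data of a category with natural numbers as objects, together with a
tensor product acting as addition on objects (a candidate strict monoidal
structure). Composition is written in diagrammatic order. -/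
structure MonCatN : Type 1 where
  Hom : ℕ → ℕ → Type
  id : ∀ n : ℕ, Hom n n
  comp : ∀ {m n p : ℕ}, Hom m n → Hom n p → Hom m p
  tensor : ∀ {m n m' n' : ℕ}, Hom m n → Hom m' n' → Hom (m + m') (n + n')

/-- Transport of morphisms along equalities of objects. -/
def MonCatN.cst (C : MonCatN) {a b c d : ℕ} (h1 : a = c) (h2 : b = d)
    (f : C.Hom a b) : C.Hom c d :=
  cast (by rw [h1, h2] : C.Hom a b = C.Hom c d) f

/-- The axioms of a strict monoidal category structure on `C`. -/
structure IsStrictMon (C : MonCatN) : Prop where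
  id_comp : ∀ {m n} (f : C.Hom m n), C.comp (C.id m) f = f
  comp_id : ∀ {m n} (f : C.Hom m n), C.comp f (C.id n) = f
  comp_assoc : ∀ {m n p q} (f : C.Hom m n) (g : C.Hom n p) (h : C.Hom p q),
    C.comp (C.comp f g) h = C.comp f (C.comp g h)
  tensor_id : ∀ m n, C.tensor (C.id m) (C.id n) = C.id (m + n)
  tensor_comp : ∀ {m n p m' n' p'} (f₁ : C.Hom m n) (g₁ : C.Hom n p)
    (f₂ : C.Hom m' n') (g₂ : C.Hom n' p'),
    C.tensor (C.comp f₁ g₁) (C.comp f₂ g₂) = C.comp (C.tensor f₁ f₂) (C.tensor g₁ g₂)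
  tensor_assoc : ∀ {m n m' n' m'' n''} (f : C.Hom m n) (g : C.Hom m' n')
    (h : C.Hom m'' n''),
    C.tensor (C.tensor f g) h =
      C.cst (Nat.add_assoc m m' m'').symm (Nat.add_assoc n n' n'').symm
        (C.tensor f (C.tensor g h))
  tensor_unit_l : ∀ {m n} (f : C.Hom m n),
    C.tensor (C.id 0) f = C.cst (Nat.zero_add m).symm (Nat.zero_add n).symm f
  tensor_unit_r : ∀ {m n} (f : C.Hom m n), C.tensor f (C.id 0) = f

/-- The axioms of a strict symmetric monoidal category structure on `C` with
symmetry family `γ`. -/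
structure IsStrictSymMon (C : MonCatN) (γ : ∀ m n : ℕ, C.Hom (m + n) (n + m))
    extends IsStrictMon C : Prop where
  braiding_natural : ∀ {m n m' n'} (f : C.Hom m n) (g : C.Hom m' n'),
    C.comp (C.tensor f g) (γ n n') = C.comp (γ m m') (C.tensor g f)
  symmetry : ∀ m n, C.comp (γ m n) (γ n m) = C.id (m + n)
  gamma_zero : ∀ n, γ 0 n = C.cst (Nat.zero_add n).symm (Nat.add_zero n).symm (C.id n)
  hexagon : ∀ m n p,
    γ (m + n) p =
      C.comp
        (C.cst (by omega) (by omega) (C.tensor (C.id m) (γ n p)) :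
          C.Hom ((m + n) + p) (m + (p + n)))
        (C.cst (by omega) (by omega) (C.tensor (γ m p) (C.id n)) :
          C.Hom (m + (p + n)) (p + (m + n)))

/-- A poalgebra in `C` (on the object `1`): a qualitative bicommutative
bialgebra `(η, μ, ε, δ)` together with `σ : 1 → 1` satisfying the
transitivity axiom `μ ∘ (id ⊗ σ) ∘ δ = σ`. -/
structure PoalgebraIn (C : MonCatN) (γ : ∀ m n : ℕ, C.Hom (m + n) (n + m)) where
  η : C.Hom 0 1
  μ : C.Hom 2 1
  ε : C.Hom 1 0
  δ : C.Hom 1 2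
  σ : C.Hom 1 1
  unit_l : C.comp (C.tensor η (C.id 1)) μ = C.id 1
  unit_r : C.comp (C.tensor (C.id 1) η) μ = C.id 1
  mul_assoc : C.comp (C.tensor μ (C.id 1)) μ = C.comp (C.tensor (C.id 1) μ) μ
  mul_comm : C.comp (γ 1 1) μ = μ
  counit_l : C.comp δ (C.tensor ε (C.id 1)) = C.id 1
  counit_r : C.comp δ (C.tensor (C.id 1) ε) = C.id 1
  comul_coassoc : C.comp δ (C.tensor δ (C.id 1)) = C.comp δ (C.tensor (C.id 1) δ)
  comul_cocomm : C.comp δ (γ 1 1) = δ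
  bialg : C.comp μ δ =
    C.comp (C.tensor δ δ)
      (C.comp
        ((C.tensor (C.id 1) ((C.tensor (γ 1 1) (C.id 1) : C.Hom 3 3)) : C.Hom 4 4))
        ((C.tensor μ μ : C.Hom 4 2)))
  counit_unit : C.comp η ε = C.id 0
  qualitative : C.comp δ μ = C.id 1
  transitivity : C.comp δ (C.comp (C.tensor (C.id 1) σ) μ) = σ

section Defs

variable (C : MonCatN) (γ : ∀ m n : ℕ, C.Hom (m + n) (n + m)) (P : PoalgebraIn C γ)

/-- `W^n_i : n+1 → n+1`: copy the `i`-th strand with `δ`, move the copy past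
the strands `i+1, …, n-1` with the symmetry, and merge it into the last strand
with `μ` (for `i ∈ [n]`; identity otherwise). -/
def Wd (n i : ℕ) : C.Hom (n + 1) (n + 1) :=
  if h : i < n then
    C.comp
      (C.cst (by omega) (by omega)
        (C.tensor (C.id i) (C.tensor P.δ (C.id (n - i)))) :
          C.Hom (n + 1) (i + (2 + (n - i))))
      (C.comp
        (C.cst (by omega) (by omega)
          (C.tensor (C.id (i + 1)) (C.tensor (γ 1 (n - i - 1)) (C.id 1))) :
            C.Hom (i + (2 + (n - i))) (n + 2))
        (C.tensor (C.id n) P.μ))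
  else C.id (n + 1)

/-- `W^n_I`: the composite of the `W^n_i` for `i ∈ I` (well defined up to the
commutation and idempotence of the `W^n_i`); `W^n_∅ = id`. -/
noncomputable def WId (n : ℕ) (I : Finset ℕ) : C.Hom (n + 1) (n + 1) :=
  (I.sort (· ≤ ·)).foldl (fun g i => C.comp g (Wd C γ P n i)) (C.id (n + 1))

/-- `H^n = id_n ⊗ η : n → n+1`. -/
def Hd (n : ℕ) : C.Hom n (n + 1) := C.tensor (C.id n) P.η

/-- `S^n = id_n ⊗ σ : n+1 → n+1`. -/
def Sd (n : ℕ) : C.Hom (n + 1) (n + 1) := C.tensor (C.id n) P.σ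

/-- `G^n = id_n ⊗ γ_{1,1} : n+2 → n+2`. -/
def Gd (n : ℕ) : C.Hom (n + 2) (n + 2) := C.tensor (C.id n) (γ 1 1)

/-- `G^n_i = id_i ⊗ γ ⊗ id_{n-i} : n+2 → n+2` (for `i ≤ n`; identity
otherwise). -/
def Gdi (n i : ℕ) : C.Hom (n + 2) (n + 2) :=
  if h : i ≤ n then
    C.cst (by omega) (by omega)
      (C.tensor (C.tensor (C.id i) (γ 1 1)) (C.id (n - i)))
  else C.id (n + 2)

/-- `X^n_I = S^n ∘ W^n_I ∘ H^n : n → n+1`. -/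
noncomputable def Xd (n : ℕ) (I : Finset ℕ) : C.Hom n (n + 1) :=
  C.comp (Hd C γ P n) (C.comp (WId C γ P n I) (Sd C γ P n))

/-- The composite `X^{m+k-1}_{I_{k-1}} ∘ … ∘ X^m_{I_0}` of a list of `X`'s,
written in diagrammatic order. -/
noncomputable def Xchain (m : ℕ) : ∀ Is : List (Finset ℕ), C.Hom m (m + Is.length)
  | [] => C.id m
  | I :: rest =>
      C.comp (Xd C γ P m I)
        (C.cst rfl (by simp; omega) (Xchain (m + 1) rest))

/-- The adjacent transposition `τ_p` exchanging `p` and `p+1`, acting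
elementwise on a finite set of naturals. -/
def tauF (p : ℕ) (I : Finset ℕ) : Finset ℕ :=
  I.image (fun a => if a = p then p + 1 else if a = p + 1 then p else a)

end Defs

section Infra

variable {C : MonCatN} {γ : ∀ m n : ℕ, C.Hom (m + n) (n + m)}

theorem cst_heq {a b c d : ℕ} (h1 : a = c) (h2 : b = d) (f : C.Hom a b) :
    HEq (C.cst h1 h2 f) f := cast_heq _ _

theorem hid {a b : ℕ} (h : a = b) : HEq (C.id a) (C.id b) := by subst h; rfl

theorem gcongr {m n m' n' : ℕ} (hm : m = m') (hn : n = n') :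
    HEq (γ m n) (γ m' n') := by subst hm; subst hn; rfl

theorem hcomp {m n p m' n' p' : ℕ} {f : C.Hom m n} {g : C.Hom n p}
    {f' : C.Hom m' n'} {g' : C.Hom n' p'}
    (hm : m = m') (hn : n = n') (hp : p = p')
    (hf : HEq f f') (hg : HEq g g') : HEq (C.comp f g) (C.comp f' g') := by
  subst hm; subst hn; subst hp; cases hf; cases hg; rfl

theorem htens {m n p q m' n' p' q' : ℕ} {f : C.Hom m n} {g : C.Hom p q}
    {f' : C.Hom m' n'} {g' : C.Hom p' q'}
    (hm : m = m') (hn : n = n') (hp : p = p') (hq : q = q')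
    (hf : HEq f f') (hg : HEq g g') : HEq (C.tensor f g) (C.tensor f' g') := by
  subst hm; subst hn; subst hp; subst hq; cases hf; cases hg; rfl

/-- Composition with a cast absorbed: `f ⬝ g` where codomain of `f` equals
domain of `g` only propositionally. -/
def seqq (C : MonCatN) {m n n' p : ℕ} (f : C.Hom m n) (g : C.Hom n' p)
    (h : n = n' := by omega) : C.Hom m p :=
  C.comp f (C.cst h.symm rfl g)

theorem seqq_eq_comp {m n p : ℕ} (f : C.Hom m n) (g : C.Hom n p) (h : n = n) :
    seqq C f g h = C.comp f g := rfl

theorem seqq_hcongr {m n n' p m₂ n₂ n₂' p₂ : ℕ}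
    {f : C.Hom m n} {g : C.Hom n' p} {f₂ : C.Hom m₂ n₂} {g₂ : C.Hom n₂' p₂}
    {h : n = n'} {h₂ : n₂ = n₂'}
    (hm : m = m₂) (hn : n = n₂) (hn' : n' = n₂') (hp : p = p₂)
    (hf : HEq f f₂) (hg : HEq g g₂) :
    HEq (seqq C f g h) (seqq C f₂ g₂ h₂) := by
  subst hm; subst hn; subst hn'; subst hp; cases hf; cases hg; rfl

theorem seqq_heq {m n n' p : ℕ} (f : C.Hom m n) (g : C.Hom n' p) (h : n = n') :
    HEq (seqq C f g h) (C.comp f (C.cst h.symm rfl g)) := HEq.rfl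

end Infra
section Infra2

variable {C : MonCatN} {γ : ∀ m n : ℕ, C.Hom (m + n) (n + m)}

theorem cst_comp_left (hM : IsStrictMon C) {a b c p : ℕ} (h1 : a = c) (h2 : b = b)
    (f : C.Hom a b) (g : C.Hom b p) :
    C.comp (C.cst h1 h2 f) g = C.cst h1 rfl (C.comp f g) := by
  subst h1; rfl

theorem seqq_assoc (hM : IsStrictMon C) {m n n' p p' q : ℕ}
    (f : C.Hom m n) (g : C.Hom n' p) (k : C.Hom p' q)
    (h1 : n = n') (h2 : p = p') (h3 : n = n') (h4 : p = p') :
    seqq C (seqq C f g h1) k h2 = seqq C f (seqq C g k h4) h3 := by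
  subst h1; subst h2; exact hM.comp_assoc f g k

theorem hassoc (hM : IsStrictMon C) {m n m' n' m'' n'' : ℕ}
    (f : C.Hom m n) (g : C.Hom m' n') (h : C.Hom m'' n'') :
    HEq (C.tensor (C.tensor f g) h) (C.tensor f (C.tensor g h)) := by
  rw [hM.tensor_assoc]; exact cst_heq _ _ _

theorem hunitl (hM : IsStrictMon C) {m n : ℕ} (f : C.Hom m n) :
    HEq (C.tensor (C.id 0) f) f := by
  rw [hM.tensor_unit_l]; exact cst_heq _ _ _

/-- Interchange: disjoint morphisms slide past each other. -/
theorem exch (hM : IsStrictMon C) {a b a' b' : ℕ} (f : C.Hom a b) (g : C.Hom a' b') :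
    C.comp (C.tensor f (C.id a')) (C.tensor (C.id b) g) = C.tensor f g := by
  rw [← hM.tensor_comp, hM.comp_id, hM.id_comp]

theorem exch' (hM : IsStrictMon C) {a b a' b' : ℕ} (f : C.Hom a b) (g : C.Hom a' b') :
    C.comp (C.tensor (C.id a) g) (C.tensor f (C.id b')) = C.tensor f g := by
  rw [← hM.tensor_comp, hM.comp_id, hM.id_comp]

/-- `𝟙 ⊗ -` distributes over `seqq`. -/
theorem id_tensor_seqq (hM : IsStrictMon C) {s m n n' p : ℕ}
    (f : C.Hom m n) (g : C.Hom n' p) (h : n = n') (h2 : s + n = s + n') :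
    C.tensor (C.id s) (seqq C f g h) =
      seqq C (C.tensor (C.id s) f) (C.tensor (C.id s) g) h2 := by
  subst h
  rw [seqq_eq_comp, seqq_eq_comp, ← hM.tensor_comp, hM.comp_id]

theorem seqq_id_right (hM : IsStrictMon C) {m n p : ℕ} (f : C.Hom m n)
    (h : n = p) (hg : p = n) : seqq C f (C.id p) h = C.cst rfl h f := by
  subst h; rw [seqq_eq_comp, hM.comp_id]; rfl

theorem seqq_id_left (hM : IsStrictMon C) {m n p : ℕ} (f : C.Hom n p)
    (h : m = n) : seqq C (C.id m) f h = C.cst h.symm rfl f := by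
  subst h; rw [seqq_eq_comp, hM.id_comp]; rfl

theorem gamma_symm (hC : IsStrictSymMon C γ) (m n : ℕ) :
    C.comp (γ m n) (γ n m) = C.id (m + n) := hC.symmetry m n

end Infra2
section Infra3

variable {C : MonCatN} {γ : ∀ m n : ℕ, C.Hom (m + n) (n + m)}

/-- The hexagon in the form `γ_{1,1+p} = (γ_{1,1} ⊗ 1_p) ; (1_1 ⊗ γ_{1,p})`. -/
theorem gamma_split (hC : IsStrictSymMon C γ) (p : ℕ) :
    HEq (γ 1 (1+p))
      (seqq C (C.tensor (γ 1 1) (C.id p)) (C.tensor (C.id 1) (γ 1 p)) (by omega)) := by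
  have hM := hC.toIsStrictMon
  set A : C.Hom (p+2) (p+2) := C.cst (by omega) (by omega) (γ (1+p) 1) with hA'
  set B : C.Hom (p+2) (p+2) := C.cst (by omega) (by omega) (γ 1 (1+p)) with hB'
  set V : C.Hom (p+2) (p+2) := C.cst (by omega) (by omega) (C.tensor (γ 1 1) (C.id p)) with hV'
  set U : C.Hom (p+2) (p+2) := C.cst (by omega) (by omega) (C.tensor (C.id 1) (γ 1 p)) with hU'
  set Ui : C.Hom (p+2) (p+2) := C.cst (by omega) (by omega) (C.tensor (C.id 1) (γ p 1)) with hUi'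
  have hBA : C.comp B A = C.id (p+2) := by
    apply eq_of_heq
    refine HEq.trans (HEq.trans
      (hcomp (f' := γ 1 (1+p)) (g' := γ (1+p) 1) (by omega) (by omega) (by omega)
        (cst_heq _ _ _) (cst_heq _ _ _))
      (heq_of_eq (hC.symmetry 1 (1+p)))) (hid (by omega))
  have hAeq : A = C.comp Ui V := by
    apply eq_of_heq
    refine HEq.trans (HEq.trans (cst_heq _ _ _) (heq_of_eq (hC.hexagon 1 p 1))) ?_
    refine hcomp (by omega) (by omega) (by omega) ?_ ?_
    · exact (cst_heq _ _ _).trans (cst_heq _ _ _).symm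
    · exact (cst_heq _ _ _).trans (cst_heq _ _ _).symm
  have hVV : C.comp V V = C.id (p+2) := by
    apply eq_of_heq
    refine HEq.trans (hcomp (f' := C.tensor (γ 1 1) (C.id p))
      (g' := C.tensor (γ 1 1) (C.id p)) (by omega) (by omega) (by omega)
      (cst_heq _ _ _) (cst_heq _ _ _)) ?_
    rw [← hM.tensor_comp, hC.symmetry 1 1, hM.comp_id, hM.tensor_id]
    exact hid (by omega)
  have hUiU : C.comp Ui U = C.id (p+2) := by
    apply eq_of_heq
    refine HEq.trans (hcomp (f' := C.tensor (C.id 1) (γ p 1))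
      (g' := C.tensor (C.id 1) (γ 1 p)) (by omega) (by omega) (by omega)
      (cst_heq _ _ _) (cst_heq _ _ _)) ?_
    rw [← hM.tensor_comp, hC.symmetry p 1, hM.comp_id, hM.tensor_id]
    exact hid (by omega)
  have key : C.comp V U = B := by
    have h1 : C.comp V U = C.comp B (C.comp A (C.comp V U)) := by
      rw [← hM.comp_assoc B A, hBA, hM.id_comp]
    rw [h1, hAeq, hM.comp_assoc, ← hM.comp_assoc V V, hVV, hM.id_comp, hUiU, hM.comp_id]
  refine HEq.trans (HEq.trans (cst_heq _ _ _).symm (heq_of_eq key.symm)) ?_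
  refine HEq.trans (heq_of_eq (seqq_eq_comp V U rfl).symm) ?_
  exact seqq_hcongr (by omega) (by omega) (by omega) (by omega)
    (cst_heq _ _ _) (cst_heq _ _ _)

/-- The hexagon at `γ_{2,1}`. -/
theorem hex3 (hC : IsStrictSymMon C γ) :
    γ 2 1 = C.comp ((C.tensor (C.id 1) (γ 1 1) : C.Hom 3 3))
      ((C.tensor (γ 1 1) (C.id 1) : C.Hom 3 3)) := by
  apply eq_of_heq
  refine HEq.trans (heq_of_eq (hC.hexagon 1 1 1)) ?_
  exact hcomp (by omega) (by omega) (by omega) (cst_heq _ _ _) (cst_heq _ _ _)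

/-- Head identity: `(1⊗γ);(γ⊗1);(1⊗μ) = (μ⊗1);γ` on three strands. -/
theorem head_id (hC : IsStrictSymMon C γ) (P : PoalgebraIn C γ) :
    C.comp ((C.tensor (C.id 1) (γ 1 1) : C.Hom 3 3))
      (C.comp ((C.tensor (γ 1 1) (C.id 1) : C.Hom 3 3))
        ((C.tensor (C.id 1) P.μ : C.Hom 3 2))) =
    C.comp ((C.tensor P.μ (C.id 1) : C.Hom 3 2)) (γ 1 1) := by
  have hM := hC.toIsStrictMon
  have hn := hC.braiding_natural P.μ (C.id 1)
  rw [hn, hex3 hC, hM.comp_assoc]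

end Infra3
section Infra4

variable {C : MonCatN} {γ : ∀ m n : ℕ, C.Hom (m + n) (n + m)}

theorem hcomp_seqq {a b a' d e c c' : ℕ} (h1 : a = a') (h2 : b = d) (h3 : e = d)
    (h4 : c = c') (f : C.Hom a b) (g : C.Hom e c) (h : b = e) :
    HEq (C.comp (C.cst h1 h2 f) (C.cst h3 h4 g)) (seqq C f g h) := by
  subst h1; subst h2; subst h4; subst h3; rfl

theorem hcomp_seqq' {a b a' d c : ℕ} (h1 : a = a') (h2 : b = d)
    (f : C.Hom a b) (g : C.Hom d c) (h : b = d) :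
    HEq (C.comp (C.cst h1 h2 f) g) (seqq C f g h) := by
  subst h1; subst h2; rfl

theorem comp_tensor_idr (hM : IsStrictMon C) {a b c s : ℕ}
    (f : C.Hom a b) (g : C.Hom b c) :
    C.comp (C.tensor f (C.id s)) (C.tensor g (C.id s)) =
      C.tensor (C.comp f g) (C.id s) := by
  rw [← hM.tensor_comp, hM.comp_id]

theorem seqq_tensor_idr (hM : IsStrictMon C) {a b b' c s : ℕ}
    (f : C.Hom a b) (g : C.Hom b' c) (h : b = b') (h2 : b + s = b' + s) :
    seqq C (C.tensor f (C.id s)) (C.tensor g (C.id s)) h2 =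
      C.tensor (seqq C f g h) (C.id s) := by
  subst h; rw [seqq_eq_comp, seqq_eq_comp, comp_tensor_idr hM]

end Infra4

section EDefs

variable (C : MonCatN) (γ : ∀ m n : ℕ, C.Hom (m + n) (n + m)) (P : PoalgebraIn C γ)

/-- `E k : k+2 → k+1` merges strand `0` into the last strand, across `k`
intermediate strands: `E k = (γ_{1,k} ⊗ 1) ; (1_k ⊗ μ)`. -/
def Emor (k : ℕ) : C.Hom (k+2) (k+1) :=
  C.comp ((C.cst (show 1+k+1 = k+2 by omega) (show k+1+1 = k+2 by omega)
      (C.tensor (γ 1 k) (C.id 1))) : C.Hom (k+2) (k+2))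
    ((C.tensor (C.id k) P.μ) : C.Hom (k+2) (k+1))

/-- `D k : k+2 → k+2` copies strand `0` and merges the copy into the last
strand: `D k = (δ ⊗ 1_{k+1}) ; (1_1 ⊗ E k)`. -/
def Dmor (k : ℕ) : C.Hom (k+2) (k+2) :=
  C.comp ((C.cst (show 1+(k+1) = k+2 by omega) (show 2+(k+1) = k+3 by omega)
      (C.tensor P.δ (C.id (k+1)))) : C.Hom (k+2) (k+3))
    ((C.cst (show 1+(k+2) = k+3 by omega) (show 1+(k+1) = k+2 by omega)
      (C.tensor (C.id 1) (Emor C γ P k))) : C.Hom (k+3) (k+2))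

end EDefs

section ELemmas

variable {C : MonCatN} {γ : ∀ m n : ℕ, C.Hom (m + n) (n + m)}
variable {P : PoalgebraIn C γ}

theorem Emor_heq (k : ℕ) :
    HEq (Emor C γ P k)
      (seqq C (C.tensor (γ 1 k) (C.id 1)) (C.tensor (C.id k) P.μ)
        (show k+1+1 = k+2 by omega)) :=
  hcomp_seqq' _ _ _ _ _

theorem Dmor_heq (k : ℕ) :
    HEq (Dmor C γ P k)
      (seqq C (C.tensor P.δ (C.id (k+1))) (C.tensor (C.id 1) (Emor C γ P k))
        (show 2+(k+1) = 1+(k+2) by omega)) :=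
  hcomp_seqq _ _ _ _ _ _ _

theorem gamma10 (hC : IsStrictSymMon C γ) : γ 1 0 = C.id 1 := by
  have h0 : γ 0 1 = C.id 1 := hC.gamma_zero 1
  have h := hC.symmetry 1 0
  rw [h0] at h
  rw [← hC.comp_id (γ 1 0)]
  exact h

theorem E_zero (hC : IsStrictSymMon C γ) : Emor C γ P 0 = P.μ := by
  unfold Emor
  rw [gamma10 hC]
  have h1 : (C.cst (show 1+0+1 = 0+2 by omega) (show 0+1+1 = 0+2 by omega)
      (C.tensor (C.id 1) (C.id 1)) : C.Hom 2 2) = C.id 2 := by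
    rw [hC.tensor_id]; rfl
  rw [h1, hC.id_comp]
  apply eq_of_heq
  exact hunitl hC.toIsStrictMon P.μ

end ELemmas
section ELemmas2

variable {C : MonCatN} {γ : ∀ m n : ℕ, C.Hom (m + n) (n + m)}
variable {P : PoalgebraIn C γ}

theorem E_succ (hC : IsStrictSymMon C γ) (k : ℕ) :
    HEq (Emor C γ P (k+1))
      (seqq C (C.tensor (γ 1 1) (C.id (k+1)))
        (C.tensor (C.id 1) (Emor C γ P k)) (show 2+(k+1) = 1+(k+2) by omega)) := by
  have hM := hC.toIsStrictMon
  have s1 : HEq (Emor C γ P (k+1))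
      (seqq C (C.tensor (γ 1 (k+1)) (C.id 1)) (C.tensor (C.id (k+1)) P.μ)
        (show k+1+1+1 = k+1+2 by omega)) := Emor_heq (k+1)
  have hγ : HEq (C.tensor (γ 1 (k+1)) (C.id 1))
      (C.tensor (seqq C (C.tensor (γ 1 1) (C.id k)) (C.tensor (C.id 1) (γ 1 k))
          (show 1+1+k = 1+(1+k) by omega)) (C.id 1)) :=
    htens (by omega) (by omega) rfl rfl
      ((gcongr rfl (by omega)).trans (gamma_split hC k)) HEq.rfl
  have s2 : HEq (seqq C (C.tensor (γ 1 (k+1)) (C.id 1)) (C.tensor (C.id (k+1)) P.μ)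
        (show k+1+1+1 = k+1+2 by omega))
      (seqq C (C.tensor (seqq C (C.tensor (γ 1 1) (C.id k)) (C.tensor (C.id 1) (γ 1 k))
          (show 1+1+k = 1+(1+k) by omega)) (C.id 1))
        (C.tensor (C.id (k+1)) P.μ) (show 1+(k+1)+1 = k+1+2 by omega)) :=
    seqq_hcongr (by omega) (by omega) (by omega) (by omega) hγ HEq.rfl
  rw [← seqq_tensor_idr hM (s := 1) (C.tensor (γ 1 1) (C.id k))
      (C.tensor (C.id 1) (γ 1 k)) (show 1+1+k = 1+(1+k) by omega)
      (show 1+1+k+1 = 1+(1+k)+1 by omega)] at s2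
  rw [seqq_assoc hM _ _ _ (show 1+1+k+1 = 1+(1+k)+1 by omega)
      (show 1+(k+1)+1 = k+1+2 by omega) (show 1+1+k+1 = 1+(1+k)+1 by omega)
      (show 1+(k+1)+1 = k+1+2 by omega)] at s2
  refine (s1.trans s2).trans ?_
  refine seqq_hcongr (by omega) (by omega) (by omega) (by omega) ?_ ?_
  · -- (γ11 ⊗ 1_k) ⊗ 1_1 ≅ γ11 ⊗ 1_{k+1}
    refine HEq.trans (hassoc hM _ _ _) ?_
    exact htens rfl rfl (by omega) (by omega)
      HEq.rfl ((heq_of_eq (hM.tensor_id k 1)).trans (hid (by omega)))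
  · -- seqq ((1⊗γ1k)⊗1) (1_{k+1}⊗μ) ≅ 1_1 ⊗ E k
    have s3 : HEq (seqq C (C.tensor (C.tensor (C.id 1) (γ 1 k)) (C.id 1))
          (C.tensor (C.id (k+1)) P.μ) (show 1+(k+1)+1 = k+1+2 by omega))
        (seqq C (C.tensor (C.id 1) (C.tensor (γ 1 k) (C.id 1)))
          (C.tensor (C.id 1) (C.tensor (C.id k) P.μ))
          (show 1+(k+1+1) = 1+(k+2) by omega)) := by
      refine seqq_hcongr (by omega) (by omega) (by omega) (by omega) ?_ ?_
      · exact hassoc hM (C.id 1) (γ 1 k) (C.id 1)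
      · refine HEq.trans ?_ (hassoc hM (C.id 1) (C.id k) P.μ)
        exact htens (by omega) (by omega) rfl rfl
          ((hid (by omega)).trans (heq_of_eq (hM.tensor_id 1 k).symm)) HEq.rfl
    refine s3.trans ?_
    rw [← id_tensor_seqq hM (s := 1) (C.tensor (γ 1 k) (C.id 1))
      (C.tensor (C.id k) P.μ) (show k+1+1 = k+2 by omega)
      (show 1+(k+1+1) = 1+(k+2) by omega)]
    exact htens rfl rfl (by omega) (by omega) HEq.rfl (Emor_heq k).symm

end ELemmas2
section ELemmas3

variable {C : MonCatN} {γ : ∀ m n : ℕ, C.Hom (m + n) (n + m)}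
variable {P : PoalgebraIn C γ}

/-- Naturality of the merge `E` in the middle block. -/
theorem E_nat (hC : IsStrictSymMon C γ) {m m' : ℕ} (g : C.Hom m m') :
    HEq (seqq C (C.tensor (C.id 1) (C.tensor g (C.id 1))) (Emor C γ P m')
          (show 1+(m'+1) = m'+2 by omega))
        (seqq C (Emor C γ P m) (C.tensor g (C.id 1)) rfl) := by
  have hM := hC.toIsStrictMon
  have s1 : HEq (seqq C (C.tensor (C.id 1) (C.tensor g (C.id 1))) (Emor C γ P m')
        (show 1+(m'+1) = m'+2 by omega))
      (seqq C (C.tensor (C.tensor (C.id 1) g) (C.id 1))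
        (seqq C (C.tensor (γ 1 m') (C.id 1)) (C.tensor (C.id m') P.μ)
          (show m'+1+1 = m'+2 by omega))
        (show 1+m'+1 = 1+m'+1 by omega)) :=
    seqq_hcongr (by omega) (by omega) (by omega) (by omega)
      (hassoc hM (C.id 1) g (C.id 1)).symm (Emor_heq m')
  rw [← seqq_assoc hM _ _ _ (show 1+m'+1 = 1+m'+1 from rfl) rfl
      (show 1+m'+1 = 1+m'+1 from rfl) (show m'+1+1 = m'+2 by omega)] at s1
  rw [seqq_eq_comp _ _ (show 1+m'+1 = 1+m'+1 from rfl),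
      comp_tensor_idr hM (C.tensor (C.id 1) g) (γ 1 m'),
      hC.braiding_natural (C.id 1) g,
      ← comp_tensor_idr hM (γ 1 m) (C.tensor g (C.id 1)),
      ← seqq_eq_comp _ _ (show m+1+1 = m+1+1 from rfl)] at s1
  rw [seqq_assoc hM _ _ _ (show m+1+1 = m+1+1 from rfl) (show m'+1+1 = m'+2 by omega)
      (show m+1+1 = m+1+1 from rfl) (show m'+1+1 = m'+2 by omega)] at s1
  refine s1.trans ?_
  -- now: seqq (γ1m ⊗ 1) (seqq ((g⊗1)⊗1) (1_{m'} ⊗ μ)) ≅ seqq (Emor m) (g⊗1)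
  have s2 : HEq (seqq C (C.tensor (C.tensor g (C.id 1)) (C.id 1))
        (C.tensor (C.id m') P.μ) (show m'+1+1 = m'+2 by omega))
      (seqq C (C.tensor (C.id m) P.μ) (C.tensor g (C.id 1)) rfl) := by
    have h1 : HEq (C.tensor (C.tensor g (C.id 1)) (C.id 1)) (C.tensor g (C.id 2)) := by
      refine HEq.trans (hassoc hM g (C.id 1) (C.id 1)) ?_
      exact htens rfl rfl (by omega) (by omega) HEq.rfl
        ((heq_of_eq (hM.tensor_id 1 1)).trans (hid (by omega)))
    have h2 : HEq (seqq C (C.tensor (C.tensor g (C.id 1)) (C.id 1))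
          (C.tensor (C.id m') P.μ) (show m'+1+1 = m'+2 by omega))
        (seqq C (C.tensor g (C.id 2)) (C.tensor (C.id m') P.μ) rfl) :=
      seqq_hcongr (by omega) (by omega) (by omega) (by omega) h1 HEq.rfl
    refine h2.trans ?_
    rw [seqq_eq_comp, seqq_eq_comp, exch hM g P.μ, ← exch' hM g P.μ]
  have s3 : HEq (seqq C (C.tensor (γ 1 m) (C.id 1))
        (seqq C (C.tensor (C.tensor g (C.id 1)) (C.id 1))
          (C.tensor (C.id m') P.μ) (show m'+1+1 = m'+2 by omega))
        (show m+1+1 = m+1+1 from rfl))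
      (seqq C (C.tensor (γ 1 m) (C.id 1))
        (seqq C (C.tensor (C.id m) P.μ) (C.tensor g (C.id 1)) rfl)
        (show m+1+1 = m+1+1 from rfl)) :=
    seqq_hcongr (by omega) (by omega) (by omega) (by omega) HEq.rfl s2
  refine s3.trans ?_
  rw [← seqq_assoc hM _ _ _ (show m+1+1 = m+2 by omega) rfl
      (show m+1+1 = m+2 by omega) rfl]
  exact seqq_hcongr (by omega) (by omega) (by omega) (by omega) (Emor_heq m).symm HEq.rfl

end ELemmas3
section ELemmas4

variable {C : MonCatN} {γ : ∀ m n : ℕ, C.Hom (m + n) (n + m)}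
variable {P : PoalgebraIn C γ}

/-- Merging two adjacent strands into the last one equals premultiplying. -/
theorem E_two (hC : IsStrictSymMon C γ) (k : ℕ) :
    HEq (seqq C (C.tensor (C.id 1) (Emor C γ P k)) (Emor C γ P k) (by omega))
        (seqq C (C.tensor P.μ (C.id (k+1))) (Emor C γ P k) (by omega)) := by
  have hM := hC.toIsStrictMon
  induction k with
  | zero =>
      rw [E_zero hC]
      exact heq_of_eq P.mul_assoc.symm
  | succ k IH =>
      have hS := E_succ (P := P) hC k
      set E := Emor C γ P k with hE
      -- step 1 : expand both copies of E (k+1)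
      have s1 : HEq (seqq C (C.tensor (C.id 1) (Emor C γ P (k+1))) (Emor C γ P (k+1))
            (by omega))
          (seqq C (C.tensor (C.id 1)
              (seqq C (C.tensor (γ 1 1) (C.id (k+1))) (C.tensor (C.id 1) E) (by omega)))
            (seqq C (C.tensor (γ 1 1) (C.id (k+1))) (C.tensor (C.id 1) E) (by omega))
            (by omega)) :=
        seqq_hcongr (by omega) (by omega) (by omega) (by omega)
          (htens rfl rfl (by omega) (by omega) HEq.rfl hS) hS
      rw [id_tensor_seqq hM (s := 1) (C.tensor (γ 1 1) (C.id (k+1)))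
          (C.tensor (C.id 1) E) (by omega) (by omega)] at s1
      rw [seqq_assoc hM (C.tensor (C.id 1) (C.tensor (γ 1 1) (C.id (k+1))))
          (C.tensor (C.id 1) (C.tensor (C.id 1) E))
          (seqq C (C.tensor (γ 1 1) (C.id (k+1))) (C.tensor (C.id 1) E) (by omega))
          (by omega) (by omega) (by omega) (by omega)] at s1
      refine s1.trans ?_
      -- step 2 : commute (1⊗(1⊗E)) with (γ⊗1) and apply IH
      have s2 : HEq (seqq C (C.tensor (C.id 1) (C.tensor (C.id 1) E))
            (seqq C (C.tensor (γ 1 1) (C.id (k+1))) (C.tensor (C.id 1) E) (by omega))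
            (by omega))
          (seqq C (C.tensor (γ 1 1) (C.id (k+2)))
            (seqq C (C.tensor (C.id 1) (C.tensor P.μ (C.id (k+1))))
              (C.tensor (C.id 1) E) (by omega))
            (by omega)) := by
        have q1 : HEq (C.tensor (C.id 1) (C.tensor (C.id 1) E))
            (C.tensor (C.id (1+1)) E) :=
          HEq.trans (hassoc hM (C.id 1) (C.id 1) E).symm
            (htens (by omega) (by omega) rfl rfl (heq_of_eq (hM.tensor_id 1 1)) HEq.rfl)
        have q2 : HEq (seqq C (C.tensor (C.id 1) (C.tensor (C.id 1) E))
              (seqq C (C.tensor (γ 1 1) (C.id (k+1))) (C.tensor (C.id 1) E) (by omega))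
              (by omega))
            (seqq C (C.tensor (C.id (1+1)) E)
              (seqq C (C.tensor (γ 1 1) (C.id (k+1))) (C.tensor (C.id 1) E) (by omega))
              (by omega)) :=
          seqq_hcongr (by omega) (by omega) (by omega) (by omega) q1 HEq.rfl
        refine q2.trans ?_
        rw [← seqq_assoc hM (C.tensor (C.id (1+1)) E) (C.tensor (γ 1 1) (C.id (k+1)))
            (C.tensor (C.id 1) E) (by omega) (by omega) (by omega) (by omega)]
        have q3 : seqq C (C.tensor (C.id (1+1)) E) (C.tensor (γ 1 1) (C.id (k+1)))
              (by omega) = C.tensor (γ 1 1) E := by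
          rw [seqq_eq_comp]; exact exch' hM (γ 1 1) E
        rw [q3, ← exch hM (γ 1 1) E,
            ← seqq_eq_comp (C.tensor (γ 1 1) (C.id (k+2))) (C.tensor (C.id (1+1)) E) rfl]
        rw [seqq_assoc hM (C.tensor (γ 1 1) (C.id (k+2))) (C.tensor (C.id (1+1)) E)
            (C.tensor (C.id 1) E) (by omega) (by omega) (by omega) (by omega)]
        refine seqq_hcongr (by omega) (by omega) (by omega) (by omega) HEq.rfl ?_
        have q4 : HEq (seqq C (C.tensor (C.id (1+1)) E) (C.tensor (C.id 1) E) (by omega))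
            (seqq C (C.tensor (C.id 1) (C.tensor (C.id 1) E)) (C.tensor (C.id 1) E)
              (by omega)) :=
          seqq_hcongr (by omega) (by omega) (by omega) (by omega) q1.symm HEq.rfl
        refine q4.trans ?_
        rw [← id_tensor_seqq hM (s := 1) (C.tensor (C.id 1) E) E (by omega) (by omega)]
        refine HEq.trans (htens rfl rfl (by omega) (by omega) HEq.rfl IH) ?_
        rw [id_tensor_seqq hM (s := 1) (C.tensor P.μ (C.id (k+1))) E (by omega) (by omega)]
      have s2' : HEq (seqq C (C.tensor (C.id 1) (C.tensor (γ 1 1) (C.id (k+1))))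
            (seqq C (C.tensor (C.id 1) (C.tensor (C.id 1) E))
              (seqq C (C.tensor (γ 1 1) (C.id (k+1))) (C.tensor (C.id 1) E) (by omega))
              (by omega))
            (by omega))
          (seqq C (C.tensor (C.id 1) (C.tensor (γ 1 1) (C.id (k+1))))
            (seqq C (C.tensor (γ 1 1) (C.id (k+2)))
              (seqq C (C.tensor (C.id 1) (C.tensor P.μ (C.id (k+1))))
                (C.tensor (C.id 1) E) (by omega))
              (by omega))
            (by omega)) :=
        seqq_hcongr (by omega) (by omega) (by omega) (by omega) HEq.rfl s2
      refine s2'.trans ?_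
      -- step 3 : isolate the head
      rw [← seqq_assoc hM (C.tensor (C.id 1) (C.tensor (γ 1 1) (C.id (k+1))))
          (C.tensor (γ 1 1) (C.id (k+2)))
          (seqq C (C.tensor (C.id 1) (C.tensor P.μ (C.id (k+1))))
            (C.tensor (C.id 1) E) (by omega))
          (by omega) (by omega) (by omega) (by omega)]
      rw [← seqq_assoc hM (seqq C (C.tensor (C.id 1) (C.tensor (γ 1 1) (C.id (k+1))))
            (C.tensor (γ 1 1) (C.id (k+2))) (by omega))
          (C.tensor (C.id 1) (C.tensor P.μ (C.id (k+1))))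
          (C.tensor (C.id 1) E) (by omega) (by omega) (by omega) (by omega)]
      -- head computation
      have hd : HEq (seqq C (seqq C (seqq C
            (C.tensor (C.id 1) (C.tensor (γ 1 1) (C.id (k+1))))
            (C.tensor (γ 1 1) (C.id (k+2))) (by omega))
            (C.tensor (C.id 1) (C.tensor P.μ (C.id (k+1)))) (by omega))
          (C.tensor (C.id 1) E) (by omega))
        (seqq C (seqq C (C.tensor P.μ (C.id (k+2))) (C.tensor (γ 1 1) (C.id (k+1)))
            (by omega))
          (C.tensor (C.id 1) E) (by omega)) := by
        refine seqq_hcongr (by omega) (by omega) (by omega) (by omega) ?_ HEq.rfl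
        have r1 : HEq (C.tensor (C.id 1) (C.tensor (γ 1 1) (C.id (k+1))))
            (C.tensor (C.tensor (C.id 1) (γ 1 1)) (C.id (k+1))) :=
          (hassoc hM (C.id 1) (γ 1 1) (C.id (k+1))).symm
        have r1b : HEq (C.tensor (γ 1 1) (C.id (k+2)))
            (C.tensor (C.tensor (γ 1 1) (C.id 1)) (C.id (k+1))) := by
          refine (HEq.trans (hassoc hM (γ 1 1) (C.id 1) (C.id (k+1))) ?_).symm
          exact htens rfl rfl (by omega) (by omega) HEq.rfl
            ((heq_of_eq (hM.tensor_id 1 (k+1))).trans (hid (by omega)))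
        have r2 : HEq (C.tensor (C.id 1) (C.tensor P.μ (C.id (k+1))))
            (C.tensor (C.tensor (C.id 1) P.μ) (C.id (k+1))) :=
          (hassoc hM (C.id 1) P.μ (C.id (k+1))).symm
        have r3 : HEq (seqq C (seqq C
              (C.tensor (C.id 1) (C.tensor (γ 1 1) (C.id (k+1))))
              (C.tensor (γ 1 1) (C.id (k+2))) (by omega))
              (C.tensor (C.id 1) (C.tensor P.μ (C.id (k+1)))) (by omega))
            (seqq C (seqq C (C.tensor (C.tensor (C.id 1) (γ 1 1)) (C.id (k+1)))
                (C.tensor (C.tensor (γ 1 1) (C.id 1)) (C.id (k+1))) (by omega))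
              (C.tensor (C.tensor (C.id 1) P.μ) (C.id (k+1))) (by omega)) :=
          seqq_hcongr (by omega) (by omega) (by omega) (by omega)
            (seqq_hcongr (by omega) (by omega) (by omega) (by omega) r1 r1b) r2
        refine r3.trans ?_
        rw [seqq_tensor_idr hM (s := k+1) (C.tensor (C.id 1) (γ 1 1))
            (C.tensor (γ 1 1) (C.id 1)) (by omega) (by omega)]
        rw [seqq_tensor_idr hM (s := k+1)
            (seqq C (C.tensor (C.id 1) (γ 1 1)) (C.tensor (γ 1 1) (C.id 1)) (by omega))
            (C.tensor (C.id 1) P.μ) (by omega) (by omega)]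
        have r4 : seqq C (seqq C (C.tensor (C.id 1) (γ 1 1))
              (C.tensor (γ 1 1) (C.id 1)) (by omega))
            (C.tensor (C.id 1) P.μ) (by omega) =
            C.comp (C.tensor P.μ (C.id 1)) (γ 1 1) := by
          rw [seqq_eq_comp, seqq_eq_comp, hM.comp_assoc]
          exact head_id hC P
        rw [r4]
        rw [← comp_tensor_idr hM (s := k+1) (C.tensor P.μ (C.id 1)) (γ 1 1),
            ← seqq_eq_comp (C.tensor (C.tensor P.μ (C.id 1)) (C.id (k+1)))
              (C.tensor (γ 1 1) (C.id (k+1))) rfl]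
        refine seqq_hcongr (by omega) (by omega) (by omega) (by omega) ?_ HEq.rfl
        refine HEq.trans (hassoc hM P.μ (C.id 1) (C.id (k+1))) ?_
        exact htens rfl rfl (by omega) (by omega) HEq.rfl
          ((heq_of_eq (hM.tensor_id 1 (k+1))).trans (hid (by omega)))
      refine hd.trans ?_
      rw [seqq_assoc hM (C.tensor P.μ (C.id (k+2))) (C.tensor (γ 1 1) (C.id (k+1)))
          (C.tensor (C.id 1) E) (by omega) (by omega) (by omega) (by omega)]
      exact seqq_hcongr (by omega) (by omega) (by omega) (by omega) HEq.rfl hS.symm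

end ELemmas4
section ELemmas5

variable {C : MonCatN} {γ : ∀ m n : ℕ, C.Hom (m + n) (n + m)}
variable {P : PoalgebraIn C γ}

theorem Emor_congr {k k' : ℕ} (h : k = k') :
    HEq (Emor C γ P k) (Emor C γ P k') := by subst h; rfl

/-- Merging strands 0 and 1 into the last strand, in either order. -/
theorem E_adj (hC : IsStrictSymMon C γ) (r : ℕ) :
    HEq (seqq C (Emor C γ P (r+1)) (Emor C γ P r) (by omega))
        (seqq C (C.tensor (C.id 1) (Emor C γ P r)) (Emor C γ P r) (by omega)) := by
  have hM := hC.toIsStrictMon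
  set E := Emor C γ P r with hE
  have s1 : HEq (seqq C (Emor C γ P (r+1)) E (by omega))
      (seqq C (seqq C (C.tensor (γ 1 1) (C.id (r+1))) (C.tensor (C.id 1) E) (by omega))
        E (by omega)) :=
    seqq_hcongr (by omega) (by omega) (by omega) (by omega) (E_succ hC r) HEq.rfl
  refine s1.trans ?_
  rw [seqq_assoc hM (C.tensor (γ 1 1) (C.id (r+1))) (C.tensor (C.id 1) E) E
    (by omega) (by omega) (by omega) (by omega)]
  have s2 : HEq (seqq C (C.tensor (γ 1 1) (C.id (r+1)))
      (seqq C (C.tensor (C.id 1) E) E (by omega)) (by omega))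
      (seqq C (C.tensor (γ 1 1) (C.id (r+1)))
        (seqq C (C.tensor P.μ (C.id (r+1))) E (by omega)) (by omega)) :=
    seqq_hcongr (by omega) (by omega) (by omega) (by omega) HEq.rfl (E_two hC r)
  refine s2.trans ?_
  rw [← seqq_assoc hM (C.tensor (γ 1 1) (C.id (r+1))) (C.tensor P.μ (C.id (r+1))) E
    (by omega) (by omega) (by omega) (by omega)]
  rw [seqq_tensor_idr hM (s := r+1) (γ 1 1) P.μ (by omega) (by omega)]
  rw [seqq_eq_comp (γ 1 1) P.μ (by omega), P.mul_comm]
  exact (E_two hC r).symm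

/-- Merging two strands into the last one: the two orders agree. -/
theorem E_four (hC : IsStrictSymMon C γ) (q r : ℕ) :
    HEq (seqq C (Emor C γ P (q+1+r)) (C.tensor (C.id q) (Emor C γ P r)) (by omega))
        (seqq C (C.tensor (C.id (q+1)) (Emor C γ P r)) (Emor C γ P (q+r)) (by omega)) := by
  have hM := hC.toIsStrictMon
  induction q with
  | zero =>
      refine HEq.trans (HEq.trans (seqq_hcongr (by omega) (by omega) (by omega) (by omega)
        (Emor_congr (by omega)) (hunitl hM (Emor C γ P r))) (E_adj hC r)) ?_
      exact seqq_hcongr (by omega) (by omega) (by omega) (by omega)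
        (htens (by omega) (by omega) rfl rfl (hid (by omega)) HEq.rfl)
        (Emor_congr (by omega))
  | succ q IH =>
      set E := Emor C γ P r with hEdef
      -- expand E (q+1+1+r) = E ((q+1+r)+1)
      have s1 : HEq (seqq C (Emor C γ P (q+1+1+r)) (C.tensor (C.id (q+1)) E) (by omega))
          (seqq C (seqq C (C.tensor (γ 1 1) (C.id (q+1+r+1)))
              (C.tensor (C.id 1) (Emor C γ P (q+1+r))) (by omega))
            (C.tensor (C.id (q+1)) E) (by omega)) :=
        seqq_hcongr (by omega) (by omega) (by omega) (by omega)
          ((Emor_congr (by omega)).trans (E_succ hC (q+1+r))) HEq.rfl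
      refine s1.trans ?_
      rw [seqq_assoc hM (C.tensor (γ 1 1) (C.id (q+1+r+1)))
          (C.tensor (C.id 1) (Emor C γ P (q+1+r))) (C.tensor (C.id (q+1)) E)
          (by omega) (by omega) (by omega) (by omega)]
      -- inner: (1 ⊗ E(q+1+r)) ; (1_{q+1} ⊗ E) = 1 ⊗ (E(q+1+r) ; (1_q ⊗ E)) → IH
      have s2 : HEq (seqq C (C.tensor (C.id 1) (Emor C γ P (q+1+r)))
            (C.tensor (C.id (q+1)) E) (by omega))
          (seqq C (C.tensor (C.id 1) (Emor C γ P (q+1+r)))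
            (C.tensor (C.id 1) (C.tensor (C.id q) E)) (by omega)) := by
        refine seqq_hcongr (by omega) (by omega) (by omega) (by omega) HEq.rfl ?_
        refine HEq.trans (htens (by omega) (by omega) rfl rfl
          ((hid (by omega)).trans (heq_of_eq (hM.tensor_id 1 q).symm)) HEq.rfl) ?_
        exact hassoc hM (C.id 1) (C.id q) E
      have s3 : HEq (seqq C (C.tensor (C.id 1) (Emor C γ P (q+1+r)))
            (C.tensor (C.id 1) (C.tensor (C.id q) E)) (by omega))
          (seqq C (C.tensor (C.id 1) (C.tensor (C.id (q+1)) E))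
            (C.tensor (C.id 1) (Emor C γ P (q+r))) (by omega)) := by
        rw [← id_tensor_seqq hM (s := 1) (Emor C γ P (q+1+r)) (C.tensor (C.id q) E)
            (by omega) (by omega)]
        rw [← id_tensor_seqq hM (s := 1) (C.tensor (C.id (q+1)) E) (Emor C γ P (q+r))
            (by omega) (by omega)]
        exact htens rfl rfl (by omega) (by omega) HEq.rfl IH
      have s4 : HEq (seqq C (C.tensor (γ 1 1) (C.id (q+1+r+1)))
            (seqq C (C.tensor (C.id 1) (Emor C γ P (q+1+r)))
              (C.tensor (C.id (q+1)) E) (by omega)) (by omega))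
          (seqq C (C.tensor (γ 1 1) (C.id (q+1+r+1)))
            (seqq C (C.tensor (C.id 1) (C.tensor (C.id (q+1)) E))
              (C.tensor (C.id 1) (Emor C γ P (q+r))) (by omega)) (by omega)) :=
        seqq_hcongr (by omega) (by omega) (by omega) (by omega) HEq.rfl
          (s2.trans s3)
      refine s4.trans ?_
      rw [← seqq_assoc hM (C.tensor (γ 1 1) (C.id (q+1+r+1)))
          (C.tensor (C.id 1) (C.tensor (C.id (q+1)) E))
          (C.tensor (C.id 1) (Emor C γ P (q+r)))
          (by omega) (by omega) (by omega) (by omega)]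
      -- front: exchange γ11 ⊗ 1 with 1_2 ⊗ (1_q ⊗ E)
      have s5 : HEq (seqq C (C.tensor (γ 1 1) (C.id (q+1+r+1)))
            (C.tensor (C.id 1) (C.tensor (C.id (q+1)) E)) (by omega))
          (seqq C (C.tensor (C.id (1+1)) (C.tensor (C.id q) E))
            (C.tensor (γ 1 1) (C.id (q+(r+1)))) (by omega)) := by
        have a1 : HEq (C.tensor (C.id (q+1)) E) (C.tensor (C.id 1) (C.tensor (C.id q) E)) := by
          refine HEq.trans (htens (by omega) (by omega) rfl rfl
            ((hid (by omega)).trans (heq_of_eq (hM.tensor_id 1 q).symm)) HEq.rfl) ?_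
          exact hassoc hM (C.id 1) (C.id q) E
        have t1 : HEq (C.tensor (C.id 1) (C.tensor (C.id (q+1)) E))
            (C.tensor (C.id (1+1)) (C.tensor (C.id q) E)) := by
          refine HEq.trans (htens rfl rfl (by omega) (by omega) HEq.rfl a1) ?_
          refine HEq.trans (hassoc hM (C.id 1) (C.id 1) (C.tensor (C.id q) E)).symm ?_
          exact htens (by omega) (by omega) rfl rfl (heq_of_eq (hM.tensor_id 1 1)) HEq.rfl
        have t2 : HEq (seqq C (C.tensor (γ 1 1) (C.id (q+1+r+1)))
              (C.tensor (C.id 1) (C.tensor (C.id (q+1)) E)) (by omega))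
            (seqq C (C.tensor (γ 1 1) (C.id (q+(r+2))))
              (C.tensor (C.id (1+1)) (C.tensor (C.id q) E)) (by omega)) :=
          seqq_hcongr (by omega) (by omega) (by omega) (by omega)
            (htens (by omega) (by omega) (by omega) (by omega) HEq.rfl (hid (by omega))) t1
        refine t2.trans ?_
        rw [seqq_eq_comp (C.tensor (γ 1 1) (C.id (q+(r+2))))
            (C.tensor (C.id (1+1)) (C.tensor (C.id q) E)) (by omega)]
        rw [exch hM (γ 1 1) (C.tensor (C.id q) E)]
        rw [← exch' hM (γ 1 1) (C.tensor (C.id q) E)]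
        rw [← seqq_eq_comp (C.tensor (C.id (1+1)) (C.tensor (C.id q) E))
            (C.tensor (γ 1 1) (C.id (q+(r+1)))) (by omega)]
      have s6 : HEq (seqq C (seqq C (C.tensor (γ 1 1) (C.id (q+1+r+1)))
            (C.tensor (C.id 1) (C.tensor (C.id (q+1)) E)) (by omega))
            (C.tensor (C.id 1) (Emor C γ P (q+r))) (by omega))
          (seqq C (seqq C (C.tensor (C.id (1+1)) (C.tensor (C.id q) E))
            (C.tensor (γ 1 1) (C.id (q+(r+1)))) (by omega))
            (C.tensor (C.id 1) (Emor C γ P (q+r))) (by omega)) :=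
        seqq_hcongr (by omega) (by omega) (by omega) (by omega) s5 HEq.rfl
      refine s6.trans ?_
      rw [seqq_assoc hM (C.tensor (C.id (1+1)) (C.tensor (C.id q) E))
          (C.tensor (γ 1 1) (C.id (q+(r+1)))) (C.tensor (C.id 1) (Emor C γ P (q+r)))
          (by omega) (by omega) (by omega) (by omega)]
      refine seqq_hcongr (by omega) (by omega) (by omega) (by omega) ?_ ?_
      · -- 1_{1+1} ⊗ (1_q ⊗ E) ≅ 1_{q+1+1} ⊗ E
        refine HEq.trans (hassoc hM (C.id (1+1)) (C.id q) E).symm ?_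
        exact htens (by omega) (by omega) rfl rfl
          ((heq_of_eq (hM.tensor_id (1+1) q)).trans (hid (by omega))) HEq.rfl
      · -- seqq (γ11 ⊗ 1) (1 ⊗ E (q+r)) ≅ E (q+1+r)
        refine HEq.trans ?_ ((E_succ hC (q+r)).symm.trans (Emor_congr (by omega)))
        exact seqq_hcongr (by omega) (by omega) (by omega) (by omega)
          (htens (by omega) (by omega) (by omega) (by omega) HEq.rfl (hid (by omega)))
          HEq.rfl

end ELemmas5
section DLemmas

variable {C : MonCatN} {γ : ∀ m n : ℕ, C.Hom (m + n) (n + m)}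
variable {P : PoalgebraIn C γ}

theorem comp_id_tensor (hM : IsStrictMon C) {s a b c : ℕ}
    (f : C.Hom a b) (g : C.Hom b c) :
    C.comp (C.tensor (C.id s) f) (C.tensor (C.id s) g) =
      C.tensor (C.id s) (C.comp f g) := by
  rw [← hM.tensor_comp, hM.comp_id]

/-- `D` is idempotent. -/
theorem D_idem (hC : IsStrictSymMon C γ) (k : ℕ) :
    C.comp (Dmor C γ P k) (Dmor C γ P k) = Dmor C γ P k := by
  have hM := hC.toIsStrictMon
  set E := Emor C γ P k with hE
  apply eq_of_heq
  have s0 : HEq (C.comp (Dmor C γ P k) (Dmor C γ P k))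
      (seqq C (seqq C (C.tensor P.δ (C.id (k+1))) (C.tensor (C.id 1) E) (by omega))
        (seqq C (C.tensor P.δ (C.id (k+1))) (C.tensor (C.id 1) E) (by omega))
        (by omega)) := by
    refine HEq.trans (heq_of_eq (seqq_eq_comp (Dmor C γ P k) (Dmor C γ P k) rfl).symm) ?_
    exact seqq_hcongr (by omega) (by omega) (by omega) (by omega) (Dmor_heq k) (Dmor_heq k)
  refine s0.trans ?_
  rw [seqq_assoc hM (C.tensor P.δ (C.id (k+1))) (C.tensor (C.id 1) E)
      (seqq C (C.tensor P.δ (C.id (k+1))) (C.tensor (C.id 1) E) (by omega))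
      (by omega) (by omega) (by omega) (by omega)]
  rw [← seqq_assoc hM (C.tensor (C.id 1) E) (C.tensor P.δ (C.id (k+1)))
      (C.tensor (C.id 1) E) (by omega) (by omega) (by omega) (by omega)]
  rw [seqq_eq_comp (C.tensor (C.id 1) E) (C.tensor P.δ (C.id (k+1))) rfl]
  rw [exch' hM P.δ E, ← exch hM P.δ E]
  rw [← seqq_eq_comp (C.tensor P.δ (C.id (k+2))) (C.tensor (C.id 2) E) rfl]
  rw [seqq_assoc hM (C.tensor P.δ (C.id (k+2))) (C.tensor (C.id 2) E)
      (C.tensor (C.id 1) E) (by omega) (by omega) (by omega) (by omega)]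
  rw [← seqq_assoc hM (C.tensor P.δ (C.id (k+1))) (C.tensor P.δ (C.id (k+2)))
      (seqq C (C.tensor (C.id 2) E) (C.tensor (C.id 1) E) (by omega))
      (by omega) (by omega) (by omega) (by omega)]
  -- right part : (1_2 ⊗ E) ; (1_1 ⊗ E)  ≅  (1_1 ⊗ (μ ⊗ 1)) ; (1_1 ⊗ E)
  have sR : HEq (seqq C (C.tensor (C.id 2) E) (C.tensor (C.id 1) E) (by omega))
      (seqq C (C.tensor (C.id 1) (C.tensor P.μ (C.id (k+1))))
        (C.tensor (C.id 1) E) (by omega)) := by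
    have q1 : HEq (C.tensor (C.id 2) E) (C.tensor (C.id 1) (C.tensor (C.id 1) E)) := by
      refine HEq.trans (htens (by omega) (by omega) rfl rfl
        ((hid (by omega)).trans (heq_of_eq (hM.tensor_id 1 1).symm)) HEq.rfl) ?_
      exact hassoc hM (C.id 1) (C.id 1) E
    refine HEq.trans (seqq_hcongr (h₂ := by omega) (by omega) (by omega) (by omega)
      (by omega) q1 HEq.rfl) ?_
    rw [← id_tensor_seqq hM (s := 1) (C.tensor (C.id 1) E) E (by omega) (by omega)]
    refine HEq.trans (htens rfl rfl (by omega) (by omega) HEq.rfl (E_two hC k)) ?_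
    rw [id_tensor_seqq hM (s := 1) (C.tensor P.μ (C.id (k+1))) E (by omega) (by omega)]
  have s1 : HEq (seqq C (seqq C (C.tensor P.δ (C.id (k+1))) (C.tensor P.δ (C.id (k+2)))
        (by omega))
      (seqq C (C.tensor (C.id 2) E) (C.tensor (C.id 1) E) (by omega)) (by omega))
      (seqq C (seqq C (C.tensor P.δ (C.id (k+1))) (C.tensor P.δ (C.id (k+2)))
        (by omega))
      (seqq C (C.tensor (C.id 1) (C.tensor P.μ (C.id (k+1))))
        (C.tensor (C.id 1) E) (by omega)) (by omega)) :=
    seqq_hcongr (by omega) (by omega) (by omega) (by omega) HEq.rfl sR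
  refine s1.trans ?_
  -- left part : (δ ⊗ 1_{k+1}) ; (δ ⊗ 1_{k+2}) ≅ (seqq δ (δ⊗1)) ⊗ 1_{k+1}
  have sL : HEq (seqq C (C.tensor P.δ (C.id (k+1))) (C.tensor P.δ (C.id (k+2)))
        (by omega))
      (C.tensor (seqq C P.δ (C.tensor P.δ (C.id 1)) (by omega)) (C.id (k+1))) := by
    have q2 : HEq (C.tensor P.δ (C.id (k+2)))
        (C.tensor (C.tensor P.δ (C.id 1)) (C.id (k+1))) := by
      refine (HEq.trans (hassoc hM P.δ (C.id 1) (C.id (k+1))) ?_).symm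
      exact htens rfl rfl (by omega) (by omega) HEq.rfl
        ((heq_of_eq (hM.tensor_id 1 (k+1))).trans (hid (by omega)))
    refine HEq.trans (seqq_hcongr (h₂ := by omega) (by omega) (by omega) (by omega)
      (by omega) HEq.rfl q2) ?_
    rw [seqq_tensor_idr hM (s := k+1) P.δ (C.tensor P.δ (C.id 1)) (by omega) (by omega)]
  have s2 : HEq (seqq C (seqq C (C.tensor P.δ (C.id (k+1))) (C.tensor P.δ (C.id (k+2)))
        (by omega))
      (seqq C (C.tensor (C.id 1) (C.tensor P.μ (C.id (k+1))))
        (C.tensor (C.id 1) E) (by omega)) (by omega))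
      (seqq C (C.tensor (seqq C P.δ (C.tensor P.δ (C.id 1)) (by omega)) (C.id (k+1)))
      (seqq C (C.tensor (C.tensor (C.id 1) P.μ) (C.id (k+1)))
        (C.tensor (C.id 1) E) (by omega)) (by omega)) :=
    seqq_hcongr (by omega) (by omega) (by omega) (by omega) sL
      (seqq_hcongr (by omega) (by omega) (by omega) (by omega)
        (hassoc hM (C.id 1) P.μ (C.id (k+1))).symm HEq.rfl)
  refine s2.trans ?_
  rw [← seqq_assoc hM
      (C.tensor (seqq C P.δ (C.tensor P.δ (C.id 1)) (by omega)) (C.id (k+1)))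
      (C.tensor (C.tensor (C.id 1) P.μ) (C.id (k+1)))
      (C.tensor (C.id 1) E) (by omega) (by omega) (by omega) (by omega)]
  rw [seqq_tensor_idr hM (s := k+1) (seqq C P.δ (C.tensor P.δ (C.id 1)) (by omega))
      (C.tensor (C.id 1) P.μ) (by omega) (by omega)]
  -- the core computation on one strand
  have core : seqq C (seqq C P.δ (C.tensor P.δ (C.id 1)) (by omega))
      (C.tensor (C.id 1) P.μ) (by omega) = P.δ := by
    show C.comp (C.comp P.δ (C.tensor P.δ (C.id 1)))
      ((C.tensor (C.id 1) P.μ : C.Hom 3 2)) = P.δ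
    rw [P.comul_coassoc, hM.comp_assoc, comp_id_tensor hM P.δ P.μ, P.qualitative,
      hM.tensor_id]
    exact hM.comp_id P.δ
  rw [core]
  exact (Dmor_heq k).symm

end DLemmas
section DComm

variable {C : MonCatN} {γ : ∀ m n : ℕ, C.Hom (m + n) (n + m)}
variable {P : PoalgebraIn C γ}

theorem id_id_tensor (hM : IsStrictMon C) {x y z a b : ℕ} (h : z = x + y)
    (f : C.Hom a b) :
    HEq (C.tensor (C.id z) f) (C.tensor (C.id x) (C.tensor (C.id y) f)) := by
  subst h
  refine HEq.trans (htens (by omega) (by omega) rfl rfl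
    (heq_of_eq (hM.tensor_id x y).symm) HEq.rfl) ?_
  exact hassoc hM (C.id x) (C.id y) f

/-- `D` on strand 0 commutes with `D` on an inner strand. -/
theorem D_comm (hC : IsStrictSymMon C γ) (a b : ℕ) :
    C.comp (Dmor C γ P (a+1+b))
      ((C.tensor (C.id (a+1)) (Dmor C γ P b) : C.Hom (a+1+(b+2)) (a+1+(b+2)))) =
    C.comp ((C.tensor (C.id (a+1)) (Dmor C γ P b) : C.Hom (a+1+(b+2)) (a+1+(b+2))))
      (Dmor C γ P (a+1+b)) := by
  have hM := hC.toIsStrictMon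
  set g' : C.Hom (a+1+b) (a+2+b) := C.tensor (C.tensor (C.id a) P.δ) (C.id b) with hg
  -- reusable HEq facts
  have rX : HEq (C.tensor g' (C.id 1)) (C.tensor (C.id a) (C.tensor P.δ (C.id (b+1)))) := by
    refine HEq.trans (hassoc hM (C.tensor (C.id a) P.δ) (C.id b) (C.id 1)) ?_
    refine HEq.trans ?_ (hassoc hM (C.id a) P.δ (C.id (b+1)))
    exact htens rfl rfl (by omega) (by omega) HEq.rfl
      ((heq_of_eq (hM.tensor_id b 1)).trans (hid (by omega)))
  have rmid : HEq (C.tensor (C.id (a+1)) (C.tensor P.δ (C.id (b+1))))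
      (C.tensor (C.id 1) (C.tensor g' (C.id 1))) := by
    refine HEq.trans (id_id_tensor hM (x := 1) (y := a) (by omega)
      (C.tensor P.δ (C.id (b+1)))) ?_
    exact htens (by omega) (by omega) (by omega) (by omega) HEq.rfl rX.symm
  have r7a : HEq (C.tensor (C.id (a+1)) (C.tensor (C.id 1) (Emor C γ P b)))
      (C.tensor (C.id 1) (C.tensor (C.id (a+1)) (Emor C γ P b))) := by
    refine HEq.trans (hassoc hM (C.id (a+1)) (C.id 1) (Emor C γ P b)).symm ?_
    refine HEq.trans (htens (by omega) (by omega) rfl rfl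
      (heq_of_eq (hM.tensor_id (a+1) 1)) HEq.rfl) ?_
    exact id_id_tensor hM (by omega) (Emor C γ P b)
  have r5a : HEq (C.tensor (C.id 1) (C.tensor (C.id 1) (C.tensor g' (C.id 1))))
      (C.tensor (C.id 2) (C.tensor g' (C.id 1))) :=
    (id_id_tensor hM (by omega) (C.tensor g' (C.id 1))).symm
  have r8 : HEq (C.tensor (C.id 1) (C.tensor (C.id (a+1+1)) (Emor C γ P b)))
      (C.tensor (C.id 2) (C.tensor (C.id (a+1)) (Emor C γ P b))) := by
    refine HEq.trans (htens rfl rfl (by omega) (by omega) HEq.rfl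
      (id_id_tensor hM (show a+1+1 = 1+(a+1) by omega) (Emor C γ P b))) ?_
    exact (id_id_tensor hM (by omega) (C.tensor (C.id (a+1)) (Emor C γ P b))).symm
  apply eq_of_heq
  -- expand everything
  have s0 : HEq (C.comp (Dmor C γ P (a+1+b))
      ((C.tensor (C.id (a+1)) (Dmor C γ P b) : C.Hom (a+1+(b+2)) (a+1+(b+2)))))
      (seqq C (seqq C (C.tensor P.δ (C.id (a+1+b+1)))
          (C.tensor (C.id 1) (Emor C γ P (a+1+b))) (by omega))
        (seqq C (C.tensor (C.id (a+1)) (C.tensor P.δ (C.id (b+1))))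
          (C.tensor (C.id (a+1)) (C.tensor (C.id 1) (Emor C γ P b))) (by omega))
        (by omega)) := by
    refine HEq.trans (heq_of_eq (seqq_eq_comp (Dmor C γ P (a+1+b))
      ((C.tensor (C.id (a+1)) (Dmor C γ P b) : C.Hom (a+1+(b+2)) (a+1+(b+2))))
      rfl).symm) ?_
    refine seqq_hcongr (by omega) (by omega) (by omega) (by omega) (Dmor_heq (a+1+b)) ?_
    exact HEq.trans (htens rfl rfl (by omega) (by omega) HEq.rfl (Dmor_heq b))
      (heq_of_eq (id_tensor_seqq hM (s := a+1) (C.tensor P.δ (C.id (b+1)))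
        (C.tensor (C.id 1) (Emor C γ P b)) (by omega) (by omega)))
  refine s0.trans ?_
  rw [seqq_assoc hM (C.tensor P.δ (C.id (a+1+b+1)))
      (C.tensor (C.id 1) (Emor C γ P (a+1+b)))
      (seqq C (C.tensor (C.id (a+1)) (C.tensor P.δ (C.id (b+1))))
        (C.tensor (C.id (a+1)) (C.tensor (C.id 1) (Emor C γ P b))) (by omega))
      (by omega) (by omega) (by omega) (by omega)]
  rw [← seqq_assoc hM (C.tensor (C.id 1) (Emor C γ P (a+1+b)))
      (C.tensor (C.id (a+1)) (C.tensor P.δ (C.id (b+1))))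
      (C.tensor (C.id (a+1)) (C.tensor (C.id 1) (Emor C γ P b)))
      (by omega) (by omega) (by omega) (by omega)]
  -- middle : (1⊗E_K) ; (1_{a+1} ⊗ (δ⊗1)) ≅ (1⊗1⊗(g'⊗1)) ; (1⊗E_{K'})
  have sM : HEq (seqq C (C.tensor (C.id 1) (Emor C γ P (a+1+b)))
        (C.tensor (C.id (a+1)) (C.tensor P.δ (C.id (b+1)))) (by omega))
      (seqq C (C.tensor (C.id 1) (C.tensor (C.id 1) (C.tensor g' (C.id 1))))
        (C.tensor (C.id 1) (Emor C γ P (a+2+b))) (by omega)) := by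
    refine HEq.trans (b := seqq C (C.tensor (C.id 1) (Emor C γ P (a+1+b)))
        (C.tensor (C.id 1) (C.tensor g' (C.id 1))) (by omega))
      (seqq_hcongr (h₂ := by omega) (by omega) (by omega) (by omega)
      (by omega) HEq.rfl rmid) ?_
    rw [← id_tensor_seqq hM (s := 1) (Emor C γ P (a+1+b)) (C.tensor g' (C.id 1))
        (by omega) (by omega)]
    refine HEq.trans (htens rfl rfl (by omega) (by omega) HEq.rfl
      (E_nat (P := P) hC g').symm) ?_
    rw [id_tensor_seqq hM (s := 1) (C.tensor (C.id 1) (C.tensor g' (C.id 1)))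
        (Emor C γ P (a+2+b)) (by omega) (by omega)]
  have sM' : HEq (seqq C (seqq C (C.tensor (C.id 1) (Emor C γ P (a+1+b)))
        (C.tensor (C.id (a+1)) (C.tensor P.δ (C.id (b+1)))) (by omega))
        (C.tensor (C.id (a+1)) (C.tensor (C.id 1) (Emor C γ P b))) (by omega))
      (seqq C (seqq C (C.tensor (C.id 1) (C.tensor (C.id 1) (C.tensor g' (C.id 1))))
        (C.tensor (C.id 1) (Emor C γ P (a+2+b))) (by omega))
        (C.tensor (C.id (a+1)) (C.tensor (C.id 1) (Emor C γ P b))) (by omega)) :=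
    seqq_hcongr (by omega) (by omega) (by omega) (by omega) sM HEq.rfl
  have s1 : HEq (seqq C (C.tensor P.δ (C.id (a+1+b+1)))
        (seqq C (seqq C (C.tensor (C.id 1) (Emor C γ P (a+1+b)))
          (C.tensor (C.id (a+1)) (C.tensor P.δ (C.id (b+1)))) (by omega))
          (C.tensor (C.id (a+1)) (C.tensor (C.id 1) (Emor C γ P b))) (by omega))
        (by omega))
      (seqq C (C.tensor P.δ (C.id (a+1+b+1)))
        (seqq C (seqq C (C.tensor (C.id 1) (C.tensor (C.id 1) (C.tensor g' (C.id 1))))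
          (C.tensor (C.id 1) (Emor C γ P (a+2+b))) (by omega))
          (C.tensor (C.id (a+1)) (C.tensor (C.id 1) (Emor C γ P b))) (by omega))
        (by omega)) :=
    seqq_hcongr (by omega) (by omega) (by omega) (by omega) HEq.rfl sM'
  refine s1.trans ?_
  rw [seqq_assoc hM (C.tensor (C.id 1) (C.tensor (C.id 1) (C.tensor g' (C.id 1))))
      (C.tensor (C.id 1) (Emor C γ P (a+2+b)))
      (C.tensor (C.id (a+1)) (C.tensor (C.id 1) (Emor C γ P b)))
      (by omega) (by omega) (by omega) (by omega)]
  rw [← seqq_assoc hM (C.tensor P.δ (C.id (a+1+b+1)))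
      (C.tensor (C.id 1) (C.tensor (C.id 1) (C.tensor g' (C.id 1))))
      (seqq C (C.tensor (C.id 1) (Emor C γ P (a+2+b)))
        (C.tensor (C.id (a+1)) (C.tensor (C.id 1) (Emor C γ P b))) (by omega))
      (by omega) (by omega) (by omega) (by omega)]
  -- front : δ slides right past g'⊗1
  have sF : HEq (seqq C (C.tensor P.δ (C.id (a+1+b+1)))
        (C.tensor (C.id 1) (C.tensor (C.id 1) (C.tensor g' (C.id 1)))) (by omega))
      (seqq C (C.tensor (C.id 1) (C.tensor g' (C.id 1)))
        (C.tensor P.δ (C.id (a+2+b+1))) (by omega)) := by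
    refine HEq.trans (b := seqq C (C.tensor P.δ (C.id (a+1+b+1)))
        (C.tensor (C.id 2) (C.tensor g' (C.id 1))) (by omega))
      (seqq_hcongr (h₂ := by omega) (by omega) (by omega) (by omega)
      (by omega) HEq.rfl r5a) ?_
    rw [seqq_eq_comp (C.tensor P.δ (C.id (a+1+b+1)))
        (C.tensor (C.id 2) (C.tensor g' (C.id 1))) (by omega)]
    rw [exch hM P.δ (C.tensor g' (C.id 1)), ← exch' hM P.δ (C.tensor g' (C.id 1)),
        ← seqq_eq_comp (C.tensor (C.id 1) (C.tensor g' (C.id 1)))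
          (C.tensor P.δ (C.id (a+2+b+1))) (by omega)]
  have sF' : HEq (seqq C (seqq C (C.tensor P.δ (C.id (a+1+b+1)))
        (C.tensor (C.id 1) (C.tensor (C.id 1) (C.tensor g' (C.id 1)))) (by omega))
        (seqq C (C.tensor (C.id 1) (Emor C γ P (a+2+b)))
          (C.tensor (C.id (a+1)) (C.tensor (C.id 1) (Emor C γ P b))) (by omega))
        (by omega))
      (seqq C (seqq C (C.tensor (C.id 1) (C.tensor g' (C.id 1)))
        (C.tensor P.δ (C.id (a+2+b+1))) (by omega))
        (seqq C (C.tensor (C.id 1) (Emor C γ P (a+2+b)))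
          (C.tensor (C.id (a+1)) (C.tensor (C.id 1) (Emor C γ P b))) (by omega))
        (by omega)) :=
    seqq_hcongr (by omega) (by omega) (by omega) (by omega) sF HEq.rfl
  refine sF'.trans ?_
  rw [seqq_assoc hM (C.tensor (C.id 1) (C.tensor g' (C.id 1)))
      (C.tensor P.δ (C.id (a+2+b+1)))
      (seqq C (C.tensor (C.id 1) (Emor C γ P (a+2+b)))
        (C.tensor (C.id (a+1)) (C.tensor (C.id 1) (Emor C γ P b))) (by omega))
      (by omega) (by omega) (by omega) (by omega)]
  -- back : double merge commuted by E_four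
  have sB : HEq (seqq C (C.tensor (C.id 1) (Emor C γ P (a+2+b)))
        (C.tensor (C.id (a+1)) (C.tensor (C.id 1) (Emor C γ P b))) (by omega))
      (seqq C (C.tensor (C.id 1) (C.tensor (C.id (a+1+1)) (Emor C γ P b)))
        (C.tensor (C.id 1) (Emor C γ P (a+1+b))) (by omega)) := by
    refine HEq.trans (b := seqq C (C.tensor (C.id 1) (Emor C γ P (a+2+b)))
        (C.tensor (C.id 1) (C.tensor (C.id (a+1)) (Emor C γ P b))) (by omega))
      (seqq_hcongr (h₂ := by omega) (by omega) (by omega) (by omega)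
      (by omega) HEq.rfl r7a) ?_
    rw [← id_tensor_seqq hM (s := 1) (Emor C γ P (a+2+b))
        (C.tensor (C.id (a+1)) (Emor C γ P b)) (by omega) (by omega)]
    have eF : HEq (seqq C (Emor C γ P (a+2+b))
          (C.tensor (C.id (a+1)) (Emor C γ P b)) (by omega))
        (seqq C (C.tensor (C.id (a+1+1)) (Emor C γ P b)) (Emor C γ P (a+1+b))
          (by omega)) := E_four hC (a+1) b
    refine HEq.trans (htens rfl rfl (by omega) (by omega) HEq.rfl eF) ?_
    rw [id_tensor_seqq hM (s := 1) (C.tensor (C.id (a+1+1)) (Emor C γ P b))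
        (Emor C γ P (a+1+b)) (by omega) (by omega)]
  have sB' : HEq (seqq C (C.tensor P.δ (C.id (a+2+b+1)))
        (seqq C (C.tensor (C.id 1) (Emor C γ P (a+2+b)))
          (C.tensor (C.id (a+1)) (C.tensor (C.id 1) (Emor C γ P b))) (by omega))
        (by omega))
      (seqq C (C.tensor P.δ (C.id (a+2+b+1)))
        (seqq C (C.tensor (C.id 1) (C.tensor (C.id (a+1+1)) (Emor C γ P b)))
          (C.tensor (C.id 1) (Emor C γ P (a+1+b))) (by omega))
        (by omega)) :=
    seqq_hcongr (by omega) (by omega) (by omega) (by omega) HEq.rfl sB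
  have s2 : HEq (seqq C (C.tensor (C.id 1) (C.tensor g' (C.id 1)))
        (seqq C (C.tensor P.δ (C.id (a+2+b+1)))
          (seqq C (C.tensor (C.id 1) (Emor C γ P (a+2+b)))
            (C.tensor (C.id (a+1)) (C.tensor (C.id 1) (Emor C γ P b))) (by omega))
          (by omega))
        (by omega))
      (seqq C (C.tensor (C.id 1) (C.tensor g' (C.id 1)))
        (seqq C (C.tensor P.δ (C.id (a+2+b+1)))
          (seqq C (C.tensor (C.id 1) (C.tensor (C.id (a+1+1)) (Emor C γ P b)))
            (C.tensor (C.id 1) (Emor C γ P (a+1+b))) (by omega))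
          (by omega))
        (by omega)) :=
    seqq_hcongr (by omega) (by omega) (by omega) (by omega) HEq.rfl sB'
  refine s2.trans ?_
  rw [← seqq_assoc hM (C.tensor P.δ (C.id (a+2+b+1)))
      (C.tensor (C.id 1) (C.tensor (C.id (a+1+1)) (Emor C γ P b)))
      (C.tensor (C.id 1) (Emor C γ P (a+1+b)))
      (by omega) (by omega) (by omega) (by omega)]
  -- exchange δ with the 1_{a+1} ⊗ E_b block
  have sX : HEq (seqq C (C.tensor P.δ (C.id (a+2+b+1)))
        (C.tensor (C.id 1) (C.tensor (C.id (a+1+1)) (Emor C γ P b))) (by omega))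
      (seqq C (C.tensor (C.id 1) (C.tensor (C.id (a+1)) (Emor C γ P b)))
        (C.tensor P.δ (C.id (a+1+(b+1)))) (by omega)) := by
    refine HEq.trans (b := seqq C (C.tensor P.δ (C.id (a+1+(b+2))))
        (C.tensor (C.id 2) (C.tensor (C.id (a+1)) (Emor C γ P b))) (by omega))
      (seqq_hcongr (h₂ := by omega) (by omega) (by omega) (by omega)
      (by omega) (htens (by omega) (by omega) (by omega) (by omega) HEq.rfl
        (hid (by omega))) r8) ?_
    rw [seqq_eq_comp (C.tensor P.δ (C.id (a+1+(b+2))))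
        (C.tensor (C.id 2) (C.tensor (C.id (a+1)) (Emor C γ P b))) (by omega)]
    rw [exch hM P.δ (C.tensor (C.id (a+1)) (Emor C γ P b)),
        ← exch' hM P.δ (C.tensor (C.id (a+1)) (Emor C γ P b)),
        ← seqq_eq_comp (C.tensor (C.id 1) (C.tensor (C.id (a+1)) (Emor C γ P b)))
          (C.tensor P.δ (C.id (a+1+(b+1)))) (by omega)]
  have sX' : HEq (seqq C (C.tensor (C.id 1) (C.tensor g' (C.id 1)))
        (seqq C (seqq C (C.tensor P.δ (C.id (a+2+b+1)))
          (C.tensor (C.id 1) (C.tensor (C.id (a+1+1)) (Emor C γ P b))) (by omega))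
          (C.tensor (C.id 1) (Emor C γ P (a+1+b))) (by omega))
        (by omega))
      (seqq C (C.tensor (C.id 1) (C.tensor g' (C.id 1)))
        (seqq C (seqq C (C.tensor (C.id 1) (C.tensor (C.id (a+1)) (Emor C γ P b)))
          (C.tensor P.δ (C.id (a+1+(b+1)))) (by omega))
          (C.tensor (C.id 1) (Emor C γ P (a+1+b))) (by omega))
        (by omega)) :=
    seqq_hcongr (by omega) (by omega) (by omega) (by omega) HEq.rfl
      (seqq_hcongr (by omega) (by omega) (by omega) (by omega) sX HEq.rfl)
  refine sX'.trans ?_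
  rw [seqq_assoc hM (C.tensor (C.id 1) (C.tensor (C.id (a+1)) (Emor C γ P b)))
      (C.tensor P.δ (C.id (a+1+(b+1))))
      (C.tensor (C.id 1) (Emor C γ P (a+1+b)))
      (by omega) (by omega) (by omega) (by omega)]
  rw [← seqq_assoc hM (C.tensor (C.id 1) (C.tensor g' (C.id 1)))
      (C.tensor (C.id 1) (C.tensor (C.id (a+1)) (Emor C γ P b)))
      (seqq C (C.tensor P.δ (C.id (a+1+(b+1))))
        (C.tensor (C.id 1) (Emor C γ P (a+1+b))) (by omega))
      (by omega) (by omega) (by omega) (by omega)]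
  -- final : identify the two factors
  have c1 : HEq (seqq C (C.tensor (C.id 1) (C.tensor g' (C.id 1)))
        (C.tensor (C.id 1) (C.tensor (C.id (a+1)) (Emor C γ P b))) (by omega))
      (C.tensor (C.id (a+1)) (Dmor C γ P b)) := by
    refine HEq.trans (b := seqq C (C.tensor (C.id (a+1)) (C.tensor P.δ (C.id (b+1))))
        (C.tensor (C.id (a+1)) (C.tensor (C.id 1) (Emor C γ P b))) (by omega))
      (seqq_hcongr (h₂ := by omega) (by omega) (by omega) (by omega)
      (by omega) rmid.symm r7a.symm) ?_
    rw [← id_tensor_seqq hM (s := a+1) (C.tensor P.δ (C.id (b+1)))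
        (C.tensor (C.id 1) (Emor C γ P b)) (by omega) (by omega)]
    exact htens rfl rfl (by omega) (by omega) HEq.rfl (Dmor_heq b).symm
  have c2 : HEq (seqq C (C.tensor P.δ (C.id (a+1+(b+1))))
        (C.tensor (C.id 1) (Emor C γ P (a+1+b))) (by omega))
      (Dmor C γ P (a+1+b)) := by
    refine HEq.trans (b := seqq C (C.tensor P.δ (C.id (a+1+b+1)))
        (C.tensor (C.id 1) (Emor C γ P (a+1+b))) (by omega))
      (seqq_hcongr (h₂ := by omega) (by omega) (by omega) (by omega)
      (by omega) (htens (by omega) (by omega) (by omega) (by omega) HEq.rfl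
        (hid (by omega))) HEq.rfl) ?_
    exact (Dmor_heq (a+1+b)).symm
  refine HEq.trans (b := seqq C
      ((C.tensor (C.id (a+1)) (Dmor C γ P b) : C.Hom (a+1+(b+2)) (a+1+(b+2))))
      (Dmor C γ P (a+1+b)) (by omega))
    (seqq_hcongr (h₂ := by omega) (by omega) (by omega) (by omega)
    (by omega) c1 c2) ?_
  exact heq_of_eq (seqq_eq_comp
    ((C.tensor (C.id (a+1)) (Dmor C γ P b) : C.Hom (a+1+(b+2)) (a+1+(b+2))))
    (Dmor C γ P (a+1+b)) rfl)

end DComm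
section Final

variable {C : MonCatN} {γ : ∀ m n : ℕ, C.Hom (m + n) (n + m)}
variable {P : PoalgebraIn C γ}

theorem Wd_congr {n n' i : ℕ} (h : n = n') :
    HEq (Wd C γ P n i) (Wd C γ P n' i) := by subst h; rfl

theorem Wd_heq (hC : IsStrictSymMon C γ) (i k : ℕ) :
    HEq (Wd C γ P (i+1+k) i) (C.tensor (C.id i) (Dmor C γ P k)) := by
  have hM := hC.toIsStrictMon
  rw [Wd, dif_pos (show i < i+1+k by omega)]
  -- expand to seqq form
  have t0 : HEq
      (C.comp
        (C.cst (by omega) (by omega)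
          (C.tensor (C.id i) (C.tensor P.δ (C.id (i+1+k-i)))) :
            C.Hom (i+1+k+1) (i+(2+(i+1+k-i))))
        (C.comp
          (C.cst (by omega) (by omega)
            (C.tensor (C.id (i+1)) (C.tensor (γ 1 (i+1+k-i-1)) (C.id 1))) :
              C.Hom (i+(2+(i+1+k-i))) (i+1+k+2))
          (C.tensor (C.id (i+1+k)) P.μ)))
      (seqq C (C.tensor (C.id i) (C.tensor P.δ (C.id (i+1+k-i))))
        (seqq C (C.tensor (C.id (i+1)) (C.tensor (γ 1 (i+1+k-i-1)) (C.id 1)))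
          (C.tensor (C.id (i+1+k)) P.μ) (by omega))
        (by omega)) := by
    refine HEq.trans (hcomp_seqq' _ _ _ _ (by omega)) ?_
    exact seqq_hcongr (by omega) (by omega) (by omega) (by omega) HEq.rfl
      (hcomp_seqq' _ _ _ _ (by omega))
  refine t0.trans ?_
  -- convert each factor to subtraction-free form
  have f1 : HEq (C.tensor (C.id i) (C.tensor P.δ (C.id (i+1+k-i))))
      (C.tensor (C.id i) (C.tensor P.δ (C.id (k+1)))) :=
    htens rfl rfl (by omega) (by omega) HEq.rfl
      (htens (by omega) (by omega) (by omega) (by omega) HEq.rfl (hid (by omega)))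
  have f2 : HEq (C.tensor (C.id (i+1)) (C.tensor (γ 1 (i+1+k-i-1)) (C.id 1)))
      (C.tensor (C.id i) (C.tensor (C.id 1) (C.tensor (γ 1 k) (C.id 1)))) := by
    refine HEq.trans (b := C.tensor (C.id (i+1)) (C.tensor (γ 1 k) (C.id 1)))
      (htens rfl rfl (by omega) (by omega) HEq.rfl
      (htens (by omega) (by omega) (by omega) (by omega) (gcongr rfl (by omega))
        HEq.rfl)) ?_
    exact id_id_tensor hM (x := i) (y := 1) (by omega) (C.tensor (γ 1 k) (C.id 1))
  have f3 : HEq (C.tensor (C.id (i+1+k)) P.μ)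
      (C.tensor (C.id i) (C.tensor (C.id 1) (C.tensor (C.id k) P.μ))) := by
    refine HEq.trans (id_id_tensor hM (x := i) (y := 1+k) (by omega) P.μ) ?_
    exact htens rfl rfl (by omega) (by omega) HEq.rfl
      (id_id_tensor hM (x := 1) (y := k) (by omega) P.μ)
  have t1 : HEq (seqq C (C.tensor (C.id i) (C.tensor P.δ (C.id (i+1+k-i))))
        (seqq C (C.tensor (C.id (i+1)) (C.tensor (γ 1 (i+1+k-i-1)) (C.id 1)))
          (C.tensor (C.id (i+1+k)) P.μ) (by omega))
        (by omega))
      (seqq C (C.tensor (C.id i) (C.tensor P.δ (C.id (k+1))))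
        (seqq C (C.tensor (C.id i) (C.tensor (C.id 1) (C.tensor (γ 1 k) (C.id 1))))
          (C.tensor (C.id i) (C.tensor (C.id 1) (C.tensor (C.id k) P.μ))) (by omega))
        (by omega)) :=
    seqq_hcongr (by omega) (by omega) (by omega) (by omega) f1
      (seqq_hcongr (by omega) (by omega) (by omega) (by omega) f2 f3)
  refine t1.trans ?_
  -- reassemble the target
  have t2 : HEq (C.tensor (C.id i) (Dmor C γ P k))
      (seqq C (C.tensor (C.id i) (C.tensor P.δ (C.id (k+1))))
        (seqq C (C.tensor (C.id i) (C.tensor (C.id 1) (C.tensor (γ 1 k) (C.id 1))))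
          (C.tensor (C.id i) (C.tensor (C.id 1) (C.tensor (C.id k) P.μ))) (by omega))
        (by omega)) := by
    have u1 : HEq (C.tensor (C.id 1) (Emor C γ P k))
        (seqq C (C.tensor (C.id 1) (C.tensor (γ 1 k) (C.id 1)))
          (C.tensor (C.id 1) (C.tensor (C.id k) P.μ)) (by omega)) := by
      refine HEq.trans (htens rfl rfl (by omega) (by omega) HEq.rfl (Emor_heq k)) ?_
      rw [id_tensor_seqq hM (s := 1) (C.tensor (γ 1 k) (C.id 1))
        (C.tensor (C.id k) P.μ) (by omega) (by omega)]
    have u2 : HEq (C.tensor (C.id i) (Dmor C γ P k))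
        (seqq C (C.tensor (C.id i) (C.tensor P.δ (C.id (k+1))))
          (C.tensor (C.id i)
            (seqq C (C.tensor (C.id 1) (C.tensor (γ 1 k) (C.id 1)))
              (C.tensor (C.id 1) (C.tensor (C.id k) P.μ)) (by omega)))
          (by omega)) := by
      refine HEq.trans (b := C.tensor (C.id i)
          (seqq C (C.tensor P.δ (C.id (k+1)))
            (seqq C (C.tensor (C.id 1) (C.tensor (γ 1 k) (C.id 1)))
              (C.tensor (C.id 1) (C.tensor (C.id k) P.μ)) (by omega)) (by omega)))
        (htens rfl rfl (by omega) (by omega) HEq.rfl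
        ((Dmor_heq k).trans
          (seqq_hcongr (h₂ := by omega) (by omega) (by omega) (by omega) (by omega)
            HEq.rfl u1))) ?_
      rw [id_tensor_seqq hM (s := i) (C.tensor P.δ (C.id (k+1)))
        (seqq C (C.tensor (C.id 1) (C.tensor (γ 1 k) (C.id 1)))
          (C.tensor (C.id 1) (C.tensor (C.id k) P.μ)) (by omega)) (by omega) (by omega)]
    refine u2.trans ?_
    refine seqq_hcongr (h₂ := by omega) (by omega) (by omega) (by omega) (by omega)
      HEq.rfl ?_
    rw [id_tensor_seqq hM (s := i) (C.tensor (C.id 1) (C.tensor (γ 1 k) (C.id 1)))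
      (C.tensor (C.id 1) (C.tensor (C.id k) P.μ)) (by omega) (by omega)]
  exact t2.symm

theorem W_comm_aux (hC : IsStrictSymMon C γ) (i a b : ℕ) :
    C.comp (Wd C γ P (i+1+a+1+b) i) (Wd C γ P (i+1+a+1+b) (i+1+a)) =
    C.comp (Wd C γ P (i+1+a+1+b) (i+1+a)) (Wd C γ P (i+1+a+1+b) i) := by
  have hM := hC.toIsStrictMon
  have w1 : HEq (Wd C γ P (i+1+a+1+b) i) (C.tensor (C.id i) (Dmor C γ P (a+1+b))) :=
    (Wd_congr (by omega)).trans (Wd_heq hC i (a+1+b))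
  have w2 : HEq (Wd C γ P (i+1+a+1+b) (i+1+a))
      (C.tensor (C.id i)
        ((C.tensor (C.id (a+1)) (Dmor C γ P b) : C.Hom (a+1+(b+2)) (a+1+(b+2))))) :=
    (Wd_heq hC (i+1+a) b).trans
      (id_id_tensor hM (x := i) (y := a+1) (by omega) (Dmor C γ P b))
  apply eq_of_heq
  refine HEq.trans (hcomp (by omega) (by omega) (by omega) w1 w2) ?_
  refine HEq.trans ?_ (hcomp (by omega) (by omega) (by omega) w2 w1).symm
  rw [comp_id_tensor hM (Dmor C γ P (a+1+b))
      ((C.tensor (C.id (a+1)) (Dmor C γ P b) : C.Hom (a+1+(b+2)) (a+1+(b+2)))),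
    comp_id_tensor hM
      ((C.tensor (C.id (a+1)) (Dmor C γ P b) : C.Hom (a+1+(b+2)) (a+1+(b+2))))
      (Dmor C γ P (a+1+b)),
    D_comm hC a b]

end Final
/-- the morphisms `W^n_i` pairwise commute and are idempotent. -/
theorem W_commute_and_idempotent
    (C : MonCatN) (γ : ∀ m n : ℕ, C.Hom (m + n) (n + m))
    (hC : IsStrictSymMon C γ) (P : PoalgebraIn C γ)
    (n i j : ℕ) (hi : i < n) (hj : j < n) :
    C.comp (Wd C γ P n i) (Wd C γ P n j) = C.comp (Wd C γ P n j) (Wd C γ P n i) ∧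
    C.comp (Wd C γ P n i) (Wd C γ P n i) = Wd C γ P n i := by
  have hM := hC.toIsStrictMon
  constructor
  · rcases lt_trichotomy i j with h | h | h
    · obtain ⟨a, rfl⟩ : ∃ a, j = i + 1 + a := ⟨j - i - 1, by omega⟩
      obtain ⟨b, rfl⟩ : ∃ b, n = i + 1 + a + 1 + b := ⟨n - (i+1+a) - 1, by omega⟩
      exact W_comm_aux hC i a b
    · subst h; rfl
    · obtain ⟨a, rfl⟩ : ∃ a, i = j + 1 + a := ⟨i - j - 1, by omega⟩
      obtain ⟨b, rfl⟩ : ∃ b, n = j + 1 + a + 1 + b := ⟨n - (j+1+a) - 1, by omega⟩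
      exact (W_comm_aux hC j a b).symm
  · obtain ⟨k, rfl⟩ : ∃ k, n = i + 1 + k := ⟨n - i - 1, by omega⟩
    apply eq_of_heq
    refine HEq.trans (hcomp (by omega) (by omega) (by omega)
      (Wd_heq hC i k) (Wd_heq hC i k)) ?_
    rw [comp_id_tensor hM (Dmor C γ P k) (Dmor C γ P k), D_idem hC k]
    exact (Wd_heq hC i k).symm
end

section
/- In a symmetric monoidal category with a poalgebra P, with H^n := id_n ⊗ η : n → n+1, S^n := id_n ⊗ σ : n+1 → n+1, and X^n_I := S^n ∘ W^n_I ∘ H^n for I ⊆ [n], the exchange identity X^{n+1}_J ∘ X^n_I = G^n ∘ X^{n+1}_I ∘ X^n_J holds for all I, J ⊆ [n], where G^n = id_n ⊗ γ_{1,1} and W^n_I is the composite of the idempotent commuting morphisms W^n_i for i ∈ I. -/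
namespace MonCatN

/-- Morphisms of `C` bundled with their source and target, together with a formal undefined
morphism `none` between any two objects, the result of composing non-matching morphisms.
Composition and tensor product are then total and associative on the nose, so string-diagram
computations become rewriting without transports along equalities of objects. -/
structure PMor (C : MonCatN) where
  src : ℕ
  tgt : ℕ
  hom : Option (C.Hom src tgt)

variable {C : MonCatN}

def toPMor {a b : ℕ} (f : C.Hom a b) : C.PMor := ⟨a, b, some f⟩

instance {a b : ℕ} : CoeOut (C.Hom a b) C.PMor := ⟨toPMor⟩

namespace PMor

def id (n : ℕ) : C.PMor := C.toPMor (C.id n)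

def comp (x y : C.PMor) : C.PMor where
  src := x.src
  tgt := y.tgt
  hom := if h : x.tgt = y.src then
      Option.map₂ (fun f g => C.comp f (C.cst h.symm rfl g)) x.hom y.hom else none

def tensor (x y : C.PMor) : C.PMor :=
  ⟨x.src + y.src, x.tgt + y.tgt, Option.map₂ C.tensor x.hom y.hom⟩

end PMor

local infixr:70 " ⊗ " => PMor.tensor
local infixr:60 " ⨾ " => PMor.comp
local notation "𝕀" => PMor.id

theorem toPMor_injective {a b : ℕ} : Function.Injective (C.toPMor (a := a) (b := b)) := by
  intro f g h
  simpa [toPMor] using h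

@[simp] theorem cst_rfl {a b : ℕ} (f : C.Hom a b) : C.cst rfl rfl f = f := rfl

@[simp] theorem toPMor_cst {a b c d : ℕ} (h₁ : a = c) (h₂ : b = d) (f : C.Hom a b) :
    C.toPMor (C.cst h₁ h₂ f) = C.toPMor f := by
  subst h₁ h₂; rfl

theorem toPMor_comp {a b c : ℕ} (f : C.Hom a b) (g : C.Hom b c) :
    C.toPMor (C.comp f g) = (f : C.PMor) ⨾ g := by
  simp [PMor.comp, toPMor]

theorem toPMor_tensor {a b c d : ℕ} (f : C.Hom a b) (g : C.Hom c d) :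
    C.toPMor (C.tensor f g) = (f : C.PMor) ⊗ g := rfl

theorem toPMor_id (n : ℕ) : C.toPMor (C.id n) = 𝕀 n := rfl

theorem toPMor_foldl {n : ℕ} (f : ℕ → C.Hom n n) (l : List ℕ) (a : C.Hom n n) :
    C.toPMor (l.foldl (fun g i => C.comp g (f i)) a) =
      l.foldl (fun y i => y ⨾ f i) (C.toPMor a) := by
  induction l generalizing a with
  | nil => rfl
  | cons i l ih => simp only [List.foldl_cons, ih, toPMor_comp]

namespace PMor

@[simp] theorem src_comp (x y : C.PMor) : (x ⨾ y).src = x.src := rfl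
@[simp] theorem tgt_comp (x y : C.PMor) : (x ⨾ y).tgt = y.tgt := rfl
@[simp] theorem src_tensor (x y : C.PMor) : (x ⊗ y).src = x.src + y.src := rfl
@[simp] theorem tgt_tensor (x y : C.PMor) : (x ⊗ y).tgt = x.tgt + y.tgt := rfl
@[simp] theorem src_id (n : ℕ) : (𝕀 n : C.PMor).src = n := rfl
@[simp] theorem tgt_id (n : ℕ) : (𝕀 n : C.PMor).tgt = n := rfl
@[simp] theorem src_toPMor {a b : ℕ} (f : C.Hom a b) : (f : C.PMor).src = a := rfl
@[simp] theorem tgt_toPMor {a b : ℕ} (f : C.Hom a b) : (f : C.PMor).tgt = b := rfl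

theorem mk_none_eq {a b c d : ℕ} (h₁ : a = c) (h₂ : b = d) :
    (⟨a, b, none⟩ : C.PMor) = ⟨c, d, none⟩ := by
  subst h₁ h₂; rfl

section StrictMonoidal

variable (hC : IsStrictMon C)
include hC

theorem comp_assoc (x y z : C.PMor) : (x ⨾ y) ⨾ z = x ⨾ y ⨾ z := by
  obtain ⟨a, b, f⟩ := x; obtain ⟨b', c, g⟩ := y; obtain ⟨c', d, k⟩ := z
  by_cases h₁ : b = b'
  · subst h₁
    by_cases h₂ : c = c'
    · subst h₂
      cases f <;> cases g <;> cases k <;> simp [comp, hC.comp_assoc]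
    · simp [comp, h₂]
  · simp [comp, h₁]

theorem reassoc {x y x' y' : C.PMor} (h : x ⨾ y = x' ⨾ y') (z : C.PMor) :
    x ⨾ y ⨾ z = x' ⨾ y' ⨾ z := by
  rw [← comp_assoc hC, h, comp_assoc hC]

theorem id_comp {n : ℕ} {x : C.PMor} (h : x.src = n) : 𝕀 n ⨾ x = x := by
  obtain ⟨a, b, _ | f⟩ := x <;> simp only at h <;> subst h <;>
    simp [comp, PMor.id, toPMor, hC.id_comp]

theorem comp_id {n : ℕ} {x : C.PMor} (h : x.tgt = n) : x ⨾ 𝕀 n = x := by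
  obtain ⟨a, b, _ | f⟩ := x <;> simp only at h <;> subst h <;>
    simp [comp, PMor.id, toPMor, hC.comp_id]

theorem id_comp_id (m : ℕ) : (𝕀 m ⨾ 𝕀 m : C.PMor) = 𝕀 m := id_comp hC rfl

theorem tensor_assoc (x y z : C.PMor) : (x ⊗ y) ⊗ z = x ⊗ y ⊗ z := by
  obtain ⟨a, b, _ | f⟩ := x <;> obtain ⟨a', b', _ | g⟩ := y <;> obtain ⟨a'', b'', _ | k⟩ := z <;>
    simp only [tensor, Option.map₂_none_left, Option.map₂_none_right, Option.map₂_some_some]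
  all_goals first
    | exact mk_none_eq (Nat.add_assoc _ _ _) (Nat.add_assoc _ _ _)
    | rw [hC.tensor_assoc]; exact toPMor_cst _ _ _

theorem id_tensor_id (m n : ℕ) : (𝕀 m ⊗ 𝕀 n : C.PMor) = 𝕀 (m + n) := by
  simp [PMor.id, toPMor, tensor, hC.tensor_id]

theorem id_tensor_id_tensor (m n : ℕ) (x : C.PMor) : 𝕀 m ⊗ 𝕀 n ⊗ x = 𝕀 (m + n) ⊗ x := by
  rw [← tensor_assoc hC, id_tensor_id hC]

theorem id_zero_tensor (x : C.PMor) : 𝕀 0 ⊗ x = x := by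
  obtain ⟨a, b, _ | f⟩ := x
  · exact mk_none_eq (Nat.zero_add _) (Nat.zero_add _)
  · simp only [PMor.id, toPMor, tensor, Option.map₂_some_some]
    rw [hC.tensor_unit_l]; exact toPMor_cst _ _ _

/-- Either matching condition suffices: when the targets of `x ⊗ y` and the sources of
`x' ⊗ y'` add up differently, both sides are undefined. -/
theorem tensor_comp_tensor {x y x' y' : C.PMor} (h : x.tgt = x'.src ∨ y.tgt = y'.src) :
    (x ⊗ y) ⨾ (x' ⊗ y') = (x ⨾ x') ⊗ (y ⨾ y') := by
  obtain ⟨a, b, f⟩ := x; obtain ⟨c, d, g⟩ := y; obtain ⟨a', b', f'⟩ := x'; obtain ⟨c', d', g'⟩ := y'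
  simp only at h
  by_cases h₁ : b = a' ∧ d = c'
  · obtain ⟨rfl, rfl⟩ := h₁
    cases f <;> cases g <;> cases f' <;> cases g' <;> simp [comp, tensor, hC.tensor_comp]
  · have hs : b + d ≠ a' + c' := by omega
    rcases not_and_or.mp h₁ with h₁ | h₁ <;> simp [comp, tensor, hs, h₁]

theorem whiskerLeft_comp (m : ℕ) (x y : C.PMor) : 𝕀 m ⊗ (x ⨾ y) = (𝕀 m ⊗ x) ⨾ (𝕀 m ⊗ y) := by
  rw [tensor_comp_tensor hC (Or.inl rfl), id_comp_id hC]

theorem comp_whiskerRight (m : ℕ) (x y : C.PMor) : (x ⨾ y) ⊗ 𝕀 m = (x ⊗ 𝕀 m) ⨾ (y ⊗ 𝕀 m) := by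
  rw [tensor_comp_tensor hC (Or.inr rfl), id_comp_id hC]

theorem tensor_def (x y : C.PMor) : x ⊗ y = (x ⊗ 𝕀 y.src) ⨾ (𝕀 x.tgt ⊗ y) := by
  rw [tensor_comp_tensor hC (Or.inl rfl), comp_id hC rfl, id_comp hC rfl]

theorem tensor_def' (x y : C.PMor) : x ⊗ y = (𝕀 x.src ⊗ y) ⨾ (x ⊗ 𝕀 y.tgt) := by
  rw [tensor_comp_tensor hC (Or.inl rfl), comp_id hC rfl, id_comp hC rfl]

theorem whisker_exchange (x y : C.PMor) :
    (x ⊗ 𝕀 y.src) ⨾ (𝕀 x.tgt ⊗ y) = (𝕀 x.src ⊗ y) ⨾ (x ⊗ 𝕀 y.tgt) := by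
  rw [← tensor_def hC, ← tensor_def' hC]

theorem whisker_exchange_of_eq {x y : C.PMor} {a b c d : ℕ} (ha : x.src = a) (hb : x.tgt = b)
    (hc : y.src = c) (hd : y.tgt = d) : (x ⊗ 𝕀 c) ⨾ (𝕀 b ⊗ y) = (𝕀 a ⊗ y) ⨾ (x ⊗ 𝕀 d) := by
  subst ha hb hc hd; exact whisker_exchange hC x y

theorem foldl_comp_intertwine {f g : ℕ → C.PMor} {x : C.PMor} (l : List ℕ)
    (h : ∀ i ∈ l, f i ⨾ x = x ⨾ g i) {a b : C.PMor} (hab : a ⨾ x = x ⨾ b) :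
    l.foldl (fun y i => y ⨾ f i) a ⨾ x = x ⨾ l.foldl (fun y i => y ⨾ g i) b := by
  induction l generalizing a b with
  | nil => exact hab
  | cons i l ih =>
    refine ih (fun j hj => h j (List.mem_cons_of_mem i hj)) ?_
    rw [comp_assoc hC, h i List.mem_cons_self, ← comp_assoc hC, hab, comp_assoc hC]

theorem foldl_comp_whiskerRight (f : ℕ → C.PMor) (l : List ℕ) (a : C.PMor) (m : ℕ) :
    l.foldl (fun y i => y ⨾ f i) a ⊗ 𝕀 m = l.foldl (fun y i => y ⨾ (f i ⊗ 𝕀 m)) (a ⊗ 𝕀 m) := by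
  induction l generalizing a with
  | nil => rfl
  | cons i l ih => simp only [List.foldl_cons, ih, comp_whiskerRight hC]

end StrictMonoidal

section Symmetric

variable {γ : ∀ m n : ℕ, C.Hom (m + n) (n + m)} (hC : IsStrictSymMon C γ)
include hC

theorem braid_natural (x y : C.PMor) : (x ⊗ y) ⨾ γ x.tgt y.tgt = γ x.src y.src ⨾ (y ⊗ x) := by
  obtain ⟨a, b, _ | f⟩ := x <;> obtain ⟨c, d, _ | g⟩ := y
  all_goals first
    | simp [comp, tensor, toPMor]; done
    | change (toPMor f ⊗ toPMor g) ⨾ toPMor (γ b d) = toPMor (γ a c) ⨾ (toPMor g ⊗ toPMor f)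
      rw [← toPMor_tensor, ← toPMor_tensor, ← toPMor_comp, ← toPMor_comp, hC.braiding_natural]

theorem braid_braid (m n : ℕ) : (γ m n : C.PMor) ⨾ γ n m = 𝕀 (m + n) := by
  rw [← toPMor_comp, hC.symmetry]; rfl

theorem braid_zero_left (n : ℕ) : (γ 0 n : C.PMor) = 𝕀 n := by
  rw [hC.gamma_zero, toPMor_cst]; rfl

theorem braid_add_left (m n p : ℕ) : (γ (m + n) p : C.PMor) = (𝕀 m ⊗ γ n p) ⨾ (γ m p ⊗ 𝕀 n) := by
  rw [hC.hexagon, toPMor_comp, toPMor_cst, toPMor_cst]; rfl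

theorem braid_zero_right (n : ℕ) : (γ n 0 : C.PMor) = 𝕀 n := by
  calc (γ n 0 : C.PMor) = γ n 0 ⨾ γ 0 n := by
        rw [braid_zero_left hC, comp_id hC.1 (x := (γ n 0 : C.PMor)) (Nat.zero_add n)]
    _ = 𝕀 n := braid_braid hC n 0

/-- The second hexagon identity, obtained from the first one by inverting both sides. -/
theorem braid_add_right (m n p : ℕ) : (γ m (n + p) : C.PMor) = (γ m n ⊗ 𝕀 p) ⨾ (𝕀 n ⊗ γ m p) := by
  have h : ((γ m n ⊗ 𝕀 p) ⨾ (𝕀 n ⊗ γ m p)) ⨾ (γ (n + p) m : C.PMor) = 𝕀 (m + (n + p)) := by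
    rw [braid_add_left hC, comp_assoc hC.1, ← comp_assoc hC.1 (𝕀 n ⊗ _), ← whiskerLeft_comp hC.1,
      braid_braid hC, id_tensor_id hC.1, id_comp hC.1 (by simp; omega), ← comp_whiskerRight hC.1,
      braid_braid hC, id_tensor_id hC.1, Nat.add_assoc]
  rw [← comp_id hC.1 (n := n + p + m) (x := (γ m n ⊗ 𝕀 p) ⨾ (𝕀 n ⊗ γ m p)) (by simp; omega),
    ← braid_braid hC (n + p) m, ← comp_assoc hC.1, h, id_comp hC.1 (n := m + (n + p)) rfl]

theorem braid_unit (m : ℕ) {x : C.PMor} (hx : x.src = 0) : (𝕀 m ⊗ x) ⨾ γ m x.tgt = x ⊗ 𝕀 m := by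
  have h := braid_natural hC (𝕀 m) x
  rw [tgt_id, src_id] at h
  rw [h, hx, braid_zero_right hC, id_comp hC.1 (by simp [hx])]

end Symmetric

end PMor

open PMor

section Copy

variable {γ : ∀ m n : ℕ, C.Hom (m + n) (n + m)} (P : PoalgebraIn C γ)

def copyEnd (k : ℕ) : C.PMor := (P.δ ⊗ 𝕀 k) ⨾ (𝕀 1 ⊗ γ 1 k)

@[simp] theorem src_copyEnd (k : ℕ) : (copyEnd P k).src = 1 + k := rfl
@[simp] theorem tgt_copyEnd (k : ℕ) : (copyEnd P k).tgt = 1 + (k + 1) := rfl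

variable {P} (hC : IsStrictSymMon C γ)
include hC

theorem copyEnd_add (a b : ℕ) :
    copyEnd P (a + b) = (copyEnd P a ⊗ 𝕀 b) ⨾ (𝕀 (1 + a) ⊗ γ 1 b) := by
  rw [copyEnd, copyEnd, braid_add_right hC, whiskerLeft_comp hC.1, ← id_tensor_id hC.1,
    comp_whiskerRight hC.1, comp_assoc hC.1, tensor_assoc hC.1, tensor_assoc hC.1,
    ← id_tensor_id_tensor hC.1]

theorem copyEnd_succ (a : ℕ) :
    copyEnd P (a + 1) = (copyEnd P a ⊗ 𝕀 1) ⨾ (𝕀 (1 + a) ⊗ γ 1 1) :=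
  copyEnd_add hC a 1

omit hC in
theorem comul_comp_comul_whiskerRight_comp_swap (hC : IsStrictMon C) :
    (P.δ ⨾ (P.δ ⊗ 𝕀 1)) ⨾ (𝕀 1 ⊗ γ 1 1) = (P.δ ⨾ (P.δ ⊗ 𝕀 1) : C.PMor) := by
  have hcoassoc := congrArg toPMor P.comul_coassoc
  have hcocomm := congrArg toPMor P.comul_cocomm
  simp only [toPMor_comp, toPMor_tensor, toPMor_id] at hcoassoc hcocomm
  rw [hcoassoc, comp_assoc hC, ← whiskerLeft_comp hC, hcocomm]

theorem copyEnd_comp_copyEnd_whiskerRight (b : ℕ) :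
    copyEnd P b ⨾ (copyEnd P b ⊗ 𝕀 1) =
      ((P.δ ⨾ (P.δ ⊗ 𝕀 1)) ⊗ 𝕀 b) ⨾ (𝕀 1 ⊗ γ (1 + 1) b) := by
  have hx := whisker_exchange hC.1 (P.δ : C.PMor) (γ 1 b : C.PMor)
  simp only [src_toPMor, tgt_toPMor] at hx
  calc copyEnd P b ⨾ (copyEnd P b ⊗ 𝕀 1)
      = (P.δ ⊗ 𝕀 b) ⨾ (𝕀 1 ⊗ γ 1 b) ⨾ (P.δ ⊗ 𝕀 (b + 1)) ⨾ (𝕀 1 ⊗ γ 1 b ⊗ 𝕀 1) := by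
        rw [copyEnd, comp_whiskerRight hC.1, tensor_assoc hC.1, tensor_assoc hC.1,
          id_tensor_id hC.1, comp_assoc hC.1]
    _ = (P.δ ⊗ 𝕀 b) ⨾ (P.δ ⊗ 𝕀 (1 + b)) ⨾ (𝕀 2 ⊗ γ 1 b) ⨾ (𝕀 1 ⊗ γ 1 b ⊗ 𝕀 1) := by
        rw [reassoc hC.1 hx.symm]
    _ = ((P.δ ⨾ (P.δ ⊗ 𝕀 1)) ⊗ 𝕀 b) ⨾ (𝕀 1 ⊗ ((𝕀 1 ⊗ γ 1 b) ⨾ (γ 1 b ⊗ 𝕀 1))) := by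
        rw [comp_whiskerRight hC.1, ← id_tensor_id hC.1 1 b, ← tensor_assoc hC.1,
          whiskerLeft_comp hC.1, id_tensor_id_tensor hC.1, comp_assoc hC.1]
    _ = ((P.δ ⨾ (P.δ ⊗ 𝕀 1)) ⊗ 𝕀 b) ⨾ (𝕀 1 ⊗ γ (1 + 1) b) := by rw [braid_add_left hC]

theorem copyEnd_comp_copyEnd_whiskerRight_comp_swap (b : ℕ) :
    copyEnd P b ⨾ (copyEnd P b ⊗ 𝕀 1) ⨾ (𝕀 (1 + b) ⊗ γ 1 1) =
      copyEnd P b ⨾ (copyEnd P b ⊗ 𝕀 1) := by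
  have hγ := braid_natural hC (γ 1 1 : C.PMor) (𝕀 b)
  simp only [src_toPMor, tgt_toPMor, src_id, tgt_id] at hγ
  rw [← comp_assoc hC.1, copyEnd_comp_copyEnd_whiskerRight hC, comp_assoc hC.1,
    ← id_tensor_id_tensor hC.1, ← whiskerLeft_comp hC.1, ← hγ, whiskerLeft_comp hC.1,
    ← comp_assoc hC.1, ← tensor_assoc hC.1, ← comp_whiskerRight hC.1,
    comul_comp_comul_whiskerRight_comp_swap hC.1]

theorem copyEnd_comp_whiskerLeft_copyEnd (d b : ℕ) :
    copyEnd P (d + (1 + b)) ⨾ (𝕀 (1 + d) ⊗ copyEnd P b ⊗ 𝕀 1) =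
      (𝕀 (1 + d) ⊗ copyEnd P b) ⨾ copyEnd P (d + (1 + (b + 1))) := by
  have hγ := braid_natural hC (𝕀 1) (copyEnd P b)
  have hx := whisker_exchange hC.1 (copyEnd P d) (copyEnd P b)
  simp only [src_copyEnd, tgt_copyEnd, src_id, tgt_id] at hγ hx
  calc copyEnd P (d + (1 + b)) ⨾ (𝕀 (1 + d) ⊗ copyEnd P b ⊗ 𝕀 1)
      = (copyEnd P d ⊗ 𝕀 (1 + b)) ⨾ (𝕀 (1 + d) ⊗ (γ 1 (1 + b) ⨾ (copyEnd P b ⊗ 𝕀 1))) := by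
        rw [copyEnd_add hC, comp_assoc hC.1, ← whiskerLeft_comp hC.1]
    _ = (copyEnd P d ⊗ 𝕀 (1 + b)) ⨾ (𝕀 (1 + (d + 1)) ⊗ copyEnd P b) ⨾
          (𝕀 (1 + d) ⊗ γ 1 (1 + (b + 1))) := by
        rw [← hγ, whiskerLeft_comp hC.1, id_tensor_id_tensor hC.1]
        rfl
    _ = (𝕀 (1 + d) ⊗ copyEnd P b) ⨾ copyEnd P (d + (1 + (b + 1))) := by
        rw [reassoc hC.1 hx, copyEnd_add hC]

theorem whiskered_copyEnd_comm_of_le {i a j b : ℕ} (h : i + a = j + b) (hij : i ≤ j) :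
    (𝕀 i ⊗ copyEnd P a) ⨾ (𝕀 j ⊗ copyEnd P b ⊗ 𝕀 1) =
      (𝕀 j ⊗ copyEnd P b) ⨾ (𝕀 i ⊗ copyEnd P a ⊗ 𝕀 1) ⨾ (𝕀 (i + 1 + a) ⊗ γ 1 1) := by
  rw [Nat.add_assoc i 1 a, ← id_tensor_id_tensor hC.1, ← whiskerLeft_comp hC.1, ← copyEnd_succ hC]
  rcases hij.lt_or_eq with hlt | rfl
  · obtain ⟨d, rfl⟩ : ∃ d, j = i + (1 + d) := ⟨j - i - 1, by omega⟩
    obtain rfl : a = d + (1 + b) := by omega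
    simp only [← id_tensor_id_tensor hC.1 i (1 + d)]
    rw [← whiskerLeft_comp hC.1, ← whiskerLeft_comp hC.1, copyEnd_comp_whiskerLeft_copyEnd hC]
    rfl
  · obtain rfl : a = b := by omega
    rw [← whiskerLeft_comp hC.1, ← whiskerLeft_comp hC.1, copyEnd_succ hC a,
      copyEnd_comp_copyEnd_whiskerRight_comp_swap hC]

theorem whiskered_copyEnd_comm {i a j b : ℕ} (h : i + a = j + b) :
    (𝕀 i ⊗ copyEnd P a) ⨾ (𝕀 j ⊗ copyEnd P b ⊗ 𝕀 1) =
      (𝕀 j ⊗ copyEnd P b) ⨾ (𝕀 i ⊗ copyEnd P a ⊗ 𝕀 1) ⨾ (𝕀 (i + 1 + a) ⊗ γ 1 1) := by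
  rcases le_total i j with hij | hji
  · exact whiskered_copyEnd_comm_of_le hC h hij
  · rw [reassoc hC.1 (whiskered_copyEnd_comm_of_le hC h.symm hji), comp_assoc hC.1,
      show j + 1 + b = i + 1 + a by omega, ← whiskerLeft_comp hC.1, braid_braid hC,
      id_tensor_id hC.1, comp_id hC.1 (by simp; omega)]

end Copy

section Absorb

variable {γ : ∀ m n : ℕ, C.Hom (m + n) (n + m)} (P : PoalgebraIn C γ)

def mergePast : C.PMor := (γ 1 1 ⊗ 𝕀 1) ⨾ (𝕀 1 ⊗ P.μ)

@[simp] theorem src_mergePast : (mergePast P).src = 3 := rfl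
@[simp] theorem tgt_mergePast : (mergePast P).tgt = 2 := rfl

def absorb (n : ℕ) (F : C.PMor) : C.PMor := (F ⊗ 𝕀 1) ⨾ (𝕀 n ⊗ P.μ)

def absorbPast (n : ℕ) (F : C.PMor) : C.PMor := (F ⊗ 𝕀 2) ⨾ (𝕀 n ⊗ mergePast P)

variable {P} (hC : IsStrictSymMon C γ)
include hC

theorem whiskerLeft_unit_comp_braid : ((𝕀 1 ⊗ P.η) ⨾ γ 1 1 : C.PMor) = P.η ⊗ 𝕀 1 :=
  braid_unit hC 1 (x := P.η) rfl

theorem whiskerLeft_mul_comp_braid :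
    ((𝕀 1 ⊗ P.μ) ⨾ γ 1 1 : C.PMor) = (γ 1 1 ⊗ 𝕀 1) ⨾ (𝕀 1 ⊗ γ 1 1) ⨾ (P.μ ⊗ 𝕀 1) := by
  have h := braid_natural hC (𝕀 1) (P.μ : C.PMor)
  have h12 : (γ 1 2 : C.PMor) = (γ 1 1 ⊗ 𝕀 1) ⨾ (𝕀 1 ⊗ γ 1 1) := braid_add_right hC 1 1 1
  simp only [src_toPMor, tgt_toPMor, src_id, tgt_id] at h
  rw [h, h12, comp_assoc hC.1]

theorem mul_comp_unit_whiskerRight :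
    (P.μ ⨾ (P.η ⊗ 𝕀 1) : C.PMor) = (𝕀 1 ⊗ P.η ⊗ 𝕀 1) ⨾ mergePast P := by
  have hdef := tensor_def hC.1 (P.η : C.PMor) P.μ
  have hdef' := tensor_def' hC.1 (P.η : C.PMor) P.μ
  simp only [src_toPMor, tgt_toPMor, id_zero_tensor hC.1] at hdef hdef'
  rw [mergePast, ← comp_assoc hC.1, ← tensor_assoc hC.1, ← comp_whiskerRight hC.1,
    whiskerLeft_unit_comp_braid hC, tensor_assoc hC.1, id_tensor_id hC.1, ← hdef, hdef']

theorem mergePast_comp_braid : mergePast P ⨾ γ 1 1 = (𝕀 1 ⊗ γ 1 1) ⨾ (P.μ ⊗ 𝕀 1) := by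
  rw [mergePast, comp_assoc hC.1, whiskerLeft_mul_comp_braid hC, ← comp_assoc hC.1,
    ← comp_whiskerRight hC.1, braid_braid hC, id_tensor_id hC.1, id_comp hC.1 (by simp)]

theorem braid_whiskerRight_comp_mergePast :
    (γ 1 1 ⊗ 𝕀 2) ⨾ (𝕀 1 ⊗ mergePast P) ⨾ (P.μ ⊗ 𝕀 1) = (𝕀 1 ⊗ P.μ ⊗ 𝕀 1) ⨾ mergePast P := by
  have hdef := tensor_def hC.1 (P.μ : C.PMor) P.μ
  have hdef' := tensor_def' hC.1 (P.μ : C.PMor) P.μ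
  simp only [src_toPMor, tgt_toPMor] at hdef hdef'
  calc (γ 1 1 ⊗ 𝕀 2) ⨾ (𝕀 1 ⊗ mergePast P) ⨾ (P.μ ⊗ 𝕀 1)
      = (((γ 1 1 ⊗ 𝕀 1) ⨾ (𝕀 1 ⊗ γ 1 1)) ⊗ 𝕀 1) ⨾ (𝕀 2 ⊗ P.μ) ⨾ (P.μ ⊗ 𝕀 1) := by
        rw [mergePast, whiskerLeft_comp hC.1, comp_whiskerRight hC.1, tensor_assoc hC.1,
          tensor_assoc hC.1, id_tensor_id hC.1, id_tensor_id_tensor hC.1]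
        simp only [comp_assoc hC.1]
    _ = (((γ 1 1 ⊗ 𝕀 1) ⨾ (𝕀 1 ⊗ γ 1 1)) ⊗ 𝕀 1) ⨾ ((P.μ ⊗ 𝕀 1) ⊗ 𝕀 1) ⨾ (𝕀 1 ⊗ P.μ) := by
        rw [← hdef', hdef, tensor_assoc hC.1, id_tensor_id hC.1]
    _ = (𝕀 1 ⊗ P.μ ⊗ 𝕀 1) ⨾ mergePast P := by
        rw [← comp_assoc hC.1, ← comp_whiskerRight hC.1, comp_assoc hC.1,
          ← whiskerLeft_mul_comp_braid hC, comp_whiskerRight hC.1, comp_assoc hC.1,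
          tensor_assoc hC.1, mergePast]

variable {F : C.PMor} {n : ℕ} (hs : F.src = n) (ht : F.tgt = n + 1)
include hs ht

theorem absorb_comp_unit :
    absorb P n F ⨾ (𝕀 n ⊗ P.η ⊗ 𝕀 1) = (𝕀 n ⊗ P.η ⊗ 𝕀 1) ⨾ absorbPast P n F := by
  rw [absorb, absorbPast, comp_assoc hC.1, ← whiskerLeft_comp hC.1, mul_comp_unit_whiskerRight hC,
    whiskerLeft_comp hC.1, id_tensor_id_tensor hC.1, ← comp_assoc hC.1,
    whisker_exchange_of_eq hC.1 (d := 2) hs ht (by simp) (by simp), comp_assoc hC.1]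

theorem absorbPast_comp_swap :
    absorbPast P n F ⨾ (𝕀 n ⊗ γ 1 1) = (𝕀 n ⊗ γ 1 1) ⨾ (absorb P n F ⊗ 𝕀 1) := by
  rw [absorb, absorbPast, comp_assoc hC.1, ← whiskerLeft_comp hC.1, mergePast_comp_braid hC,
    whiskerLeft_comp hC.1, id_tensor_id_tensor hC.1, comp_whiskerRight hC.1, tensor_assoc hC.1 F,
    tensor_assoc hC.1 (𝕀 n), id_tensor_id hC.1, ← comp_assoc hC.1 (𝕀 n ⊗ _),
    ← whisker_exchange_of_eq hC.1 (c := 2) hs ht (by simp) (by simp), comp_assoc hC.1]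

theorem absorbPast_comm_absorb {F' : C.PMor} (hs' : F'.src = n) (ht' : F'.tgt = n + 1)
    (hcomm : F ⨾ (F' ⊗ 𝕀 1) = F' ⨾ (F ⊗ 𝕀 1) ⨾ (𝕀 n ⊗ γ 1 1)) :
    absorbPast P n F ⨾ (absorb P n F' ⊗ 𝕀 1) = (absorb P n F' ⊗ 𝕀 1) ⨾ absorbPast P n F := by
  rw [absorb, absorbPast]
  calc ((F ⊗ 𝕀 2) ⨾ (𝕀 n ⊗ mergePast P)) ⨾ (((F' ⊗ 𝕀 1) ⨾ (𝕀 n ⊗ P.μ)) ⊗ 𝕀 1)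
      = (F ⊗ 𝕀 2) ⨾ ((𝕀 n ⊗ mergePast P) ⨾ (F' ⊗ 𝕀 2)) ⨾ (𝕀 n ⊗ P.μ ⊗ 𝕀 1) := by
        simp only [comp_whiskerRight hC.1, tensor_assoc hC.1, id_tensor_id hC.1, comp_assoc hC.1]
    _ = ((F ⨾ (F' ⊗ 𝕀 1)) ⊗ 𝕀 2) ⨾ (𝕀 (n + 1) ⊗ mergePast P) ⨾ (𝕀 n ⊗ P.μ ⊗ 𝕀 1) := by
        rw [← whisker_exchange_of_eq hC.1 (c := 3) hs' ht' (by simp) (by simp)]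
        simp only [comp_whiskerRight hC.1, tensor_assoc hC.1, id_tensor_id hC.1, comp_assoc hC.1]
    _ = (F' ⊗ 𝕀 2) ⨾ (F ⊗ 𝕀 3) ⨾
          (𝕀 n ⊗ ((γ 1 1 ⊗ 𝕀 2) ⨾ (𝕀 1 ⊗ mergePast P) ⨾ (P.μ ⊗ 𝕀 1))) := by
        rw [hcomm]
        simp only [comp_whiskerRight hC.1, whiskerLeft_comp hC.1, tensor_assoc hC.1,
          id_tensor_id_tensor hC.1, id_tensor_id hC.1, comp_assoc hC.1]
    _ = (F' ⊗ 𝕀 2) ⨾ ((F ⊗ 𝕀 3) ⨾ (𝕀 (n + 1) ⊗ P.μ ⊗ 𝕀 1)) ⨾ (𝕀 n ⊗ mergePast P) := by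
        rw [braid_whiskerRight_comp_mergePast hC]
        simp only [whiskerLeft_comp hC.1, id_tensor_id_tensor hC.1, comp_assoc hC.1]
    _ = (((F' ⊗ 𝕀 1) ⨾ (𝕀 n ⊗ P.μ)) ⊗ 𝕀 1) ⨾ (F ⊗ 𝕀 2) ⨾ (𝕀 n ⊗ mergePast P) := by
        rw [whisker_exchange_of_eq hC.1 (d := 2) hs ht (by simp) (by simp)]
        simp only [comp_whiskerRight hC.1, tensor_assoc hC.1, id_tensor_id hC.1, comp_assoc hC.1]

end Absorb

section Exchange

variable {γ : ∀ m n : ℕ, C.Hom (m + n) (n + m)} {P : PoalgebraIn C γ} (hC : IsStrictSymMon C γ)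
include hC

theorem toPMor_Wd {n i k : ℕ} (h : i + 1 + k = n) :
    (Wd C γ P n i : C.PMor) = absorb P n (𝕀 i ⊗ copyEnd P k) := by
  subst h
  rw [Wd, dif_pos (by omega)]
  simp only [toPMor_comp, toPMor_cst, toPMor_tensor, toPMor_id]
  rw [show i + 1 + k - i - 1 = k by omega, show i + 1 + k - i = k + 1 by omega]
  simp only [absorb, copyEnd, whiskerLeft_comp hC.1, comp_whiskerRight hC.1, tensor_assoc hC.1,
    id_tensor_id_tensor hC.1, id_tensor_id hC.1, comp_assoc hC.1]

theorem toPMor_Wd_succ {n i k : ℕ} (h : i + 1 + k = n) :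
    (Wd C γ P (n + 1) i : C.PMor) = absorbPast P n (𝕀 i ⊗ copyEnd P k) := by
  subst h
  rw [toPMor_Wd hC (show i + 1 + (k + 1) = i + 1 + k + 1 by omega), copyEnd_succ hC, absorb,
    absorbPast, mergePast]
  simp only [whiskerLeft_comp hC.1, comp_whiskerRight hC.1, tensor_assoc hC.1,
    id_tensor_id_tensor hC.1, id_tensor_id hC.1, comp_assoc hC.1, Nat.add_assoc]

theorem Wd_comp_unit {n i : ℕ} (hi : i < n) :
    (Wd C γ P n i : C.PMor) ⨾ (𝕀 n ⊗ P.η ⊗ 𝕀 1) = (𝕀 n ⊗ P.η ⊗ 𝕀 1) ⨾ Wd C γ P (n + 1) i := by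
  obtain ⟨k, h⟩ : ∃ k, i + 1 + k = n := ⟨n - i - 1, by omega⟩
  rw [toPMor_Wd hC h, toPMor_Wd_succ hC h]
  exact absorb_comp_unit hC (by simp; omega) (by simp; omega)

theorem Wd_succ_comp_Gd {n i : ℕ} (hi : i < n) :
    (Wd C γ P (n + 1) i : C.PMor) ⨾ Gd C γ n = Gd C γ n ⨾ (Wd C γ P n i ⊗ 𝕀 1) := by
  obtain ⟨k, h⟩ : ∃ k, i + 1 + k = n := ⟨n - i - 1, by omega⟩
  rw [toPMor_Wd hC h, toPMor_Wd_succ hC h]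
  exact absorbPast_comp_swap hC (by simp; omega) (by simp; omega)

theorem Wd_succ_comm {n i j : ℕ} (hi : i < n) (hj : j < n) :
    (Wd C γ P (n + 1) i : C.PMor) ⨾ (Wd C γ P n j ⊗ 𝕀 1) =
      (Wd C γ P n j ⊗ 𝕀 1) ⨾ Wd C γ P (n + 1) i := by
  obtain ⟨k, hk⟩ : ∃ k, i + 1 + k = n := ⟨n - i - 1, by omega⟩
  obtain ⟨l, hl⟩ : ∃ l, j + 1 + l = n := ⟨n - j - 1, by omega⟩
  have hcomm := whiskered_copyEnd_comm hC (P := P) (show i + k = j + l by omega)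
  simp only [← tensor_assoc hC.1, hk] at hcomm
  rw [toPMor_Wd_succ hC hk, toPMor_Wd hC hl]
  exact absorbPast_comm_absorb hC (by simp; omega) (by simp; omega) (by simp; omega)
    (by simp; omega) hcomm

omit hC in
theorem toPMor_WId (n : ℕ) (I : Finset ℕ) :
    (WId C γ P n I : C.PMor) = (I.sort (· ≤ ·)).foldl (fun y i => y ⨾ Wd C γ P n i) (𝕀 (n + 1)) :=
  toPMor_foldl _ _ _

theorem WId_comp_unit {n : ℕ} {I : Finset ℕ} (hI : ∀ a ∈ I, a < n) :
    (WId C γ P n I : C.PMor) ⨾ (𝕀 n ⊗ P.η ⊗ 𝕀 1) = (𝕀 n ⊗ P.η ⊗ 𝕀 1) ⨾ WId C γ P (n + 1) I := by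
  rw [toPMor_WId, toPMor_WId]
  refine foldl_comp_intertwine hC.1 _ (fun i hi => Wd_comp_unit hC (hI i ((I.mem_sort _).1 hi))) ?_
  rw [id_comp hC.1 (by simp), comp_id hC.1 (by simp)]

theorem WId_succ_comp_Gd {n : ℕ} {I : Finset ℕ} (hI : ∀ a ∈ I, a < n) :
    (WId C γ P (n + 1) I : C.PMor) ⨾ Gd C γ n = Gd C γ n ⨾ (WId C γ P n I ⊗ 𝕀 1) := by
  rw [toPMor_WId, toPMor_WId, foldl_comp_whiskerRight hC.1]
  refine foldl_comp_intertwine hC.1 _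
    (fun i hi => Wd_succ_comp_Gd hC (hI i ((I.mem_sort _).1 hi))) ?_
  rw [id_comp hC.1 (by rfl), id_tensor_id hC.1, comp_id hC.1 (by rfl)]

theorem WId_succ_comm {n : ℕ} {I J : Finset ℕ} (hI : ∀ a ∈ I, a < n) (hJ : ∀ a ∈ J, a < n) :
    (WId C γ P (n + 1) I : C.PMor) ⨾ (WId C γ P n J ⊗ 𝕀 1) =
      (WId C γ P n J ⊗ 𝕀 1) ⨾ WId C γ P (n + 1) I := by
  have hi : ∀ i ∈ I.sort (· ≤ ·), (Wd C γ P (n + 1) i : C.PMor) ⨾ (WId C γ P n J ⊗ 𝕀 1) =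
      (WId C γ P n J ⊗ 𝕀 1) ⨾ Wd C γ P (n + 1) i := by
    intro i hi
    rw [toPMor_WId, foldl_comp_whiskerRight hC.1]
    refine (foldl_comp_intertwine hC.1 _ (fun j hj => ?_) ?_).symm
    · exact (Wd_succ_comm hC (hI i ((I.mem_sort _).1 hi)) (hJ j ((J.mem_sort _).1 hj))).symm
    · rw [id_tensor_id hC.1, id_comp hC.1 (by rfl), comp_id hC.1 (by rfl)]
  rw [toPMor_WId (n := n + 1)]
  refine foldl_comp_intertwine hC.1 _ hi ?_
  rw [id_comp hC.1 (by simp), comp_id hC.1 (by simp)]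

theorem Gd_comp_Gd (n : ℕ) : (Gd C γ n : C.PMor) ⨾ Gd C γ n = 𝕀 (n + 2) := by
  rw [Gd, toPMor_tensor, toPMor_id, ← whiskerLeft_comp hC.1, braid_braid hC, id_tensor_id hC.1]

theorem comp_Gd_eq_of_comp_Gd_eq {n : ℕ} {y z : C.PMor} (hy : y.tgt = n + 2) (hz : z.src = n + 2)
    (h : y ⨾ Gd C γ n = Gd C γ n ⨾ z) : z ⨾ Gd C γ n = Gd C γ n ⨾ y := by
  calc z ⨾ Gd C γ n = (Gd C γ n ⨾ Gd C γ n) ⨾ z ⨾ Gd C γ n := by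
        rw [Gd_comp_Gd hC, ← comp_assoc hC.1, id_comp hC.1 hz]
    _ = Gd C γ n ⨾ (y ⨾ Gd C γ n) ⨾ Gd C γ n := by
        rw [comp_assoc hC.1, ← comp_assoc hC.1 (Gd C γ n) z, ← h]
    _ = Gd C γ n ⨾ y := by rw [comp_assoc hC.1, Gd_comp_Gd hC, comp_id hC.1 hy]

theorem Hd_succ_comp_Gd (n : ℕ) : (Hd C γ P (n + 1) : C.PMor) ⨾ Gd C γ n = Hd C γ P n ⊗ 𝕀 1 := by
  rw [Hd, Hd, Gd, toPMor_tensor, toPMor_tensor, toPMor_tensor, toPMor_id, toPMor_id,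
    ← id_tensor_id hC.1 n 1, tensor_assoc hC.1, ← whiskerLeft_comp hC.1,
    whiskerLeft_unit_comp_braid hC, tensor_assoc hC.1]

theorem Hd_comp_Hd_whiskerRight_comp_Gd (n : ℕ) :
    (Hd C γ P n : C.PMor) ⨾ (Hd C γ P n ⊗ 𝕀 1) ⨾ Gd C γ n = Hd C γ P n ⨾ (Hd C γ P n ⊗ 𝕀 1) := by
  have hdef' := tensor_def' hC.1 (P.η : C.PMor) P.η
  have hnat := braid_natural hC (P.η : C.PMor) P.η
  simp only [src_toPMor, tgt_toPMor, id_zero_tensor hC.1, braid_zero_left hC] at hdef' hnat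
  rw [Hd, Gd, toPMor_tensor, toPMor_tensor, toPMor_id, tensor_assoc hC.1, ← whiskerLeft_comp hC.1,
    ← whiskerLeft_comp hC.1, ← comp_assoc hC.1, ← hdef', hnat, id_comp hC.1 (by simp), hdef',
    whiskerLeft_comp hC.1]

theorem Sd_succ_comp_Gd (n : ℕ) :
    (Sd C γ P (n + 1) : C.PMor) ⨾ Gd C γ n = Gd C γ n ⨾ (Sd C γ P n ⊗ 𝕀 1) := by
  have h := braid_natural hC (𝕀 1) (P.σ : C.PMor)
  simp only [src_toPMor, tgt_toPMor, src_id, tgt_id] at h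
  rw [Sd, Sd, Gd, toPMor_tensor, toPMor_tensor, toPMor_tensor, toPMor_id, toPMor_id,
    ← id_tensor_id hC.1 n 1, tensor_assoc hC.1, ← whiskerLeft_comp hC.1, h, whiskerLeft_comp hC.1,
    tensor_assoc hC.1]

theorem Sd_comp_Hd_whiskerRight (n : ℕ) :
    (Sd C γ P n : C.PMor) ⨾ (Hd C γ P n ⊗ 𝕀 1) = (Hd C γ P n ⊗ 𝕀 1) ⨾ Sd C γ P (n + 1) := by
  have hdef := tensor_def hC.1 (P.η : C.PMor) P.σ
  have hdef' := tensor_def' hC.1 (P.η : C.PMor) P.σ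
  simp only [src_toPMor, tgt_toPMor, id_zero_tensor hC.1] at hdef hdef'
  rw [Sd, Sd, Hd, toPMor_tensor, toPMor_tensor, toPMor_tensor, toPMor_id, toPMor_id,
    tensor_assoc hC.1, ← whiskerLeft_comp hC.1, ← hdef', hdef, whiskerLeft_comp hC.1,
    id_tensor_id_tensor hC.1]

theorem Sd_succ_comm_whiskerRight {n : ℕ} {w : C.PMor} (hs : w.src = n + 1) (ht : w.tgt = n + 1) :
    (Sd C γ P (n + 1) : C.PMor) ⨾ (w ⊗ 𝕀 1) = (w ⊗ 𝕀 1) ⨾ Sd C γ P (n + 1) := by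
  rw [Sd, toPMor_tensor, toPMor_id]
  exact (whisker_exchange_of_eq hC.1 (y := P.σ) hs ht rfl rfl).symm

omit hC in
theorem toPMor_Xd (n : ℕ) (K : Finset ℕ) :
    (Xd C γ P n K : C.PMor) = (Hd C γ P n : C.PMor) ⨾ WId C γ P n K ⨾ Sd C γ P n := by
  rw [Xd, toPMor_comp, toPMor_comp]

theorem Xd_succ {n : ℕ} {K : Finset ℕ} (hK : ∀ a ∈ K, a < n) :
    (Xd C γ P (n + 1) K : C.PMor) = (Xd C γ P n K ⊗ 𝕀 1) ⨾ Gd C γ n := by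
  have h : (Xd C γ P (n + 1) K : C.PMor) ⨾ Gd C γ n = Xd C γ P n K ⊗ 𝕀 1 := by
    rw [toPMor_Xd, toPMor_Xd, comp_assoc hC.1, comp_assoc hC.1, Sd_succ_comp_Gd hC,
      reassoc hC.1 (WId_succ_comp_Gd hC hK), ← comp_assoc hC.1, Hd_succ_comp_Gd hC,
      comp_whiskerRight hC.1, comp_whiskerRight hC.1]
  rw [← comp_id hC.1 (n := n + 2) (x := (Xd C γ P (n + 1) K : C.PMor)) rfl, ← Gd_comp_Gd hC,
    ← comp_assoc hC.1, h]

theorem Xd_comp_Xd_whiskerRight {n : ℕ} {I : Finset ℕ} (hI : ∀ a ∈ I, a < n) (J : Finset ℕ) :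
    (Xd C γ P n I : C.PMor) ⨾ (Xd C γ P n J ⊗ 𝕀 1) =
      (Hd C γ P n : C.PMor) ⨾ (Hd C γ P n ⊗ 𝕀 1) ⨾ WId C γ P (n + 1) I ⨾ (WId C γ P n J ⊗ 𝕀 1) ⨾
        Sd C γ P (n + 1) ⨾ (Sd C γ P n ⊗ 𝕀 1) := by
  have hH : (Hd C γ P n ⊗ 𝕀 1 : C.PMor) = 𝕀 n ⊗ P.η ⊗ 𝕀 1 := by
    rw [Hd, toPMor_tensor, toPMor_id, tensor_assoc hC.1]
  rw [toPMor_Xd, toPMor_Xd, comp_whiskerRight hC.1, comp_whiskerRight hC.1, comp_assoc hC.1,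
    comp_assoc hC.1, reassoc hC.1 (Sd_comp_Hd_whiskerRight hC n),
    reassoc hC.1 (Sd_succ_comm_whiskerRight hC (w := WId C γ P n J) rfl rfl),
    ← comp_assoc hC.1 (WId C γ P n I), hH, WId_comp_unit hC hI, ← hH]
  simp only [comp_assoc hC.1]

theorem Xd_comp_Xd_whiskerRight_comp_Gd {n : ℕ} {I J : Finset ℕ} (hI : ∀ a ∈ I, a < n)
    (hJ : ∀ a ∈ J, a < n) :
    ((Xd C γ P n I : C.PMor) ⨾ (Xd C γ P n J ⊗ 𝕀 1)) ⨾ Gd C γ n =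
      (Xd C γ P n J : C.PMor) ⨾ (Xd C γ P n I ⊗ 𝕀 1) := by
  have hS : (Sd C γ P (n + 1) : C.PMor) ⨾ (Sd C γ P n ⊗ 𝕀 1) ⨾ Gd C γ n =
      Gd C γ n ⨾ Sd C γ P (n + 1) ⨾ (Sd C γ P n ⊗ 𝕀 1) := by
    rw [comp_Gd_eq_of_comp_Gd_eq hC rfl rfl (Sd_succ_comp_Gd hC n), ← comp_assoc hC.1,
      Sd_succ_comp_Gd hC n, comp_assoc hC.1, Sd_succ_comm_whiskerRight hC rfl rfl]
  have hWJ := comp_Gd_eq_of_comp_Gd_eq hC rfl rfl (WId_succ_comp_Gd hC (P := P) hJ)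
  rw [Xd_comp_Xd_whiskerRight hC hI, Xd_comp_Xd_whiskerRight hC hJ]
  simp only [comp_assoc hC.1]
  rw [hS, reassoc hC.1 hWJ, reassoc hC.1 (WId_succ_comp_Gd hC hI), ← comp_assoc hC.1 (_ ⊗ 𝕀 1),
    ← comp_assoc hC.1 (Hd C γ P n : C.PMor), Hd_comp_Hd_whiskerRight_comp_Gd hC, comp_assoc hC.1,
    reassoc hC.1 (WId_succ_comm hC hJ hI).symm]

end Exchange

end MonCatN

/-- the exchange identity
`X^{n+1}_J ∘ X^n_I = G^n ∘ X^{n+1}_I ∘ X^n_J` for `I, J ⊆ [n]`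
(composition written in diagrammatic order). -/
theorem X_exchange
    (C : MonCatN) (γ : ∀ m n : ℕ, C.Hom (m + n) (n + m))
    (hC : IsStrictSymMon C γ) (P : PoalgebraIn C γ)
    (n : ℕ) (I J : Finset ℕ) (hI : ∀ a ∈ I, a < n) (hJ : ∀ a ∈ J, a < n) :
    C.comp (Xd C γ P n I) (Xd C γ P (n + 1) J) =
      C.comp (Xd C γ P n J) (C.comp (Xd C γ P (n + 1) I) (Gd C γ n)) := by
  open MonCatN MonCatN.PMor in
  apply toPMor_injective
  rw [toPMor_comp, toPMor_comp, toPMor_comp, Xd_succ hC hI, Xd_succ hC hJ, ← comp_assoc hC.1,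
    ← comp_assoc hC.1, Xd_comp_Xd_whiskerRight_comp_Gd hC hI hJ, comp_assoc hC.1, comp_assoc hC.1,
    Gd_comp_Gd hC, comp_id hC.1 (by simp)]
end

section
/- In a symmetric monoidal category with a poalgebra, the naturality-type identity X^{n+2}_I ∘ G^n_i = G^n_i ∘ X^{n+1}_{τ(I)} holds, where G^n_i = id_i ⊗ γ ⊗ id_{n-i} : n+2 → n+2, X^m_I = S^m ∘ W^m_I ∘ H^m, and τ = τ^{n+1}_i is the adjacent transposition swapping i and i+1 acting on subsets I ⊆ [n+1] elementwise. -/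
/-!
Write `G` for the crossing `G^{n+1}_i` of the strands `i, i + 1`. It commutes with `H` and `S`,
which only touch the last strand, so everything reduces to `G ∘ W_I = W_{τ(I)} ∘ G`. Pointwise,
`G ∘ W_k = W_{τ k} ∘ G`: for `k ≥ i + 2` the two act on disjoint strands; for `k < i` the copy
of strand `k` is carried across both strands, and the crossing slides through the carrying
symmetry by naturality; for `k = i` naturality of the symmetry with `δ` and the hexagon turn the
copy of strand `i` into a copy of strand `i + 1`; `k = i + 1` follows since `G` is an involution.
So `G` conjugates the composite over the sorted list of `I` into the composite over its image
under `τ`. If `I` contains at most one of `i, i + 1`, then `τ` is increasing on `I` and that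
image is the sorted list of `τ(I)`. Otherwise `τ(I) = I` and the two lists differ by an adjacent
swap of `i` and `i + 1`, which is harmless because `W_i` and `W_{i+1}` commute: the two copies
end up merged into the last strand in either order, and `μ` is associative and commutative.
-/

namespace MonCatN

variable {C : MonCatN}

def castHom (C : MonCatN) {a b : ℕ} (a' b' : ℕ) (f : C.Hom a b)
    (h₁ : a = a' := by omega) (h₂ : b = b' := by omega) : C.Hom a' b' :=
  C.cst h₁ h₂ f

def HomHEq {a b c d : ℕ} (f : C.Hom a b) (g : C.Hom c d) : Prop :=
  a = c ∧ b = d ∧ HEq f g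

notation:50 f " ≋ " g => MonCatN.HomHEq f g

namespace HomHEq

variable {a b c d e e' : ℕ}

protected theorem rfl {f : C.Hom a b} : f ≋ f := ⟨rfl, rfl, HEq.rfl⟩

theorem of_eq {f g : C.Hom a b} (h : f = g) : f ≋ g := h ▸ HomHEq.rfl

theorem symm {f : C.Hom a b} {g : C.Hom c d} (h : f ≋ g) : g ≋ f :=
  ⟨h.1.symm, h.2.1.symm, h.2.2.symm⟩

theorem trans {f : C.Hom a b} {g : C.Hom c d} {k : C.Hom e e'} (h₁ : f ≋ g) (h₂ : g ≋ k) :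
    f ≋ k :=
  ⟨h₁.1.trans h₂.1, h₁.2.1.trans h₂.2.1, h₁.2.2.trans h₂.2.2⟩

theorem eq {f g : C.Hom a b} (h : f ≋ g) : f = g := eq_of_heq h.2.2

instance : Trans (HomHEq (C := C) (a := a) (b := b) (c := c) (d := d))
    (HomHEq (C := C) (a := c) (b := d) (c := e) (d := e'))
    (HomHEq (C := C) (a := a) (b := b) (c := e) (d := e')) :=
  ⟨trans⟩

theorem comp {a' b' c' : ℕ} {f : C.Hom a b} {g : C.Hom b c} {f' : C.Hom a' b'}
    {g' : C.Hom b' c'} (hf : f ≋ f') (hg : g ≋ g') : C.comp f g ≋ C.comp f' g' := by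
  obtain ⟨rfl, rfl, hf⟩ := hf
  obtain ⟨-, rfl, hg⟩ := hg
  cases hf; cases hg
  exact HomHEq.rfl

theorem tensor {a' b' c' d' : ℕ} {f : C.Hom a b} {g : C.Hom c d} {f' : C.Hom a' b'}
    {g' : C.Hom c' d'} (hf : f ≋ f') (hg : g ≋ g') : C.tensor f g ≋ C.tensor f' g' := by
  obtain ⟨rfl, rfl, hf⟩ := hf
  obtain ⟨rfl, rfl, hg⟩ := hg
  cases hf; cases hg
  exact HomHEq.rfl

end HomHEq

theorem cst_homHEq {a b c d : ℕ} (h₁ : a = c) (h₂ : b = d) (f : C.Hom a b) :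
    C.cst h₁ h₂ f ≋ f :=
  ⟨h₁.symm, h₂.symm, cast_heq _ _⟩

theorem castHom_homHEq {a b : ℕ} (a' b' : ℕ) (f : C.Hom a b) {h₁ : a = a'} {h₂ : b = b'} :
    C.castHom a' b' f h₁ h₂ ≋ f :=
  cst_homHEq h₁ h₂ f

theorem id_homHEq_id {a b : ℕ} (h : a = b) : C.id a ≋ C.id b := h ▸ HomHEq.rfl

theorem homHEq_braiding {γ : ∀ m n : ℕ, C.Hom (m + n) (n + m)} {a b a' b' : ℕ}
    (h₁ : a = a') (h₂ : b = b') : γ a b ≋ γ a' b' :=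
  h₁ ▸ h₂ ▸ HomHEq.rfl

def pad (C : MonCatN) (p : ℕ) {a a' : ℕ} (f : C.Hom a a') (q : ℕ) :
    C.Hom (p + a + q) (p + a' + q) :=
  C.tensor (C.tensor (C.id p) f) (C.id q)

theorem HomHEq.pad {p q p' q' a a' c c' : ℕ} {f : C.Hom a a'} {g : C.Hom c c'} (h : f ≋ g)
    (hp : p = p') (hq : q = q') : C.pad p f q ≋ C.pad p' g q' :=
  ((id_homHEq_id hp).tensor h).tensor (id_homHEq_id hq)

theorem castHom_pad_homHEq {S T p q p' q' a a' : ℕ} (f : C.Hom a a') {h₁ : p + a + q = S}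
    {h₂ : p + a' + q = T} (hp : p = p') (hq : q = q') :
    C.castHom S T (C.pad p f q) h₁ h₂ ≋ C.pad p' f q' :=
  (castHom_homHEq _ _ _).trans (HomHEq.rfl.pad hp hq)

end MonCatN

namespace IsStrictMon

open MonCatN

variable {C : MonCatN}

theorem comp_homHEq_of_homHEq_id (hM : IsStrictMon C) {a b d e : ℕ} {f : C.Hom a b}
    {g : C.Hom b d} (hg : g ≋ C.id e) : C.comp f g ≋ f := by
  obtain ⟨rfl, rfl, hg⟩ := hg
  cases hg
  exact .of_eq (hM.comp_id f)

theorem comp_homHEq_of_id_homHEq (hM : IsStrictMon C) {a b d e : ℕ} {f : C.Hom a b}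
    {g : C.Hom b d} (hf : f ≋ C.id e) : C.comp f g ≋ g := by
  obtain ⟨rfl, rfl, hf⟩ := hf
  cases hf
  exact .of_eq (hM.id_comp g)

theorem tensor_assoc_homHEq (hM : IsStrictMon C) {m n m' n' m'' n'' : ℕ} (f : C.Hom m n)
    (g : C.Hom m' n') (h : C.Hom m'' n'') :
    C.tensor (C.tensor f g) h ≋ C.tensor f (C.tensor g h) :=
  (HomHEq.of_eq (hM.tensor_assoc f g h)).trans (cst_homHEq _ _ _)

theorem id_zero_tensor_homHEq (hM : IsStrictMon C) {m n : ℕ} (f : C.Hom m n) :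
    C.tensor (C.id 0) f ≋ f :=
  (HomHEq.of_eq (hM.tensor_unit_l f)).trans (cst_homHEq _ _ _)

theorem comp_comp_of_comp_eq (hM : IsStrictMon C) {a b c b' d : ℕ} {f : C.Hom a b}
    {g : C.Hom b c} {f' : C.Hom a b'} {g' : C.Hom b' c} (h : C.comp f g = C.comp f' g')
    (k : C.Hom c d) : C.comp f (C.comp g k) = C.comp f' (C.comp g' k) := by
  rw [← hM.comp_assoc, h, hM.comp_assoc]

theorem comp_comp_comp_of_ladder (hM : IsStrictMon C) {a b c d e f g h : ℕ}
    (g₀ : C.Hom a b) (x₁ : C.Hom b c) (x₂ : C.Hom c d) (x₃ : C.Hom d e)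
    (y₁ : C.Hom a f) (g₁ : C.Hom f c) (y₂ : C.Hom f g) (g₂ : C.Hom g d)
    (y₃ : C.Hom g h) (g₃ : C.Hom h e)
    (h₁ : C.comp g₀ x₁ = C.comp y₁ g₁) (h₂ : C.comp g₁ x₂ = C.comp y₂ g₂)
    (h₃ : C.comp g₂ x₃ = C.comp y₃ g₃) :
    C.comp g₀ (C.comp x₁ (C.comp x₂ x₃)) = C.comp (C.comp y₁ (C.comp y₂ y₃)) g₃ := by
  rw [← hM.comp_assoc, h₁, hM.comp_assoc, ← hM.comp_assoc g₁, h₂, hM.comp_assoc,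
    h₃, hM.comp_assoc, hM.comp_assoc]

theorem pad_comp (hM : IsStrictMon C) {p q a a' a'' : ℕ} (f : C.Hom a a') (g : C.Hom a' a'') :
    C.comp (C.pad p f q) (C.pad p g q) = C.pad p (C.comp f g) q := by
  simp only [pad, ← hM.tensor_comp, hM.id_comp]

theorem pad_id (hM : IsStrictMon C) (p a q : ℕ) : C.pad p (C.id a) q = C.id (p + a + q) := by
  simp only [pad, hM.tensor_id]

theorem pad_zero_right (hM : IsStrictMon C) {a a' : ℕ} (p : ℕ) (f : C.Hom a a') :
    C.pad p f 0 = C.tensor (C.id p) f :=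
  hM.tensor_unit_r _

theorem tensor_id_homHEq_pad (hM : IsStrictMon C) {a a' : ℕ} (f : C.Hom a a') (q : ℕ) :
    C.tensor f (C.id q) ≋ C.pad 0 f q :=
  ((hM.id_zero_tensor_homHEq f).tensor HomHEq.rfl).symm

theorem pad_add_homHEq (hM : IsStrictMon C) (p p' : ℕ) {a a' : ℕ} (f : C.Hom a a')
    (q' q : ℕ) : C.pad (p + p') f (q' + q) ≋ C.pad p (C.pad p' f q') q :=
  calc C.pad (p + p') f (q' + q)
      ≋ C.tensor (C.tensor (C.tensor (C.id p) (C.id p')) f) (C.tensor (C.id q') (C.id q)) :=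
        ((HomHEq.of_eq (hM.tensor_id p p')).symm.tensor .rfl).tensor
          (HomHEq.of_eq (hM.tensor_id q' q)).symm
    _ ≋ C.tensor (C.tensor (C.id p) (C.tensor (C.id p') f)) (C.tensor (C.id q') (C.id q)) :=
        (hM.tensor_assoc_homHEq _ _ _).tensor .rfl
    _ ≋ C.tensor (C.tensor (C.tensor (C.id p) (C.tensor (C.id p') f)) (C.id q')) (C.id q) :=
        (hM.tensor_assoc_homHEq _ _ _).symm
    _ ≋ C.pad p (C.pad p' f q') q := (hM.tensor_assoc_homHEq _ _ _).tensor .rfl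

theorem pad_tensor_id_homHEq (hM : IsStrictMon C) (p : ℕ) {a a' : ℕ} (f : C.Hom a a')
    (s q : ℕ) : C.pad p (C.tensor f (C.id s)) q ≋ C.pad p f (s + q) :=
  ((hM.tensor_id_homHEq_pad f s).pad rfl rfl).trans (hM.pad_add_homHEq p 0 f s q).symm

theorem pad_id_tensor_homHEq (hM : IsStrictMon C) (p s : ℕ) {a a' : ℕ} (f : C.Hom a a')
    (q : ℕ) : C.pad p (C.tensor (C.id s) f) q ≋ C.pad (p + s) f q := by
  rw [← hM.pad_zero_right]
  exact (hM.pad_add_homHEq p s f 0 q).symm.trans (HomHEq.rfl.pad rfl (by omega))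

theorem pad_comp_castHom (hM : IsStrictMon C) (p q : ℕ) {a b c d : ℕ} (f : C.Hom a b)
    (g : C.Hom c d) (h : b = c) :
    C.comp (C.pad p f q) (C.castHom (p + b + q) (p + d + q) (C.pad p g q) (by rw [h]) rfl) ≋
      C.pad p (C.comp f (C.castHom b d g h.symm rfl)) q := by
  subst h
  exact .of_eq (hM.pad_comp f g)

theorem pad_comm_of_disjoint (hM : IsStrictMon C) (p q r : ℕ) {a a' b b' : ℕ}
    (f : C.Hom a a') (g : C.Hom b b') :
    C.comp (C.pad p f (q + (b + r)))
        (C.castHom (p + a' + (q + (b + r))) (p + a' + q + b' + r) (C.pad (p + a' + q) g r)) ≋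
      C.comp (C.pad (p + a + q) g r)
        (C.castHom (p + a + q + b' + r) (p + a' + q + b' + r) (C.pad p f (q + (b' + r)))) := by
  let both : ∀ {x x' y y' : ℕ}, C.Hom x x' → C.Hom y y' →
      C.Hom (p + x + q + y + r) (p + x' + q + y' + r) :=
    fun u v => C.tensor (C.tensor (C.pad p u q) v) (C.id r)
  have both_comp : ∀ {x x' x'' y y' y'' : ℕ} (u : C.Hom x x') (u' : C.Hom x' x'')
      (v : C.Hom y y') (v' : C.Hom y' y''),
      C.comp (both u v) (both u' v') = both (C.comp u u') (C.comp v v') := by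
    intro _ _ _ _ _ _ u u' v v'
    simp only [both, pad, ← hM.tensor_comp, hM.id_comp]
  have left_block : ∀ {x x' : ℕ} (u : C.Hom x x') (y : ℕ),
      C.pad p u (q + (y + r)) ≋ both u (C.id y) := by
    intro _ _ u y
    calc C.pad p u (q + (y + r))
        ≋ C.tensor (C.tensor (C.id p) u) (C.tensor (C.id q) (C.tensor (C.id y) (C.id r))) :=
          HomHEq.rfl.tensor (by rw [hM.tensor_id y r, hM.tensor_id q (y + r)]; exact .rfl)
      _ ≋ C.tensor (C.pad p u q) (C.tensor (C.id y) (C.id r)) :=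
          (hM.tensor_assoc_homHEq _ _ _).symm
      _ ≋ both u (C.id y) := (hM.tensor_assoc_homHEq _ _ _).symm
  have right_block : ∀ {y y' : ℕ} (v : C.Hom y y') (x : ℕ),
      both (C.id x) v = C.pad (p + x + q) v r := by
    intro _ _ v x
    simp only [both, pad, hM.tensor_id]
  calc _ ≋ C.comp (both f (C.id b)) (both (C.id a') g) :=
        (left_block f b).comp ((castHom_homHEq _ _ _).trans (.of_eq (right_block g a').symm))
    _ ≋ C.comp (both (C.id a) g) (both f (C.id b')) := by
        rw [both_comp, both_comp, hM.comp_id, hM.id_comp, hM.id_comp, hM.comp_id]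
        exact .rfl
    _ ≋ _ := (HomHEq.of_eq (right_block g a)).comp
        ((left_block f b').symm.trans (castHom_homHEq _ _ _).symm)

theorem castHom_pad_comm_of_disjoint (hM : IsStrictMon C) {S U T V : ℕ} (p q r : ℕ)
    {a a' b b' : ℕ} (f : C.Hom a a') (g : C.Hom b b') {p₁ q₁ p₂ r₂ p₃ r₃ p₄ q₄ : ℕ}
    (e₁ : p₁ = p) (e₂ : q₁ = q + (b + r)) (e₃ : p₂ = p + a' + q) (e₄ : r₂ = r)
    (e₅ : p₃ = p + a + q) (e₆ : r₃ = r) (e₇ : p₄ = p) (e₈ : q₄ = q + (b' + r))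
    {h₁ : p₁ + a + q₁ = S} {h₂ : p₁ + a' + q₁ = U} {h₃ : p₂ + b + r₂ = U}
    {h₄ : p₂ + b' + r₂ = T} {h₅ : p₃ + b + r₃ = S} {h₆ : p₃ + b' + r₃ = V}
    {h₇ : p₄ + a + q₄ = V} {h₈ : p₄ + a' + q₄ = T} :
    C.comp (C.castHom S U (C.pad p₁ f q₁) h₁ h₂) (C.castHom U T (C.pad p₂ g r₂) h₃ h₄) =
      C.comp (C.castHom S V (C.pad p₃ g r₃) h₅ h₆)
        (C.castHom V T (C.pad p₄ f q₄) h₇ h₈) := by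
  subst p₁ q₁ p₂ r₂ p₃ r₃ p₄ q₄
  refine HomHEq.eq ?_
  calc _ ≋ _ := (castHom_homHEq _ _ _).comp
        ((castHom_homHEq _ _ _).trans (castHom_homHEq _ _ _).symm)
    _ ≋ _ := hM.pad_comm_of_disjoint p q r f g
    _ ≋ _ := (castHom_homHEq _ _ _).symm.comp
        ((castHom_homHEq _ _ _).trans (castHom_homHEq _ _ _).symm)

end IsStrictMon

namespace IsStrictSymMon

open MonCatN

variable {C : MonCatN} {γ : ∀ m n : ℕ, C.Hom (m + n) (n + m)}

theorem hexagon_homHEq (hC : IsStrictSymMon C γ) (m n p : ℕ) :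
    γ (m + n) p ≋ C.comp (C.tensor (C.id m) (γ n p))
      (C.castHom (m + (p + n)) (p + (m + n)) (C.tensor (γ m p) (C.id n))) :=
  (HomHEq.of_eq (hC.hexagon m n p)).trans
    ((cst_homHEq _ _ _).comp ((cst_homHEq _ _ _).trans (castHom_homHEq _ _ _).symm))

/-- Obtained by inverting the hexagon for `γ (n + p) m`. -/
theorem hexagon_right_homHEq (hC : IsStrictSymMon C γ) (m n p : ℕ) :
    γ m (n + p) ≋ C.comp (C.tensor (γ m n) (C.id p))
      (C.castHom (n + m + p) (n + (p + m)) (C.tensor (C.id n) (γ m p))) := by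
  set A := C.tensor (γ m n) (C.id p)
  set B := C.tensor (C.id n) (γ m p)
  set E := C.tensor (C.id n) (γ p m)
  set F := C.castHom (n + (m + p)) (m + n + p) (C.tensor (γ n m) (C.id p))
  set K := C.comp A (C.castHom (n + m + p) (n + (p + m)) B)
  have hD : γ (n + p) m ≋ C.comp E F :=
    (hC.hexagon_homHEq n p m).trans
      (HomHEq.rfl.comp ((castHom_homHEq _ _ _).trans (castHom_homHEq _ _ _).symm))
  have hFA : C.comp F A ≋ C.id (n + m + p) := by
    refine ((castHom_homHEq _ _ _).comp .rfl).trans (.of_eq ?_)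
    rw [← hC.tensor_comp, hC.symmetry, hC.id_comp, hC.tensor_id]
  have hDK : C.comp (γ (n + p) m) (C.castHom (m + (n + p)) (n + (p + m)) K) ≋
      C.id (n + p + m) :=
    calc _ ≋ C.comp (C.comp E F) K := hD.comp (castHom_homHEq _ _ _)
      _ ≋ C.comp E (C.comp (C.comp F A) (C.castHom (n + m + p) (n + (p + m)) B)) := by
          rw [hC.comp_assoc, ← hC.comp_assoc F]; exact .rfl
      _ ≋ C.comp E B :=
          HomHEq.rfl.comp ((hC.comp_homHEq_of_id_homHEq hFA).trans (castHom_homHEq _ _ _))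
      _ ≋ C.id (n + p + m) := by
          rw [← hC.tensor_comp, hC.symmetry, hC.id_comp, hC.tensor_id]
          exact id_homHEq_id (by omega)
  calc γ m (n + p)
      ≋ C.comp (γ m (n + p)) (C.comp (γ (n + p) m) (C.castHom _ _ K)) :=
        (hC.comp_homHEq_of_homHEq_id hDK).symm
    _ ≋ C.comp (C.comp (γ m (n + p)) (γ (n + p) m)) (C.castHom _ _ K) :=
        .of_eq (hC.comp_assoc _ _ _).symm
    _ ≋ K := by rw [hC.symmetry, hC.id_comp]; exact castHom_homHEq _ _ _

theorem pad_braiding_natural (hC : IsStrictSymMon C γ) (p q : ℕ) {a b : ℕ} (x : C.Hom a b) :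
    C.comp (C.pad p (γ 1 a) q) (C.pad p (C.tensor x (C.id 1)) q) =
      C.comp (C.pad p (C.tensor (C.id 1) x) q) (C.pad p (γ 1 b) q) := by
  rw [hC.pad_comp, hC.pad_comp, hC.braiding_natural]

theorem pad_braiding_add_homHEq (hC : IsStrictSymMon C γ) (p s t q : ℕ) :
    C.pad p (γ 1 (s + t)) q ≋ C.comp (C.pad p (γ 1 s) (t + q))
      (C.castHom (p + (s + 1) + (t + q)) (p + (s + t + 1) + q) (C.pad (p + s) (γ 1 t) q)) :=
  calc C.pad p (γ 1 (s + t)) q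
      ≋ C.pad p (C.comp (C.tensor (γ 1 s) (C.id t))
          (C.castHom (s + 1 + t) (s + (t + 1)) (C.tensor (C.id s) (γ 1 t)))) q :=
        (hC.hexagon_right_homHEq 1 s t).pad rfl rfl
    _ ≋ C.comp (C.pad p (C.tensor (γ 1 s) (C.id t)) q)
          (C.castHom (p + (s + 1 + t) + q) (p + (s + (t + 1)) + q)
            (C.pad p (C.tensor (C.id s) (γ 1 t)) q) (by omega) rfl) :=
        (hC.pad_comp_castHom p q _ _ (by omega)).symm
    _ ≋ _ := (hC.pad_tensor_id_homHEq _ _ _ _).comp ((castHom_homHEq _ _ _).trans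
        ((hC.pad_id_tensor_homHEq _ _ _ _).trans (castHom_homHEq _ _ _).symm))

/-- The crossing of the strands `p + 1, p + 2` occurs twice in a row and cancels; the remaining
crossings act on disjoint strands. -/
theorem castHom_pad_braiding_two_comp (hC : IsStrictSymMon C γ) (p v : ℕ) :
    C.comp (C.castHom (p + v + 4) (p + v + 4) (C.pad p (γ 1 2) (v + 1)))
        (C.castHom (p + v + 4) (p + v + 4) (C.pad (p + 1) (γ 1 (v + 1)) 1)) =
      C.comp (C.castHom (p + v + 4) (p + v + 4) (C.pad (p + 2) (γ 1 v) 1))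
        (C.castHom (p + v + 4) (p + v + 4) (C.pad p (γ 1 1) (v + 2))) := by
  set k₁ := C.castHom (p + v + 4) (p + v + 4) (C.pad p (γ 1 1) (1 + (v + 1)))
  set k₂ := C.castHom (p + v + 4) (p + v + 4) (C.pad (p + 1) (γ 1 1) (v + 1))
  have split₁ : C.castHom (p + v + 4) (p + v + 4) (C.pad p (γ 1 2) (v + 1)) = C.comp k₁ k₂ :=
    ((castHom_homHEq _ _ _).trans ((hC.pad_braiding_add_homHEq p 1 1 (v + 1)).trans
      ((castHom_homHEq _ _ _).symm.comp
        ((castHom_homHEq _ _ _).trans (castHom_homHEq _ _ _).symm)))).eq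
  have split₂ : C.castHom (p + v + 4) (p + v + 4) (C.pad (p + 1) (γ 1 (v + 1)) 1) =
      C.comp k₂ (C.castHom (p + v + 4) (p + v + 4) (C.pad (p + 2) (γ 1 v) 1)) :=
    ((castHom_homHEq _ _ _).trans (((homHEq_braiding rfl (by omega)).pad rfl rfl).trans
      ((hC.pad_braiding_add_homHEq (p + 1) 1 v 1).trans
        ((castHom_pad_homHEq _ rfl (by omega)).symm.comp
          ((castHom_homHEq _ _ _).trans (castHom_homHEq _ _ _).symm))))).eq
  have cancel : C.comp k₂ k₂ = C.id (p + v + 4) := by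
    refine (((castHom_homHEq _ _ _).comp (castHom_homHEq _ _ _)).trans ?_).eq
    rw [hC.pad_comp, hC.symmetry, hC.pad_id]
    exact id_homHEq_id (by omega)
  have far : C.comp k₁ (C.castHom (p + v + 4) (p + v + 4) (C.pad (p + 2) (γ 1 v) 1)) =
      C.comp (C.castHom (p + v + 4) (p + v + 4) (C.pad (p + 2) (γ 1 v) 1))
        (C.castHom (p + v + 4) (p + v + 4) (C.pad p (γ 1 1) (v + 2))) :=
    hC.castHom_pad_comm_of_disjoint p 0 1 (γ 1 1) (γ 1 v) rfl (by omega) (by omega) rfl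
      (by omega) rfl rfl (by omega)
  rw [split₁, split₂, hC.comp_assoc, ← hC.comp_assoc k₂, cancel, hC.id_comp, far]

end IsStrictSymMon

theorem PoalgebraIn.mul_left_comm {C : MonCatN} {γ : ∀ m n : ℕ, C.Hom (m + n) (n + m)}
    (hM : IsStrictMon C) (P : PoalgebraIn C γ) :
    C.comp (C.tensor (γ 1 1) (C.id 1)) (C.comp (C.tensor (C.id 1) P.μ : C.Hom (1 + 2) 2) P.μ) =
      C.comp (C.tensor (C.id 1) P.μ) P.μ := by
  rw [← P.mul_assoc, ← hM.comp_assoc, ← hM.tensor_comp, P.mul_comm, hM.id_comp]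

section Crossing

open MonCatN

variable {C : MonCatN} {γ : ∀ m n : ℕ, C.Hom (m + n) (n + m)}

theorem Gdi_homHEq_pad {m i s : ℕ} (h : m = i + s) : Gdi C γ m i ≋ C.pad i (γ 1 1) s := by
  unfold Gdi
  rw [dif_pos (by omega : i ≤ m)]
  exact (cst_homHEq _ _ _).trans (HomHEq.rfl.pad rfl (by omega))

theorem Gdi_comp_Gdi (hC : IsStrictSymMon C γ) {m i : ℕ} (hi : i ≤ m) :
    C.comp (Gdi C γ m i) (Gdi C γ m i) = C.id (m + 2) := by
  have hG : Gdi C γ m i ≋ C.pad i (γ 1 1) (m - i) := Gdi_homHEq_pad (by omega)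
  refine HomHEq.eq ((hG.comp hG).trans ?_)
  rw [hC.pad_comp, hC.symmetry, hC.pad_id]
  exact id_homHEq_id (by omega)

theorem Gdi_comp_cst_tensor_id (hM : IsStrictMon C) {m m' i p a b : ℕ} (hp : i + 2 ≤ p)
    (x : C.Hom a b) (ha : p + a = m + 2) (hb : p + b = m' + 2) :
    C.comp (Gdi C γ m i) (C.cst ha hb (C.tensor (C.id p) x)) =
      C.comp (C.cst ha hb (C.tensor (C.id p) x)) (Gdi C γ m' i) := by
  obtain ⟨r, rfl⟩ : ∃ r, p = i + 2 + r := ⟨p - (i + 2), by omega⟩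
  have hG : ∀ k s (_ : k = i + s),
      Gdi C γ k i = C.castHom (k + 2) (k + 2) (C.pad i (γ 1 1) s) := fun k s h =>
    ((Gdi_homHEq_pad h).trans (castHom_homHEq _ _ _).symm).eq
  have hx : C.cst ha hb (C.tensor (C.id (i + 2 + r)) x) =
      C.castHom (m + 2) (m' + 2) (C.pad (i + 2 + r) x 0) := by
    rw [hM.pad_zero_right]; rfl
  rw [hG m (r + (a + 0)) (by omega), hG m' (r + (b + 0)) (by omega), hx]
  exact hM.castHom_pad_comm_of_disjoint i r 0 (γ 1 1) x rfl rfl rfl rfl rfl rfl rfl rfl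

variable {P : PoalgebraIn C γ}

theorem Gdi_comp_Hd (hM : IsStrictMon C) {n i : ℕ} (hi : i ≤ n) :
    C.comp (Gdi C γ n i) (Hd C γ P (n + 2)) = C.comp (Hd C γ P (n + 2)) (Gdi C γ (n + 1) i) :=
  Gdi_comp_cst_tensor_id hM (p := n + 2) (by omega) P.η rfl rfl

theorem Gdi_comp_Sd (hM : IsStrictMon C) {n i : ℕ} (hi : i ≤ n) :
    C.comp (Gdi C γ (n + 1) i) (Sd C γ P (n + 2)) =
      C.comp (Sd C γ P (n + 2)) (Gdi C γ (n + 1) i) :=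
  Gdi_comp_cst_tensor_id hM (p := n + 2) (by omega) P.σ rfl rfl

end Crossing

section Merge

open MonCatN

variable {C : MonCatN} {γ : ∀ m n : ℕ, C.Hom (m + n) (n + m)} {P : PoalgebraIn C γ}

theorem Wd_eq (hM : IsStrictMon C) {m j c : ℕ} (h : m = j + 1 + c) :
    Wd C γ P m j = C.comp (C.castHom (m + 1) (m + 2) (C.pad j P.δ (c + 1)))
      (C.comp (C.castHom (m + 2) (m + 2) (C.pad (j + 1) (γ 1 c) 1))
        (C.castHom (m + 2) (m + 1) (C.pad (j + 1 + c) P.μ 0))) := by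
  unfold Wd
  rw [dif_pos (by omega : j < m)]
  refine HomHEq.eq (HomHEq.comp ?_ (HomHEq.comp ?_ ?_))
  · refine (cst_homHEq _ _ _).trans (HomHEq.trans ?_ (castHom_homHEq _ _ _).symm)
    exact (hM.tensor_assoc_homHEq _ _ _).symm.trans
      (HomHEq.rfl.tensor (id_homHEq_id (by omega)))
  · refine (cst_homHEq _ _ _).trans (HomHEq.trans ?_ (castHom_homHEq _ _ _).symm)
    exact (hM.tensor_assoc_homHEq _ _ _).symm.trans
      ((HomHEq.rfl.tensor (homHEq_braiding rfl (by omega))).tensor .rfl)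
  · exact (HomHEq.of_eq (hM.pad_zero_right m P.μ)).symm.trans
      (castHom_pad_homHEq _ (by omega) rfl).symm

theorem Wd_homHEq_tensor_id (hM : IsStrictMon C) {m j : ℕ} (hj : j < m) :
    Wd C γ P m j ≋ C.tensor (C.id j) (Wd C γ P (m - j) 0) := by
  have tensor_comp : ∀ {a b c : ℕ} (f : C.Hom a b) (g : C.Hom b c),
      C.tensor (C.id j) (C.comp f g) = C.comp (C.tensor (C.id j) f) (C.tensor (C.id j) g) :=
    fun f g => by rw [← hM.tensor_comp, hM.id_comp]
  have shift : ∀ {a a' S T S' T' p p' q : ℕ} (f : C.Hom a a') {h₁ h₂ h₃ h₄}, p' = j + p →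
      C.castHom S T (C.pad p' f q) h₁ h₂ ≋
        C.tensor (C.id j) (C.castHom S' T' (C.pad p f q) h₃ h₄) := by
    intro _ _ _ _ _ _ p _ q f _ _ _ _ rfl
    rw [← hM.pad_zero_right]
    exact (castHom_homHEq _ _ _).trans ((hM.pad_add_homHEq j p f q 0).trans
      ((castHom_homHEq _ _ _).symm.pad rfl rfl))
  rw [Wd_eq hM (c := m - j - 1) (by omega), Wd_eq hM (j := 0) (c := m - j - 1) (by omega),
    tensor_comp, tensor_comp]
  refine (shift _ ?_).comp ((shift _ ?_).comp (shift _ ?_)) <;> omega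

theorem Gdi_comp_Wd_of_add_two_le (hM : IsStrictMon C) {n i j : ℕ} (hij : i + 2 ≤ j) :
    C.comp (Gdi C γ (n + 1) i) (Wd C γ P (n + 2) j) =
      C.comp (Wd C γ P (n + 2) j) (Gdi C γ (n + 1) i) := by
  by_cases hj : j < n + 2
  · have hW : Wd C γ P (n + 2) j =
        C.cst (by omega) (by omega) (C.tensor (C.id j) (Wd C γ P (n + 2 - j) 0)) :=
      ((Wd_homHEq_tensor_id hM hj).trans (cst_homHEq _ _ _).symm).eq
    rw [hW]
    exact Gdi_comp_cst_tensor_id hM hij _ _ _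
  · unfold Wd
    rw [dif_neg hj, hM.id_comp, hM.comp_id]

theorem Wd_comp_pad_comm (hC : IsStrictSymMon C γ) {m m' j a b : ℕ} (x : C.Hom a b)
    (hm : m = j + 1 + a) (hm' : m' = j + 1 + b) :
    C.comp (Wd C γ P m j) (C.castHom (m + 1) (m' + 1) (C.pad (j + 1) x 1)) =
      C.comp (C.castHom (m + 1) (m' + 1) (C.pad (j + 1) x 1)) (Wd C γ P m' j) := by
  have hM := hC.toIsStrictMon
  rw [Wd_eq hM hm, Wd_eq hM hm']
  refine (hM.comp_comp_comp_of_ladder _ _ _ _ _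
    (C.castHom (m + 2) (m' + 2) (C.pad (j + 2) x 1)) _
    (C.castHom (m + 2) (m' + 2) (C.pad (j + 1) x 2)) _ _ ?_ ?_ ?_).symm
  · exact (hM.castHom_pad_comm_of_disjoint j 0 1 P.δ x rfl (by omega) (by omega) rfl
      (by omega) rfl rfl (by omega)).symm
  · refine HomHEq.eq ?_
    calc _ ≋ C.comp (C.pad (j + 1) (C.tensor (C.id 1) x) 1) (C.pad (j + 1) (γ 1 b) 1) :=
          ((castHom_homHEq _ _ _).trans (hM.pad_id_tensor_homHEq _ _ _ _).symm).comp
            (castHom_homHEq _ _ _)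
      _ = C.comp (C.pad (j + 1) (γ 1 a) 1) (C.pad (j + 1) (C.tensor x (C.id 1)) 1) :=
          (hC.pad_braiding_natural _ _ _).symm
      _ ≋ _ := (castHom_homHEq _ _ _).symm.comp
          ((hM.pad_tensor_id_homHEq _ _ _ _).trans (castHom_homHEq _ _ _).symm)
  · exact hM.castHom_pad_comm_of_disjoint (j + 1) 0 0 x P.μ rfl (by omega) (by omega) rfl
      (by omega) rfl rfl (by omega)

theorem Gdi_comp_Wd_of_lt (hC : IsStrictSymMon C γ) {n i j : ℕ} (hji : j < i) (hi : i ≤ n) :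
    C.comp (Gdi C γ (n + 1) i) (Wd C γ P (n + 2) j) =
      C.comp (Wd C γ P (n + 2) j) (Gdi C γ (n + 1) i) := by
  obtain ⟨u, v, hu, hv⟩ : ∃ u v, i = j + 1 + u ∧ n = i + v :=
    ⟨i - j - 1, n - i, by omega, by omega⟩
  have hG : Gdi C γ (n + 1) i =
      C.castHom (n + 3) (n + 3) (C.pad (j + 1) (C.pad u (γ 1 1) v) 1) :=
    ((Gdi_homHEq_pad (s := v + 1) (by omega)).trans ((HomHEq.rfl.pad hu rfl).trans
      ((hC.pad_add_homHEq _ u _ v 1).trans (castHom_homHEq _ _ _).symm))).eq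
  rw [hG]
  exact (Wd_comp_pad_comm hC _ (by omega) (by omega)).symm

theorem Gdi_comp_Wd_self (hC : IsStrictSymMon C γ) {n i : ℕ} (hi : i ≤ n) :
    C.comp (Gdi C γ (n + 1) i) (Wd C γ P (n + 2) i) =
      C.comp (Wd C γ P (n + 2) (i + 1)) (Gdi C γ (n + 1) i) := by
  have hM := hC.toIsStrictMon
  obtain ⟨v, rfl⟩ : ∃ v, n = i + v := ⟨n - i, by omega⟩
  have hG : Gdi C γ (i + v + 1) i =
      C.castHom (i + v + 3) (i + v + 3) (C.pad i (γ 1 1) (v + 1)) :=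
    ((Gdi_homHEq_pad (by omega)).trans (castHom_homHEq _ _ _).symm).eq
  rw [hG, Wd_eq hM (c := v + 1) (by omega), Wd_eq hM (c := v) (by omega)]
  refine hM.comp_comp_comp_of_ladder _ _ _ _ _
    (C.castHom (i + v + 4) (i + v + 4) (C.pad i (γ 1 2) (v + 1))) _
    (C.castHom (i + v + 4) (i + v + 4) (C.pad i (γ 1 1) (v + 2))) _ _ ?_
    (hC.castHom_pad_braiding_two_comp i v) ?_
  · refine HomHEq.eq ?_
    calc _ ≋ C.comp (C.pad i (γ 1 1) (v + 1)) (C.pad i (C.tensor P.δ (C.id 1)) (v + 1)) :=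
          (castHom_homHEq _ _ _).comp ((castHom_pad_homHEq _ rfl (by omega)).trans
            (hM.pad_tensor_id_homHEq _ _ _ _).symm)
      _ = C.comp (C.pad i (C.tensor (C.id 1) P.δ) (v + 1)) (C.pad i (γ 1 2) (v + 1)) :=
          hC.pad_braiding_natural _ _ _
      _ ≋ _ := ((hM.pad_id_tensor_homHEq _ _ _ _).trans (castHom_homHEq _ _ _).symm).comp
          (castHom_homHEq _ _ _).symm
  · exact hM.castHom_pad_comm_of_disjoint i v 0 (γ 1 1) P.μ rfl (by omega) (by omega) rfl
      (by omega) rfl rfl (by omega)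

theorem Gdi_comp_Wd_succ (hC : IsStrictSymMon C γ) {n i : ℕ} (hi : i ≤ n) :
    C.comp (Gdi C γ (n + 1) i) (Wd C γ P (n + 2) (i + 1)) =
      C.comp (Wd C γ P (n + 2) i) (Gdi C γ (n + 1) i) := by
  have hGG := Gdi_comp_Gdi hC (m := n + 1) (i := i) (by omega)
  set G := Gdi C γ (n + 1) i
  calc C.comp G (Wd C γ P (n + 2) (i + 1))
      = C.comp G (C.comp (Wd C γ P (n + 2) (i + 1)) (C.comp G G)) := by rw [hGG, hC.comp_id]
    _ = C.comp G (C.comp (C.comp G (Wd C γ P (n + 2) i)) G) := by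
        rw [Gdi_comp_Wd_self hC hi, hC.comp_assoc]
    _ = C.comp (Wd C γ P (n + 2) i) G := by
        rw [← hC.comp_assoc, ← hC.comp_assoc, hGG, hC.id_comp]

theorem Gdi_comp_Wd (hC : IsStrictSymMon C γ) {n i : ℕ} (hi : i ≤ n) (k : ℕ) :
    C.comp (Gdi C γ (n + 1) i) (Wd C γ P (n + 2) k) =
      C.comp (Wd C γ P (n + 2) (Equiv.swap i (i + 1) k)) (Gdi C γ (n + 1) i) := by
  rcases lt_trichotomy k i with hk | rfl | hk
  · rw [Equiv.swap_apply_of_ne_of_ne (by omega) (by omega)]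
    exact Gdi_comp_Wd_of_lt hC hk hi
  · rw [Equiv.swap_apply_left]
    exact Gdi_comp_Wd_self hC hi
  · obtain rfl | hk := (show k = i + 1 ∨ i + 2 ≤ k by omega)
    · rw [Equiv.swap_apply_right]
      exact Gdi_comp_Wd_succ hC hi
    · rw [Equiv.swap_apply_of_ne_of_ne (by omega) (by omega)]
      exact Gdi_comp_Wd_of_add_two_le hC.toIsStrictMon hk

theorem pad_mul_left_comm (hM : IsStrictMon C) (m : ℕ) :
    C.comp (C.pad m (γ 1 1) 1) (C.comp (C.pad (m + 1) P.μ 0) (C.pad m P.μ 0)) =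
      C.comp (C.pad (m + 1) P.μ 0) (C.pad m P.μ 0) := by
  have hγ : C.pad m (γ 1 1) 1 ≋ C.pad m (C.tensor (γ 1 1) (C.id 1)) 0 :=
    (hM.pad_tensor_id_homHEq m (γ 1 1) 1 0).symm
  have hμ : C.pad (m + 1) P.μ 0 ≋ C.pad m (C.tensor (C.id 1) P.μ) 0 :=
    (hM.pad_id_tensor_homHEq _ _ _ _).symm
  refine ((hγ.comp (hμ.comp .rfl)).trans (HomHEq.trans ?_ (hμ.symm.comp .rfl))).eq
  rw [hM.pad_comp, hM.pad_comp, P.mul_left_comm hM]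
  exact .rfl

/-- The last crossing is absorbed by the associativity and commutativity of `μ`. -/
theorem castHom_pad_braiding_succ_comp_mul_mul (hC : IsStrictSymMon C γ) (p s : ℕ) :
    C.comp (C.castHom (p + s + 3) (p + s + 3) (C.pad p (γ 1 (s + 1)) 1))
        (C.comp (C.castHom (p + s + 3) (p + s + 2) (C.pad (p + s + 1) P.μ 0))
          (C.castHom (p + s + 2) (p + s + 1) (C.pad (p + s) P.μ 0))) =
      C.comp (C.castHom (p + s + 3) (p + s + 3) (C.pad p (γ 1 s) 2))
        (C.comp (C.castHom (p + s + 3) (p + s + 2) (C.pad (p + s + 1) P.μ 0))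
          (C.castHom (p + s + 2) (p + s + 1) (C.pad (p + s) P.μ 0))) := by
  have split : C.castHom (p + s + 3) (p + s + 3) (C.pad p (γ 1 (s + 1)) 1) =
      C.comp (C.castHom (p + s + 3) (p + s + 3) (C.pad p (γ 1 s) 2))
        (C.castHom (p + s + 3) (p + s + 3) (C.pad (p + s) (γ 1 1) 1)) :=
    ((castHom_homHEq _ _ _).trans ((hC.pad_braiding_add_homHEq p s 1 1).trans
      ((castHom_homHEq _ _ _).symm.comp
        ((castHom_homHEq _ _ _).trans (castHom_homHEq _ _ _).symm)))).eq
  have absorb : C.comp (C.castHom (p + s + 3) (p + s + 3) (C.pad (p + s) (γ 1 1) 1))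
      (C.comp (C.castHom (p + s + 3) (p + s + 2) (C.pad (p + s + 1) P.μ 0))
        (C.castHom (p + s + 2) (p + s + 1) (C.pad (p + s) P.μ 0))) =
      C.comp (C.castHom (p + s + 3) (p + s + 2) (C.pad (p + s + 1) P.μ 0))
        (C.castHom (p + s + 2) (p + s + 1) (C.pad (p + s) P.μ 0)) :=
    pad_mul_left_comm hC.toIsStrictMon (p + s)
  rw [split, hC.comp_assoc, absorb]

theorem Wd_comp_castHom_pad_mul (hC : IsStrictSymMon C γ) {m j : ℕ} (hj : j < m) :
    C.comp (Wd C γ P (m + 1) j) (C.castHom (m + 2) (m + 1) (C.pad m P.μ 0)) =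
      C.comp (C.castHom (m + 2) (m + 1) (C.pad m P.μ 0)) (Wd C γ P m j) := by
  have hM := hC.toIsStrictMon
  obtain ⟨c, rfl⟩ : ∃ c, m = j + 1 + c := ⟨m - j - 1, by omega⟩
  rw [Wd_eq hM (c := c + 1) (by omega), Wd_eq hM (c := c) rfl]
  set merge₁ := C.castHom (j + 1 + c + 3) (j + 1 + c + 2) (C.pad (j + 1 + c + 1) P.μ 0)
  have h₁ : C.comp (C.castHom (j + 1 + c + 2) (j + 1 + c + 1) (C.pad (j + 1 + c) P.μ 0))
      (C.castHom (j + 1 + c + 1) (j + 1 + c + 2) (C.pad j P.δ (c + 1))) =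
      C.comp (C.castHom (j + 1 + c + 2) (j + 1 + c + 3) (C.pad j P.δ (c + 1 + 1))) merge₁ :=
    (hM.castHom_pad_comm_of_disjoint j c 0 P.δ P.μ rfl (by omega) (by omega) rfl
      (by omega) rfl rfl (by omega)).symm
  have h₂ : C.comp merge₁ (C.castHom (j + 1 + c + 2) (j + 1 + c + 2) (C.pad (j + 1) (γ 1 c) 1)) =
      C.comp (C.castHom (j + 1 + c + 3) (j + 1 + c + 3) (C.pad (j + 1) (γ 1 c) 2)) merge₁ :=
    (hM.castHom_pad_comm_of_disjoint (j + 1) 0 0 (γ 1 c) P.μ rfl (by omega) (by omega) rfl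
      (by omega) rfl rfl (by omega)).symm
  calc _ = C.comp (C.castHom (j + 1 + c + 2) (j + 1 + c + 3) (C.pad j P.δ (c + 1 + 1)))
        (C.comp (C.castHom (j + 1 + c + 3) (j + 1 + c + 3) (C.pad (j + 1) (γ 1 (c + 1)) 1))
          (C.comp merge₁
            (C.castHom (j + 1 + c + 2) (j + 1 + c + 1) (C.pad (j + 1 + c) P.μ 0)))) := by
        simp only [hM.comp_assoc]; rfl
    _ = C.comp (C.castHom (j + 1 + c + 2) (j + 1 + c + 3) (C.pad j P.δ (c + 1 + 1)))
        (C.comp (C.castHom (j + 1 + c + 3) (j + 1 + c + 3) (C.pad (j + 1) (γ 1 c) 2))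
          (C.comp merge₁
            (C.castHom (j + 1 + c + 2) (j + 1 + c + 1) (C.pad (j + 1 + c) P.μ 0)))) :=
        congrArg _ (castHom_pad_braiding_succ_comp_mul_mul hC (j + 1) c)
    _ = _ := by
        rw [← hM.comp_assoc _ merge₁, ← h₂, hM.comp_assoc, ← hM.comp_assoc _ merge₁, ← h₁]
        simp only [hM.comp_assoc]

theorem Wd_comp_Wd_succ_comm (hC : IsStrictSymMon C γ) {n i : ℕ} (hi : i ≤ n) :
    C.comp (Wd C γ P (n + 2) i) (Wd C γ P (n + 2) (i + 1)) =
      C.comp (Wd C γ P (n + 2) (i + 1)) (Wd C γ P (n + 2) i) := by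
  have hM := hC.toIsStrictMon
  obtain ⟨t, rfl⟩ : ∃ t, n = i + t := ⟨n - i, by omega⟩
  rw [Wd_eq hM (j := i + 1) (c := t) (by omega)]
  set copy := C.castHom (i + t + 3) (i + t + 4) (C.pad (i + 1) P.δ (t + 1))
  set carry := C.castHom (i + t + 4) (i + t + 4) (C.pad (i + 1 + 1) (γ 1 t) 1)
  set merge := C.castHom (i + t + 4) (i + t + 3) (C.pad (i + 1 + 1 + t) P.μ 0)
  have hcopy : C.comp (Wd C γ P (i + t + 2) i) copy = C.comp copy (Wd C γ P (i + t + 3) i) := by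
    have : copy = C.castHom _ _ (C.pad (i + 1) (C.tensor P.δ (C.id t)) 1) :=
      ((castHom_homHEq _ _ _).trans ((hM.pad_tensor_id_homHEq _ _ _ _).symm.trans
        (castHom_homHEq _ _ _).symm)).eq
    rw [this]
    exact Wd_comp_pad_comm hC _ (by omega) (by omega)
  have hcarry : C.comp (Wd C γ P (i + t + 3) i) carry =
      C.comp carry (Wd C γ P (i + t + 3) i) := by
    have : carry = C.castHom _ _ (C.pad (i + 1) (C.tensor (C.id 1) (γ 1 t)) 1) :=
      ((castHom_homHEq _ _ _).trans ((hM.pad_id_tensor_homHEq _ _ _ _).symm.trans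
        (castHom_homHEq _ _ _).symm)).eq
    rw [this]
    exact Wd_comp_pad_comm hC _ (by omega) (by omega)
  have hmerge : C.comp (Wd C γ P (i + t + 3) i) merge = C.comp merge (Wd C γ P (i + t + 2) i) := by
    have : merge = C.castHom _ _ (C.pad (i + t + 2) P.μ 0) :=
      ((castHom_pad_homHEq _ (by omega) rfl).trans (castHom_homHEq _ _ _).symm).eq
    rw [this]
    exact Wd_comp_castHom_pad_mul hC (by omega)
  rw [← hM.comp_assoc, hcopy, hM.comp_assoc, ← hM.comp_assoc _ carry, hcarry, hM.comp_assoc,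
    hmerge]
  simp only [hM.comp_assoc]

end Merge

theorem tauF_eq_map (p : ℕ) (I : Finset ℕ) :
    tauF p I = I.map (Equiv.swap p (p + 1)).toEmbedding := by
  rw [Finset.map_eq_image]
  rfl

theorem strictMonoOn_swap_add_one {p : ℕ} {I : Finset ℕ} (h : ¬(p ∈ I ∧ p + 1 ∈ I)) :
    StrictMonoOn (Equiv.swap p (p + 1)) I := by
  intro a ha b hb hab
  have : ¬(a = p ∧ b = p + 1) := fun ⟨h₁, h₂⟩ => h ⟨h₁ ▸ ha, h₂ ▸ hb⟩
  simp only [Equiv.swap_apply_def]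
  split_ifs <;> omega

section Lists

open MonCatN

variable {C : MonCatN} {γ : ∀ m n : ℕ, C.Hom (m + n) (n + m)} {P : PoalgebraIn C γ}

theorem IsStrictMon.foldl_comp (hM : IsStrictMon C) {m : ℕ} (W : ℕ → C.Hom m m) :
    ∀ (l : List ℕ) {a : ℕ} (e : C.Hom a m),
      l.foldl (fun g k => C.comp g (W k)) e =
        C.comp e (l.foldl (fun g k => C.comp g (W k)) (C.id m))
  | [], _, e => (hM.comp_id e).symm
  | k :: l, _, e => by
    rw [List.foldl_cons, List.foldl_cons, hM.foldl_comp W l, hM.foldl_comp W l (C.comp _ _),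
      hM.id_comp, hM.comp_assoc]

noncomputable def WList (C : MonCatN) (γ : ∀ m n : ℕ, C.Hom (m + n) (n + m))
    (P : PoalgebraIn C γ) (m : ℕ) (l : List ℕ) : C.Hom (m + 1) (m + 1) :=
  l.foldl (fun g k => C.comp g (Wd C γ P m k)) (C.id (m + 1))

theorem WList_cons (hM : IsStrictMon C) (m k : ℕ) (l : List ℕ) :
    WList C γ P m (k :: l) = C.comp (Wd C γ P m k) (WList C γ P m l) := by
  rw [WList, List.foldl_cons, hM.foldl_comp, hM.id_comp, WList]

theorem Gdi_comp_WList (hC : IsStrictSymMon C γ) {n i : ℕ} (hi : i ≤ n) :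
    ∀ l : List ℕ, C.comp (Gdi C γ (n + 1) i) (WList C γ P (n + 2) l) =
      C.comp (WList C γ P (n + 2) (l.map (Equiv.swap i (i + 1)))) (Gdi C γ (n + 1) i)
  | [] => by rw [List.map_nil, WList, List.foldl_nil, hC.comp_id, hC.id_comp]
  | k :: l => by
    rw [List.map_cons, WList_cons hC.toIsStrictMon, WList_cons hC.toIsStrictMon,
      ← hC.comp_assoc, Gdi_comp_Wd hC hi k, hC.comp_assoc, Gdi_comp_WList hC hi l,
      ← hC.comp_assoc]

theorem WList_map_swap_of_mem (hC : IsStrictSymMon C γ) {n i : ℕ} (hi : i ≤ n) :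
    ∀ {l : List ℕ}, l.Pairwise (· < ·) → i ∈ l → i + 1 ∈ l →
      WList C γ P (n + 2) (l.map (Equiv.swap i (i + 1))) = WList C γ P (n + 2) l
  | [], _, h, _ => by simp at h
  | a :: l, hsorted, hi₀, hi₁ => by
    have hM := hC.toIsStrictMon
    obtain ⟨ha, hl⟩ := List.pairwise_cons.mp hsorted
    obtain rfl | hi₀ := List.mem_cons.mp hi₀
    · obtain _ | ⟨b, l⟩ := l
      · simp at hi₁
      obtain ⟨hb, -⟩ := List.pairwise_cons.mp hl
      obtain rfl : b = i + 1 := by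
        have := ha b List.mem_cons_self
        rcases List.mem_cons.mp hi₁ with h | h
        · omega
        rcases List.mem_cons.mp h with h | h
        · omega
        · have := hb _ h
          omega
      have hfix : l.map (Equiv.swap i (i + 1)) = l :=
        (List.map_congr_left fun x hx =>
          have := hb x hx
          Equiv.swap_apply_of_ne_of_ne (by omega) (by omega)).trans (List.map_id l)
      rw [List.map_cons, List.map_cons, Equiv.swap_apply_left, Equiv.swap_apply_right, hfix,
        WList_cons hM, WList_cons hM, WList_cons hM, WList_cons hM, ← hM.comp_assoc,
        ← hM.comp_assoc, Wd_comp_Wd_succ_comm hC hi]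
    · have hai : a < i := ha i hi₀
      rw [List.map_cons, Equiv.swap_apply_of_ne_of_ne (by omega) (by omega), WList_cons hM,
        WList_cons hM,
        WList_map_swap_of_mem hC hi hl hi₀ (by simpa [show i + 1 ≠ a by omega] using hi₁)]

theorem Gdi_comp_WId (hC : IsStrictSymMon C γ) {n i : ℕ} (hi : i ≤ n) (I : Finset ℕ) :
    C.comp (Gdi C γ (n + 1) i) (WId C γ P (n + 2) I) =
      C.comp (WId C γ P (n + 2) (tauF i I)) (Gdi C γ (n + 1) i) := by
  change C.comp _ (WList C γ P (n + 2) _) = C.comp (WList C γ P (n + 2) _) _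
  rw [Gdi_comp_WList hC hi, tauF_eq_map]
  by_cases hboth : i ∈ I ∧ i + 1 ∈ I
  · rw [Finset.map_perm, WList_map_swap_of_mem hC hi (I.sortedLT_sort.pairwise)
      ((I.mem_sort _).mpr hboth.1) ((I.mem_sort _).mpr hboth.2)]
    intro a ha
    by_contra h
    exact ha (Equiv.swap_apply_of_ne_of_ne (fun h' => h (h' ▸ hboth.1))
      (fun h' => h (h' ▸ hboth.2)))
  · have hsort : (I.sort (· ≤ ·)).map (Equiv.swap i (i + 1)) =
        (I.map (Equiv.swap i (i + 1)).toEmbedding).sort (· ≤ ·) :=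
      StrictMonoOn.map_finsetSort (Equiv.swap i (i + 1)).toEmbedding I (strictMonoOn_swap_add_one hboth)
    rw [hsort]

end Lists

theorem X_crossing_naturality_general
    (C : MonCatN) (γ : ∀ m n : ℕ, C.Hom (m + n) (n + m))
    (hC : IsStrictSymMon C γ) (P : PoalgebraIn C γ)
    (n i : ℕ) (hi : i ≤ n) (I : Finset ℕ) :
    C.comp (Gdi C γ n i) (Xd C γ P (n + 2) I) =
      C.comp (Xd C γ P (n + 2) (tauF i I)) (Gdi C γ (n + 1) i) := by
  have hM := hC.toIsStrictMon
  rw [Xd, Xd, hM.comp_comp_of_comp_eq (Gdi_comp_Hd hM hi),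
    hM.comp_comp_of_comp_eq (Gdi_comp_WId hC hi I), Gdi_comp_Sd hM hi]
  simp only [hM.comp_assoc]

/-- the naturality-type identity exchanging the morphism `X`
adding a new internal event with an adjacent crossing `G^n_i = id_i ⊗ γ ⊗ id`:
`X_{I} ∘ G^n_i = G^{n+1}_i ∘ X_{τ^{n+1}_i(I)}` (diagrammatic order; on the
right the crossing acts on `n+3` strands, not touching the new last strand). -/
theorem X_crossing_naturality
    (C : MonCatN) (γ : ∀ m n : ℕ, C.Hom (m + n) (n + m))
    (hC : IsStrictSymMon C γ) (P : PoalgebraIn C γ)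
    (n i : ℕ) (hi : i ≤ n) (I : Finset ℕ) (hI : ∀ a ∈ I, a < n + 2) :
    C.comp (Gdi C γ n i) (Xd C γ P (n + 2) I) =
      C.comp (Xd C γ P (n + 2) (tauF i I)) (Gdi C γ (n + 1) i) :=
  X_crossing_naturality_general C γ hC P n i hi I
end
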